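/- arXiv:2511.10610 — 11 statements merged into one kernel-verified Lean document; each statement's English description precedes it below -/
import Mathlib

section
/- Let G be a countably infinite set and V : G → ℝ such that (a) the image of V has no accumulation point in ℝ and (b) every level set {z ∈ G : V(z) = x} is finite; enumerate the nonnegative values of V as 0 ≤ r_0 < r_1 < r_2 < ⋯ and the negative values as 0 > t_0 > t_1 > ⋯. Let (g_z)_{z∈G} be real random variables on a probability space (Ω, P) such that the configuration Π(ω) = Σ_{z∈G} δ_{V(z)+g_z(ω)} is almost surely a locally finite measure on ℝ, and such that: if V is bounded below then (r_n − r_{n−1})^{-1} · max{|g_z| : z ∈ G, V(z) ∈ [0, r_n]} → 0 almost surely as n → ∞; if V is bounded above then |t_n − t_{n−1}|^{-1} · max{|g_z| : z ∈ G, V(z) ∈ [t_n, 0)} → 0 almost surely; and if V is neither bounded below nor bounded above then both limits hold almost surely. Then for all finite subsets S, T ⊆ G with |S| ≠ |T|, the laws of the random measures Π_S and Π_T are mutually singular after completion. -/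
open MeasureTheory ProbabilityTheory Filter Set

/-- The configuration `Π_S = Σ_{z ∈ G ∖ S} δ_{V(z) + g(z)}` as a Borel measure on `ℝ`. -/
noncomputable def projPerturbedLattice {G : Type*} (V : G → ℝ) (g : G → ℝ) (S : Set G) :
    Measure ℝ :=
  Measure.sum (fun z : {z : G // z ∉ S} => Measure.dirac (V z.1 + g z.1))

open scoped Topology ENNReal

/-! Enumerate the nonnegative values of `V` as `r 0 < r 1 < ⋯` and the negative ones as
`t 0 > t 1 > ⋯`. The decay hypotheses say that eventually every perturbation `g z` with
`V z ∈ [0, r n]` is smaller than half the gap `r n - r (n - 1)` (and symmetrically on the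
negative side). Then, almost surely and for all large `n`, the points `V z + g z` lying strictly
between the midpoints `(t n + t (n + 1)) / 2` and `(r n + r (n + 1)) / 2` are exactly those with
`V z ∈ [t n, r n]`; on a side where `V` is bounded only finitely many points live, and the window
is left open there. So `Π_S (window n) + #S` is eventually the number of `z` with
`V z ∈ [t n, r n]`, and the set of measures for which this count identity holds eventually
carries the law of `Π_S` and is null for the law of `Π_T`. -/

theorem Set.Infinite.exists_strictMono_range_eq {α : Type*} [LinearOrder α] {Q : Set α}
    (hQ : Q.Infinite) (hfin : ∀ x, (Q ∩ Iic x).Finite) :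
    ∃ r : ℕ → α, StrictMono r ∧ range r = Q := by
  classical
  have hrank : StrictMonoOn (fun q => (Q ∩ Iio q).ncard) Q := fun q hq q' hq' hlt =>
    ncard_lt_ncard
      ((ssubset_iff_of_subset (inter_subset_inter_right Q (Iio_subset_Iio hlt.le))).2
        ⟨q, ⟨hq, hlt⟩, fun h => lt_irrefl q h.2⟩)
      ((hfin q').subset (inter_subset_inter_right Q Iio_subset_Iic_self))
  have : Infinite ((fun q => (Q ∩ Iio q).ncard) '' Q) := (hQ.image hrank.injOn).to_subtype
  let e : ℕ ≃o Q := (Nat.Subtype.orderIsoOfNat _).trans (hrank.orderIso _ Q).symm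
  refine ⟨fun n => e n, fun a b hab => e.strictMono hab, ?_⟩
  rw [range_comp' Subtype.val e, e.surjective.range_eq, image_univ, Subtype.range_coe]

theorem finite_preimage_Icc_of_forall_not_accPt {G : Type*} {V : G → ℝ}
    (hacc : ∀ x : ℝ, ¬ AccPt x (𝓟 (range V)))
    (hlevel : ∀ x : ℝ, {z : G | V z = x}.Finite) (a b : ℝ) :
    {z | V z ∈ Icc a b}.Finite := by
  have hvalues : (Icc a b ∩ range V).Finite := by
    by_contra hinf
    obtain ⟨x, -, hx⟩ :=
      Set.Infinite.exists_accPt_of_subset_isCompact hinf isCompact_Icc inter_subset_left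
    exact hacc x (hx.mono (principal_mono.2 inter_subset_right))
  change (V ⁻¹' Icc a b).Finite
  rw [← preimage_inter_range]
  exact hvalues.preimage' fun x _ => hlevel x

theorem eventually_forall_two_mul_lt_of_tendsto {ι : Type*} {E : ℕ → Set ι}
    (hE : ∀ n, (E n).Finite) {f : ι → ℝ} {d : ℕ → ℝ} (hd : ∀ᶠ n in atTop, 0 < d n)
    (h : Tendsto (fun n => (d n)⁻¹ * sSup (f '' E n)) atTop (𝓝 0)) :
    ∀ᶠ n in atTop, ∀ i ∈ E n, 2 * f i < d n := by
  filter_upwards [hd, h.eventually_lt_const (by norm_num : (0 : ℝ) < 1 / 2)]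
    with n hdn hn i hi
  have hle : f i ≤ sSup (f '' E n) :=
    le_csSup ((hE n).image f).bddAbove (mem_image_of_mem f hi)
  have hlt : sSup (f '' E n) < d n * (1 / 2) := (inv_mul_lt_iff₀ hdn).1 hn
  linarith

/-- The pointwise form of the decay hypothesis on the side `D` enumerated by `r`; for `n = 0`
the gap `r 0 - r (0 - 1)` is `0`, which is harmless because only large `n` matter. -/
def NoiseWithinHalfGaps {G : Type*} (V g : G → ℝ) (D : Set ℝ) (r : ℕ → ℝ) : Prop :=
  ∀ᶠ n in atTop, ∀ z, V z ∈ D → V z ≤ r n → 2 * |g z| < r n - r (n - 1)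

namespace NoiseWithinHalfGaps

variable {G : Type*} {V g : G → ℝ} {D : Set ℝ} {r : ℕ → ℝ}

theorem eventually_lt_midpoint_iff_of_mem (h : NoiseWithinHalfGaps V g D r)
    (hr : StrictMono r) (hrange : range r = range V ∩ D) :
    ∀ᶠ n in atTop, ∀ z, V z ∈ D →
      (V z + g z < (r n + r (n + 1)) / 2 ↔ V z ≤ r n) := by
  obtain ⟨N, hN⟩ := eventually_atTop.1 h
  filter_upwards [eventually_ge_atTop N] with n hn z hz
  constructor
  · intro hlt
    by_contra hgt
    obtain ⟨k, hk⟩ : V z ∈ range r := hrange ▸ ⟨mem_range_self z, hz⟩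
    have hnk : n < k := hr.lt_iff_lt.1 (hk ▸ lt_of_not_ge hgt)
    have hgap := hN k (by omega) z hz hk.ge
    have hnext : r (n + 1) ≤ r k := hr.monotone hnk
    have hprev : r n ≤ r (k - 1) := hr.monotone (by omega)
    linarith [neg_abs_le (g z)]
  · intro hle
    have hgap := hN (n + 1) (by omega) z hz (hle.trans (hr.monotone n.le_succ))
    rw [Nat.add_sub_cancel] at hgap
    linarith [le_abs_self (g z)]

theorem exists_le_add (h : NoiseWithinHalfGaps V g D r) (hr : StrictMono r)
    (hrange : range r = range V ∩ D) (hfin : ∀ n, {z | V z ∈ D ∧ V z ≤ r n}.Finite) :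
    ∃ c, ∀ z, V z ∈ D → c ≤ V z + g z := by
  obtain ⟨n, hn⟩ := (h.eventually_lt_midpoint_iff_of_mem hr hrange).exists
  obtain ⟨c, hc⟩ := ((hfin n).image fun z => V z + g z).bddBelow
  refine ⟨min c ((r n + r (n + 1)) / 2), fun z hz => ?_⟩
  by_cases hzn : V z ≤ r n
  · exact (min_le_left _ _).trans (hc ⟨z, ⟨hz, hzn⟩, rfl⟩)
  · exact (min_le_right _ _).trans (not_lt.1 fun hlt => hzn ((hn z hz).1 hlt))

theorem eventually_lt_midpoint_iff (h : NoiseWithinHalfGaps V g D r) (hr : StrictMono r)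
    (hrange : range r = range V ∩ D) (hD : IsUpperSet D) (hrtop : Tendsto r atTop atTop)
    (hbdd : ∃ c, ∀ z, V z ∉ D → V z + g z ≤ c) :
    ∀ᶠ n in atTop, ∀ z, (V z + g z < (r n + r (n + 1)) / 2 ↔ V z ≤ r n) := by
  obtain ⟨c, hc⟩ := hbdd
  filter_upwards [h.eventually_lt_midpoint_iff_of_mem hr hrange, hrtop.eventually_gt_atTop c]
    with n hn hcn z
  by_cases hz : V z ∈ D
  · exact hn z hz
  · have hrn : r n ∈ D := (hrange ▸ mem_range_self n : r n ∈ range V ∩ D).2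
    have hzr : V z < r n := lt_of_not_ge fun hle => hz (hD hle hrn)
    have hnext : r n < r (n + 1) := hr n.lt_succ_self
    exact iff_of_true (by linarith [hc z hz]) hzr.le

end NoiseWithinHalfGaps

section Decay

variable {G : Type*} {V : G → ℝ}

theorem ae_noiseWithinHalfGaps_Ici {Ω : Type*} [MeasurableSpace Ω] {P : Measure Ω}
    {g : G → Ω → ℝ} (hfin : ∀ a b, {z | V z ∈ Icc a b}.Finite)
    (h1 : (BddBelow (range V) ∨ ¬ BddAbove (range V)) →
      ∀ r : ℕ → ℝ, StrictMono r →
        range r = {x : ℝ | x ∈ range V ∧ 0 ≤ x} →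
        ∀ᵐ ω ∂P, Tendsto
          (fun n : ℕ => (r n - r (n - 1))⁻¹ *
            sSup ((fun z => |g z ω|) '' {z : G | V z ∈ Icc 0 (r n)}))
          atTop (𝓝 0))
    (hV : ¬ BddAbove (range V)) (r : ℕ → ℝ) (hr : StrictMono r)
    (hrange : range r = range V ∩ Ici 0) :
    ∀ᵐ ω ∂P, NoiseWithinHalfGaps V (fun z => g z ω) (Ici 0) r := by
  have hgap : ∀ᶠ n in atTop, 0 < r n - r (n - 1) := by
    filter_upwards [eventually_ge_atTop 1] with n hn
    exact sub_pos.2 (hr (by omega))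
  filter_upwards [h1 (Or.inr hV) r hr hrange] with ω hω
  filter_upwards [eventually_forall_two_mul_lt_of_tendsto (fun n => hfin 0 (r n)) hgap hω]
    with n hn z hz hzr using hn z ⟨hz, hzr⟩

theorem ae_noiseWithinHalfGaps_neg_Ioi {Ω : Type*} [MeasurableSpace Ω] {P : Measure Ω}
    {g : G → Ω → ℝ} (hfin : ∀ a b, {z | V z ∈ Icc a b}.Finite)
    (h2 : (BddAbove (range V) ∨ ¬ BddBelow (range V)) →
      ∀ t : ℕ → ℝ, StrictAnti t →
        range t = {x : ℝ | x ∈ range V ∧ x < 0} →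
        ∀ᵐ ω ∂P, Tendsto
          (fun n : ℕ => |t n - t (n - 1)|⁻¹ *
            sSup ((fun z => |g z ω|) '' {z : G | V z ∈ Ico (t n) 0}))
          atTop (𝓝 0))
    (hV : ¬ BddAbove (range fun z => -V z)) (r : ℕ → ℝ) (hr : StrictMono r)
    (hrange : range r = range (fun z => -V z) ∩ Ioi 0) :
    ∀ᵐ ω ∂P, NoiseWithinHalfGaps (fun z => -V z) (fun z => -g z ω) (Ioi 0) r := by
  have hV' : ¬ BddBelow (range V) := by
    rintro ⟨a, ha⟩
    exact hV ⟨-a, by rintro _ ⟨z, rfl⟩; exact neg_le_neg (ha ⟨z, rfl⟩)⟩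
  have hrange' : range (fun n => -r n) = {x | x ∈ range V ∧ x < 0} := by
    ext x
    constructor
    · rintro ⟨n, rfl⟩
      obtain ⟨⟨z, hz⟩, hpos⟩ : r n ∈ range (fun z => -V z) ∩ Ioi 0 :=
        hrange ▸ mem_range_self n
      exact ⟨⟨z, show V z = -r n by linarith [show -V z = r n from hz]⟩,
        neg_neg_of_pos hpos⟩
    · rintro ⟨⟨z, rfl⟩, hneg⟩
      obtain ⟨n, hn⟩ : -V z ∈ range r := hrange ▸ ⟨⟨z, rfl⟩, neg_pos.2 hneg⟩
      exact ⟨n, show -r n = V z by linarith⟩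
  have hgap : ∀ᶠ n in atTop, |-r n - -r (n - 1)| = r n - r (n - 1) ∧ 0 < r n - r (n - 1) := by
    filter_upwards [eventually_ge_atTop 1] with n hn
    have hlt := hr (show n - 1 < n by omega)
    exact ⟨by rw [abs_of_neg (by linarith)]; ring, sub_pos.2 hlt⟩
  filter_upwards [h2 (Or.inr hV') (fun n => -r n) hr.neg hrange'] with ω hω
  filter_upwards [hgap, eventually_forall_two_mul_lt_of_tendsto
    (fun n => (hfin (-r n) 0).subset fun z hz => ⟨hz.1, hz.2.le⟩)
    (hgap.mono fun n hn => hn.1 ▸ hn.2) hω] with n hn hsmall z hz hzr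
  rw [abs_neg, ← hn.1]
  exact hsmall z ⟨neg_le.1 hzr, neg_pos.1 hz⟩

end Decay

section Windows

variable {G : Type*} {V : G → ℝ} {D : Set ℝ}

theorem exists_strictMono_range_eq_inter (hD : IsUpperSet D) (hDbdd : BddBelow D)
    (hDne : D.Nonempty) (hfin : ∀ a b, {z | V z ∈ Icc a b}.Finite)
    (hV : ¬ BddAbove (range V)) :
    ∃ r : ℕ → ℝ, StrictMono r ∧ range r = range V ∩ D ∧ Tendsto r atTop atTop := by
  obtain ⟨d, hd⟩ := hDbdd
  obtain ⟨d₀, hd₀⟩ := hDne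
  have hunb : ¬ BddAbove (range V ∩ D) := by
    rintro ⟨b, hb⟩
    refine hV ⟨max b d₀, ?_⟩
    rintro _ ⟨z, rfl⟩
    by_cases hz : V z ∈ D
    · exact (hb ⟨⟨z, rfl⟩, hz⟩).trans (le_max_left _ _)
    · exact (lt_of_not_ge fun h => hz (hD h hd₀)).le.trans (le_max_right _ _)
  obtain ⟨r, hr, hrange⟩ := Set.Infinite.exists_strictMono_range_eq
    (fun hfin => hunb hfin.bddAbove) fun x => ((hfin d x).image V).subset <| by
      rintro _ ⟨⟨⟨z, rfl⟩, hz⟩, hx⟩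
      exact ⟨z, ⟨hd hz, hx⟩, rfl⟩
  exact ⟨r, hr, hrange, tendsto_atTop_atTop_of_monotone' hr.monotone (hrange ▸ hunb)⟩

variable {Ω : Type*} [MeasurableSpace Ω] {P : Measure Ω} {g : G → Ω → ℝ}

theorem ae_exists_le_add (hD : IsUpperSet D) (hDbdd : BddBelow D) (hDne : D.Nonempty)
    (hfin : ∀ a b, {z | V z ∈ Icc a b}.Finite)
    (hdecay : ¬ BddAbove (range V) → ∀ r : ℕ → ℝ, StrictMono r →
      range r = range V ∩ D → ∀ᵐ ω ∂P, NoiseWithinHalfGaps V (fun z => g z ω) D r) :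
    ∀ᵐ ω ∂P, ∃ c, ∀ z, V z ∈ D → c ≤ V z + g z ω := by
  obtain ⟨d, hd⟩ := hDbdd
  by_cases hV : BddAbove (range V)
  · obtain ⟨B, hB⟩ := hV
    refine ae_of_all _ fun ω => ?_
    obtain ⟨c, hc⟩ := ((hfin d B).image fun z => V z + g z ω).bddBelow
    exact ⟨c, fun z hz => hc ⟨z, ⟨hd hz, hB ⟨z, rfl⟩⟩, rfl⟩⟩
  · obtain ⟨r, hr, hrange, -⟩ := exists_strictMono_range_eq_inter hD ⟨d, hd⟩ hDne hfin hV
    filter_upwards [hdecay hV r hr hrange] with ω hω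
    exact hω.exists_le_add hr hrange fun n =>
      (hfin d (r n)).subset fun z hz => ⟨hd hz.1, hz.2⟩

theorem exists_upper_windows (hD : IsUpperSet D) (hDbdd : BddBelow D) (hDne : D.Nonempty)
    (hfin : ∀ a b, {z | V z ∈ Icc a b}.Finite)
    (hdecay : ¬ BddAbove (range V) → ∀ r : ℕ → ℝ, StrictMono r →
      range r = range V ∩ D → ∀ᵐ ω ∂P, NoiseWithinHalfGaps V (fun z => g z ω) D r) :
    ∃ (W : ℕ → Set ℝ) (b : ℕ → ℝ), (∀ n, MeasurableSet (W n)) ∧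
      (∀ z, ∀ᶠ n in atTop, V z ≤ b n) ∧
      ∀ᵐ ω ∂P, (∃ c, ∀ z, V z ∉ D → V z + g z ω ≤ c) →
        ∀ᶠ n in atTop, ∀ z, (V z + g z ω ∈ W n ↔ V z ≤ b n) := by
  by_cases hV : BddAbove (range V)
  · obtain ⟨B, hB⟩ := hV
    exact ⟨fun _ => univ, fun _ => B, fun _ => .univ,
      fun z => .of_forall fun _ => hB ⟨z, rfl⟩,
      ae_of_all _ fun ω _ => .of_forall fun _ z => iff_of_true trivial (hB ⟨z, rfl⟩)⟩
  · obtain ⟨r, hr, hrange, hrtop⟩ := exists_strictMono_range_eq_inter hD hDbdd hDne hfin hV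
    refine ⟨fun n => Iio ((r n + r (n + 1)) / 2), r, fun _ => measurableSet_Iio,
      fun z => hrtop.eventually_ge_atTop (V z), ?_⟩
    filter_upwards [hdecay hV r hr hrange] with ω hω hbdd
    exact hω.eventually_lt_midpoint_iff hr hrange hD hrtop hbdd

end Windows

section Configuration

variable {G : Type*}

theorem projPerturbedLattice_apply (V g : G → ℝ) (S : Set G) {s : Set ℝ}
    (hs : MeasurableSet s) :
    projPerturbedLattice V g S s = ({z | V z + g z ∈ s} \ S).encard := by
  rw [projPerturbedLattice, Measure.sum_apply _ hs, ← ENNReal.tsum_set_one]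
  simp only [Measure.dirac_apply' _ hs]
  calc ∑' z : {z // z ∉ S}, s.indicator 1 (V z + g z)
      = ∑' z, Sᶜ.indicator (fun z => s.indicator 1 (V z + g z)) z :=
        tsum_subtype Sᶜ fun z => s.indicator (1 : ℝ → ℝ≥0∞) (V z + g z)
    _ = ∑' z, ({z | V z + g z ∈ s} \ S).indicator 1 z := by
      congr 1; ext z
      by_cases hz : z ∈ S <;> by_cases hzs : V z + g z ∈ s <;> simp [hz, hzs]
    _ = _ := (tsum_subtype _ 1).symm

theorem measurable_projPerturbedLattice [Countable G] {Ω : Type*} [MeasurableSpace Ω]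
    (V : G → ℝ) {g : G → Ω → ℝ} (hg : ∀ z, Measurable (g z)) (S : Set G) :
    Measurable fun ω => projPerturbedLattice V (fun z => g z ω) S := by
  refine Measure.measurable_of_measurable_coe _ fun s hs => ?_
  simp only [projPerturbedLattice, Measure.sum_apply _ hs, Measure.dirac_apply' _ hs]
  exact Measurable.tsum fun z =>
    (measurable_const.indicator hs).comp ((hg z.1).const_add (V z.1))

theorem exists_separating_set_of_windows [Countable G] {Ω : Type*} [MeasurableSpace Ω]
    (P : Measure Ω) (V : G → ℝ) {g : G → Ω → ℝ} (hg : ∀ z, Measurable (g z))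
    {W : ℕ → Set ℝ} (hW : ∀ n, MeasurableSet (W n))
    {E : ℕ → Set G} (hE : ∀ n, (E n).Finite)
    (hexh : ∀ z, ∀ᶠ n in atTop, z ∈ E n)
    (hsep : ∀ᵐ ω ∂P, ∀ᶠ n in atTop, ∀ z, (V z + g z ω ∈ W n ↔ z ∈ E n))
    {S T : Finset G} (hST : S.card ≠ T.card) :
    ∃ A : Set (Measure ℝ),
      P.map (fun ω => projPerturbedLattice V (fun z => g z ω) (↑S : Set G)) Aᶜ = 0 ∧
      P.map (fun ω => projPerturbedLattice V (fun z => g z ω) (↑T : Set G)) A = 0 := by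
  have hcount : ∀ F : Finset G, ∀ᵐ ω ∂P, ∀ᶠ n in atTop,
      projPerturbedLattice V (fun z => g z ω) F (W n) + F.card = (E n).encard := by
    intro F
    filter_upwards [hsep] with ω hω
    filter_upwards [hω, F.eventually_all.2 fun z _ => hexh z] with n hn hF
    have hwindow : {z | V z + g z ω ∈ W n} = E n := Set.ext hn
    rw [projPerturbedLattice_apply _ _ _ (hW n), hwindow,
      ← encard_sdiff_add_encard_of_subset hF, ENat.toENNReal_add, encard_coe_eq_coe_finsetCard,
      ENat.toENNReal_coe]
  let A := liminf (fun n => {μ : Measure ℝ | μ (W n) + S.card = (E n).encard}) atTop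
  have hA : MeasurableSet A := .measurableSet_liminf fun n =>
    (Measure.measurable_coe (hW n)).add_const _ (measurableSet_singleton _)
  refine ⟨A, ?_, ?_⟩
  · rw [Measure.map_apply (measurable_projPerturbedLattice V hg _) hA.compl]
    exact ae_iff.1 ((hcount S).mono fun ω hω => mem_liminf_iff_eventually_mem.2 hω)
  · rw [Measure.map_apply (measurable_projPerturbedLattice V hg _) hA]
    refine measure_mono_null (fun ω hω => ?_) (ae_iff.1 (hcount T))
    intro hT
    obtain ⟨n, hSn, hTn⟩ := ((mem_liminf_iff_eventually_mem.1 hω).and hT).exists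
    have hne : projPerturbedLattice V (fun z => g z ω) T (W n) ≠ ∞ :=
      ne_top_of_le_ne_top (by simpa using (hE n).encard_lt_top.ne) (hTn ▸ le_self_add)
    exact hST (by exact_mod_cast (ENNReal.add_right_inj hne).1 (hSn.trans hTn.symm))

end Configuration

theorem projected_perturbed_lattice_rigidity_general
    {G : Type*} [Countable G]
    (V : G → ℝ)
    (hacc : ∀ x : ℝ, ¬ AccPt x (Filter.principal (Set.range V)))
    (hlevel : ∀ x : ℝ, {z : G | V z = x}.Finite)
    {Ω : Type*} [MeasurableSpace Ω] (P : Measure Ω)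
    (g : G → Ω → ℝ) (hg : ∀ z, Measurable (g z))
    (h1 : (BddBelow (Set.range V) ∨ ¬ BddAbove (Set.range V)) →
      ∀ r : ℕ → ℝ, StrictMono r →
        Set.range r = {x : ℝ | x ∈ Set.range V ∧ 0 ≤ x} →
        ∀ᵐ ω ∂P, Tendsto
          (fun n : ℕ => (r n - r (n - 1))⁻¹ *
            sSup ((fun z => |g z ω|) '' {z : G | V z ∈ Set.Icc 0 (r n)}))
          atTop (nhds 0))
    (h2 : (BddAbove (Set.range V) ∨ ¬ BddBelow (Set.range V)) →
      ∀ t : ℕ → ℝ, StrictAnti t →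
        Set.range t = {x : ℝ | x ∈ Set.range V ∧ x < 0} →
        ∀ᵐ ω ∂P, Tendsto
          (fun n : ℕ => |t n - t (n - 1)|⁻¹ *
            sSup ((fun z => |g z ω|) '' {z : G | V z ∈ Set.Ico (t n) 0}))
          atTop (nhds 0))
    (S T : Finset G) (hST : S.card ≠ T.card) :
    ∃ A : Set (Measure ℝ),
      P.map (fun ω => projPerturbedLattice V (fun z => g z ω) (↑S : Set G)) Aᶜ = 0 ∧
      P.map (fun ω => projPerturbedLattice V (fun z => g z ω) (↑T : Set G)) A = 0 := by
  have hfin := finite_preimage_Icc_of_forall_not_accPt hacc hlevel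
  have hfin_neg : ∀ a b, {z | -V z ∈ Icc a b}.Finite := fun a b =>
    (hfin (-b) (-a)).subset fun z hz => ⟨neg_le.1 hz.2, le_neg.1 hz.1⟩
  have hdecay := ae_noiseWithinHalfGaps_Ici hfin h1
  have hdecay_neg := ae_noiseWithinHalfGaps_neg_Ioi hfin h2
  -- the negative side is the nonnegative side of `-V`, with `D = Ioi 0`
  obtain ⟨W₁, b, hW₁, hb, hsep₁⟩ :=
    exists_upper_windows (isUpperSet_Ici 0) bddBelow_Ici nonempty_Ici hfin hdecay
  obtain ⟨W₂, a, hW₂, ha, hsep₂⟩ :=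
    exists_upper_windows (isUpperSet_Ioi 0) bddBelow_Ioi nonempty_Ioi hfin_neg hdecay_neg
  refine exists_separating_set_of_windows P V hg (W := fun n => W₁ n ∩ Neg.neg ⁻¹' W₂ n)
    (fun n => (hW₁ n).inter (measurable_neg (hW₂ n)))
    (E := fun n => {z | V z ∈ Icc (-a n) (b n)}) (fun n => hfin _ _)
    (fun z => ((hb z).and (ha z)).mono fun n h => ⟨neg_le.1 h.2, h.1⟩) ?_ hST
  filter_upwards [hsep₁, hsep₂,
    ae_exists_le_add (isUpperSet_Ici 0) bddBelow_Ici nonempty_Ici hfin hdecay,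
    ae_exists_le_add (isUpperSet_Ioi 0) bddBelow_Ioi nonempty_Ioi hfin_neg hdecay_neg]
    with ω h₁ h₂ ⟨c₁, hc₁⟩ ⟨c₂, hc₂⟩
  filter_upwards
    [h₁ ⟨-c₂, fun z hz => by linarith [hc₂ z (mem_Ioi.2 (neg_pos.2 (not_le.1 hz)))]⟩,
      h₂ ⟨-c₁, fun z hz => by linarith [hc₁ z (mem_Ici.2 (neg_nonpos.1 (not_lt.1 hz)))]⟩]
    with n hn₁ hn₂ z
  simp only [mem_inter_iff, mem_preimage, neg_add, hn₁, hn₂, mem_Icc, neg_le, and_comm]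

/-- **Main theorem**: under the no-accumulation and finite-level-set assumptions on `V`, and
the almost sure noise decay conditions (on the relevant sides, according to the boundedness
of `V`), deleting finite subsets `S`, `T` of different cardinalities yields point processes
whose laws are mutually singular after completion. -/
theorem projected_perturbed_lattice_rigidity
    {G : Type*} [Countable G] [Infinite G]
    (V : G → ℝ)
    (hacc : ∀ x : ℝ, ¬ AccPt x (Filter.principal (Set.range V)))
    (hlevel : ∀ x : ℝ, {z : G | V z = x}.Finite)
    {Ω : Type*} [MeasurableSpace Ω] (P : Measure Ω) [IsProbabilityMeasure P]
    (g : G → Ω → ℝ) (hg : ∀ z, Measurable (g z))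
    (hloc : ∀ᵐ ω ∂P,
      IsLocallyFiniteMeasure (projPerturbedLattice V (fun z => g z ω) (∅ : Set G)))
    (h1 : (BddBelow (Set.range V) ∨ ¬ BddAbove (Set.range V)) →
      ∀ r : ℕ → ℝ, StrictMono r →
        Set.range r = {x : ℝ | x ∈ Set.range V ∧ 0 ≤ x} →
        ∀ᵐ ω ∂P, Tendsto
          (fun n : ℕ => (r n - r (n - 1))⁻¹ *
            sSup ((fun z => |g z ω|) '' {z : G | V z ∈ Set.Icc 0 (r n)}))
          atTop (nhds 0))
    (h2 : (BddAbove (Set.range V) ∨ ¬ BddBelow (Set.range V)) →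
      ∀ t : ℕ → ℝ, StrictAnti t →
        Set.range t = {x : ℝ | x ∈ Set.range V ∧ x < 0} →
        ∀ᵐ ω ∂P, Tendsto
          (fun n : ℕ => |t n - t (n - 1)|⁻¹ *
            sSup ((fun z => |g z ω|) '' {z : G | V z ∈ Set.Ico (t n) 0}))
          atTop (nhds 0))
    (S T : Finset G) (hST : S.card ≠ T.card) :
    ∃ A : Set (Measure ℝ),
      P.map (fun ω => projPerturbedLattice V (fun z => g z ω) (↑S : Set G)) Aᶜ = 0 ∧
      P.map (fun ω => projPerturbedLattice V (fun z => g z ω) (↑T : Set G)) A = 0 :=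
  projected_perturbed_lattice_rigidity_general V hacc hlevel P g hg h1 h2 S T hST
end

section
/- Let d ≥ 1, σ > 0 and α > 1. Let (g_z)_{z∈ℤ^d} be real random variables on a probability space such that each g_z has the Gaussian distribution N(0, σ²) (no assumption is made on the joint distribution or covariance of the g_z's). Let Π = Σ_{z∈ℤ^d} δ_{‖z‖^α + g_z}, where ‖·‖ is the ℓ∞ norm on ℤ^d. Then Π is deletion singular: for every finite nonempty S ⊆ ℤ^d, the laws of Π and of Π_S = Σ_{z∈ℤ^d∖S} δ_{‖z‖^α + g_z} are mutually singular after completion. -/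
open MeasureTheory ProbabilityTheory Filter Set

/-- The configuration `Π_S = Σ_{z ∈ ℤ^d ∖ S} δ_{‖z‖^α + g(z)}` as a Borel measure on `ℝ`,
where `‖·‖` is the `ℓ∞` norm on `ℤ^d = (Fin d → ℤ)`. -/
noncomputable def latticeConfig {d : ℕ} (α : ℝ) (g : (Fin d → ℤ) → ℝ) (S : Set (Fin d → ℤ)) :
    Measure ℝ :=
  Measure.sum (fun z : {z : Fin d → ℤ // z ∉ S} => Measure.dirac (‖z.1‖ ^ α + g z.1))

/-!
Put the thresholds `t n` midway between `n ^ α` and `(n + 1) ^ α`. Consecutive shells are separated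
by `k ^ α - (k - 1) ^ α ≥ k ^ (α - 1)`, so the point `‖z‖ ^ α + g z` falls on the correct side of
every threshold as soon as `|g z| < ‖z‖ ^ (α - 1) / 2`. Gaussian tails make the probabilities of
the opposite events summable over `ℤ^d` (this is where `α > 1` enters), so by Borel–Cantelli almost
surely only finitely many `z` are exceptional. Then, for all large `n`, `Π` has exactly
`#{‖z‖ ≤ n}` points in `(-∞, t n]` while `Π_S` has `#S` fewer, and the event
"eventually `μ (-∞, t n] = #{‖z‖ ≤ n}`" separates the two laws.
-/

open Real Metric Asymptotics
open scoped NNReal ENNReal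

section Lattice

variable {ι : Type*} [Fintype ι]

lemma exists_natCast_eq_norm (z : ι → ℤ) : ∃ k : ℕ, ‖z‖ = k := by
  obtain ⟨k, hk⟩ : ∃ k : ℕ, ‖z‖₊ = k := by
    rw [Pi.nnnorm_def]
    refine Finset.sup_induction (p := fun x : ℝ≥0 => ∃ k : ℕ, x = k) ⟨0, by simp⟩ ?_
      fun i _ => ⟨(z i).natAbs, (NNReal.natCast_natAbs _).symm⟩
    rintro _ ⟨k, rfl⟩ _ ⟨l, rfl⟩
    exact ⟨max k l, by simp⟩
  exact ⟨k, by rw [← coe_nnnorm, hk]; rfl⟩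

lemma summable_pi_prod {κ : Type*} {f : κ → ℝ} (hf0 : 0 ≤ f) (hf : Summable f) :
    Summable fun z : ι → κ => ∏ i, f (z i) := by
  classical
  refine summable_of_sum_le (c := ∏ _i : ι, ∑' k, f k)
    (fun z => Finset.prod_nonneg fun i _ => hf0 _) fun F => ?_
  calc ∑ z ∈ F, ∏ i, f (z i)
      ≤ ∑ z ∈ Fintype.piFinset fun i => F.image (· i), ∏ i, f (z i) :=
        Finset.sum_le_sum_of_subset_of_nonneg
          (fun z hz => Fintype.mem_piFinset.2 fun i => Finset.mem_image_of_mem _ hz)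
          fun _ _ _ => Finset.prod_nonneg fun i _ => hf0 _
    _ = ∏ i, ∑ k ∈ F.image (· i), f k := (Finset.prod_univ_sum _ _).symm
    _ ≤ ∏ _i : ι, ∑' k, f k :=
        Finset.prod_le_prod (fun i _ => Finset.sum_nonneg fun k _ => hf0 k)
          fun i _ => hf.sum_le_tsum _ fun k _ => hf0 k

lemma summable_int_exp_neg_mul_abs_rpow {a γ : ℝ} (ha : 0 < a) (hγ : 0 < γ) :
    Summable fun n : ℤ => exp (-a * |(n : ℝ)| ^ γ) := by
  have hdecay : (fun y : ℝ => exp (-a * y ^ γ)) =o[atTop] fun y => y ^ (-2 : ℝ) := by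
    refine ((isLittleO_exp_neg_mul_rpow_atTop ha (-2 / γ)).comp_tendsto
      (tendsto_rpow_atTop hγ)).congr' EventuallyEq.rfl ?_
    filter_upwards [eventually_ge_atTop 0] with y hy
    rw [Function.comp_apply, ← rpow_mul hy, mul_div_cancel₀ _ hγ.ne']
  have habs : Tendsto (fun n : ℤ => |(n : ℝ)|) cofinite atTop :=
    tendsto_norm_cocompact_atTop.comp Int.tendsto_coe_cofinite
  exact summable_of_isBigO (summable_abs_int_rpow one_lt_two)
    (hdecay.comp_tendsto habs).isBigO

lemma summable_exp_neg_mul_norm_rpow {c γ : ℝ} (hc : 0 < c) (hγ : 0 < γ) :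
    Summable fun z : ι → ℤ => exp (-c * ‖z‖ ^ γ) := by
  cases isEmpty_or_nonempty ι
  · exact .of_finite
  set a := c / Fintype.card ι with ha
  have hle : ∀ z : ι → ℤ, exp (-c * ‖z‖ ^ γ) ≤ ∏ i, exp (-a * |(z i : ℝ)| ^ γ) := by
    intro z
    rw [← exp_sum, exp_le_exp]
    calc -c * ‖z‖ ^ γ = ∑ _i : ι, -a * ‖z‖ ^ γ := by
          rw [Finset.sum_const, Finset.card_univ, nsmul_eq_mul, ha]
          field_simp
      _ ≤ ∑ i, -a * |(z i : ℝ)| ^ γ := by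
          refine Finset.sum_le_sum fun i _ =>
            mul_le_mul_of_nonpos_left ?_ (neg_nonpos.2 (by positivity))
          have hzi : |(z i : ℝ)| ≤ ‖z‖ := by simpa [Int.norm_eq_abs] using norm_le_pi_norm z i
          exact rpow_le_rpow (abs_nonneg _) hzi hγ.le
  exact (summable_pi_prod (fun _ => (exp_pos _).le)
    (summable_int_exp_neg_mul_abs_rpow (by positivity) hγ)).of_nonneg_of_le
      (fun _ => (exp_pos _).le) hle

end Lattice

noncomputable def shellMidpoint (α : ℝ) (n : ℕ) : ℝ := ((n : ℝ) ^ α + ((n : ℝ) + 1) ^ α) / 2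

section Shells

variable {α : ℝ}

lemma sub_mul_rpow_sub_one_le_rpow_sub_rpow {x y : ℝ} (hx : 0 ≤ x) (hxy : x ≤ y) (hα : 1 ≤ α) :
    (y - x) * y ^ (α - 1) ≤ y ^ α - x ^ α := by
  have hsplit : ∀ t : ℝ, 0 ≤ t → t ^ α = t * t ^ (α - 1) := fun t ht => by
    rw [← rpow_one_add' ht (by linarith), add_sub_cancel]
  have hmono : x ^ (α - 1) ≤ y ^ (α - 1) := rpow_le_rpow hx hxy (by linarith)
  rw [hsplit x hx, hsplit y (hx.trans hxy)]
  nlinarith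

lemma shellMidpoint_mono (hα : 0 ≤ α) : Monotone (shellMidpoint α) := fun k n hkn => by
  have hkn' : (k : ℝ) ≤ n := by exact_mod_cast hkn
  have h1 := rpow_le_rpow k.cast_nonneg hkn' hα
  have h2 := rpow_le_rpow (by positivity) (by linarith : (k : ℝ) + 1 ≤ n + 1) hα
  unfold shellMidpoint
  linarith

lemma tendsto_shellMidpoint_atTop (hα : 0 < α) : Tendsto (shellMidpoint α) atTop atTop := by
  refine tendsto_atTop_mono (fun n => ?_)
    ((tendsto_rpow_atTop hα).comp tendsto_natCast_atTop_atTop)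
  have := rpow_le_rpow n.cast_nonneg (le_add_of_nonneg_right zero_le_one) hα.le
  simp only [Function.comp_apply, shellMidpoint]
  linarith

lemma rpow_add_le_shellMidpoint (hα : 1 ≤ α) (k : ℕ) :
    (k : ℝ) ^ α + (k : ℝ) ^ (α - 1) / 2 ≤ shellMidpoint α k := by
  have hgap := sub_mul_rpow_sub_one_le_rpow_sub_rpow k.cast_nonneg
    (le_add_of_nonneg_right zero_le_one) hα
  have hmono : (k : ℝ) ^ (α - 1) ≤ ((k : ℝ) + 1) ^ (α - 1) :=
    rpow_le_rpow k.cast_nonneg (le_add_of_nonneg_right zero_le_one) (by linarith)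
  unfold shellMidpoint
  linarith

lemma shellMidpoint_le_rpow_sub (hα : 1 ≤ α) {k n : ℕ} (hnk : n < k) :
    shellMidpoint α n ≤ (k : ℝ) ^ α - (k : ℝ) ^ (α - 1) / 2 := by
  have hnk' : (n : ℝ) + 1 ≤ k := by exact_mod_cast hnk
  have hgap := sub_mul_rpow_sub_one_le_rpow_sub_rpow (x := k - 1)
    (by linarith [n.cast_nonneg (α := ℝ)]) (sub_le_self _ zero_le_one) hα
  have h1 := rpow_le_rpow n.cast_nonneg (le_sub_iff_add_le.2 hnk') (by linarith : 0 ≤ α)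
  have h2 := rpow_le_rpow (by positivity) hnk' (by linarith : 0 ≤ α)
  unfold shellMidpoint
  linarith

lemma rpow_add_le_shellMidpoint_iff (hα : 1 ≤ α) {k n : ℕ} {e : ℝ}
    (he : |e| < (k : ℝ) ^ (α - 1) / 2) :
    (k : ℝ) ^ α + e ≤ shellMidpoint α n ↔ k ≤ n := by
  obtain ⟨he₁, he₂⟩ := abs_lt.mp he
  refine ⟨fun h => ?_, fun hkn => ?_⟩
  · by_contra! hnk
    linarith [shellMidpoint_le_rpow_sub hα hnk]
  · linarith [rpow_add_le_shellMidpoint hα k, shellMidpoint_mono (by linarith : (0 : ℝ) ≤ α) hkn]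

lemma eventually_forall_norm_rpow_add_le_shellMidpoint_iff {ι : Type*} [Fintype ι] (hα : 1 ≤ α)
    {g : (ι → ℤ) → ℝ} (hg : {z | ‖z‖ ^ (α - 1) / 2 ≤ |g z|}.Finite) :
    ∀ᶠ n : ℕ in atTop, ∀ z, ‖z‖ ^ α + g z ≤ shellMidpoint α n ↔ ‖z‖ ≤ n := by
  have hbad : ∀ᶠ n : ℕ in atTop, ∀ z ∈ {z | ‖z‖ ^ (α - 1) / 2 ≤ |g z|},
      ‖z‖ ^ α + g z ≤ shellMidpoint α n ∧ ‖z‖ ≤ n :=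
    (eventually_all_finite hg).2 fun z _ =>
      ((tendsto_shellMidpoint_atTop (by linarith)).eventually_ge_atTop _).and
        (tendsto_natCast_atTop_atTop.eventually_ge_atTop _)
  filter_upwards [hbad] with n hn z
  by_cases hz : ‖z‖ ^ (α - 1) / 2 ≤ |g z|
  · exact iff_of_true (hn z hz).1 (hn z hz).2
  · obtain ⟨k, hk⟩ := exists_natCast_eq_norm z
    rw [hk] at hz ⊢
    exact (rpow_add_le_shellMidpoint_iff hα (not_le.mp hz)).trans Nat.cast_le.symm

end Shells

section Configuration

variable {d : ℕ} {α : ℝ}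

lemma latticeConfig_apply (g : (Fin d → ℤ) → ℝ) (S : Set (Fin d → ℤ)) {B : Set ℝ}
    (hB : MeasurableSet B) :
    latticeConfig α g S B = {z | z ∉ S ∧ ‖z‖ ^ α + g z ∈ B}.encard := by
  rw [← ENNReal.tsum_set_one, tsum_subtype _ fun _ => (1 : ℝ≥0∞), latticeConfig,
    Measure.sum_apply _ hB]
  simp_rw [Measure.dirac_apply' _ hB]
  refine (tsum_subtype Sᶜ fun z => B.indicator 1 (‖z‖ ^ α + g z)).trans ?_
  congr 1 with z
  by_cases hz : z ∈ S <;> by_cases hzB : ‖z‖ ^ α + g z ∈ B <;> simp [hz, hzB]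

lemma measurable_latticeConfig {Ω : Type*} [MeasurableSpace Ω] {g : (Fin d → ℤ) → Ω → ℝ}
    (hg : ∀ z, Measurable (g z)) (S : Set (Fin d → ℤ)) :
    Measurable fun ω => latticeConfig α (fun z => g z ω) S := by
  refine Measure.measurable_of_measurable_coe _ fun B hB => ?_
  simp_rw [latticeConfig, Measure.sum_apply _ hB, Measure.dirac_apply' _ hB]
  exact Measurable.tsum fun z => (measurable_one.indicator hB).comp ((hg z).const_add _)

lemma eventually_latticeConfig_Iic_shellMidpoint (hα : 1 ≤ α) {g : (Fin d → ℤ) → ℝ}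
    (hg : {z | ‖z‖ ^ (α - 1) / 2 ≤ |g z|}.Finite) (S : Set (Fin d → ℤ)) :
    ∀ᶠ n : ℕ in atTop,
      latticeConfig α g S (Iic (shellMidpoint α n)) = (closedBall 0 n \ S).encard := by
  filter_upwards [eventually_forall_norm_rpow_add_le_shellMidpoint_iff hα hg] with n hn
  rw [latticeConfig_apply g S measurableSet_Iic]
  congr 2
  ext z
  simp [hn z, and_comm]

def shellCountSet (d : ℕ) (α : ℝ) : Set (Measure ℝ) :=
  {μ | ∀ᶠ n : ℕ in atTop, μ (Iic (shellMidpoint α n)) = (closedBall (0 : Fin d → ℤ) n).encard}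

lemma measurableSet_shellCountSet : MeasurableSet (shellCountSet d α) := by
  have : shellCountSet d α = liminf (fun n : ℕ => {μ : Measure ℝ |
      μ (Iic (shellMidpoint α n)) = (closedBall (0 : Fin d → ℤ) n).encard}) atTop := by
    ext μ
    simp [shellCountSet, mem_liminf_iff_eventually_mem]
  rw [this]
  exact MeasurableSet.measurableSet_liminf fun n =>
    Measure.measurable_coe measurableSet_Iic (measurableSet_singleton _)

lemma latticeConfig_empty_mem_shellCountSet (hα : 1 ≤ α) {g : (Fin d → ℤ) → ℝ}
    (hg : {z | ‖z‖ ^ (α - 1) / 2 ≤ |g z|}.Finite) :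
    latticeConfig α g ∅ ∈ shellCountSet d α := by
  filter_upwards [eventually_latticeConfig_Iic_shellMidpoint hα hg ∅] with n hn
  rw [hn, sdiff_empty]

lemma latticeConfig_notMem_shellCountSet (hα : 1 ≤ α) {g : (Fin d → ℤ) → ℝ}
    (hg : {z | ‖z‖ ^ (α - 1) / 2 ≤ |g z|}.Finite) {S : Finset (Fin d → ℤ)} (hS : S.Nonempty) :
    latticeConfig α g S ∉ shellCountSet d α := by
  intro hmem
  have hsub : ∀ᶠ n : ℕ in atTop, (S : Set (Fin d → ℤ)) ⊆ closedBall 0 n :=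
    (S.eventually_all.2 fun z _ => tendsto_natCast_atTop_atTop.eventually_ge_atTop ‖z‖).mono
      fun n hn z hz => mem_closedBall_zero_iff.2 (hn z hz)
  obtain ⟨n, hn, hcount, hsub⟩ :=
    (hmem.and ((eventually_latticeConfig_Iic_shellMidpoint hα hg S).and hsub)).exists
  rw [hcount, ENat.toENNReal_inj] at hn
  exact ((isCompact_closedBall (0 : Fin d → ℤ) n).finite_of_discrete.sdiff.encard_lt_encard
    (hsub.sdiff_ssubset_of_nonempty (by simpa using hS))).ne hn

end Configuration

section Gaussian

variable {Ω : Type*} [MeasurableSpace Ω] {P : Measure Ω} [IsFiniteMeasure P] {v : ℝ≥0}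

lemma measure_le_abs_le_of_map_eq_gaussianReal {X : Ω → ℝ} (hX : P.map X = gaussianReal 0 v)
    (ε : ℝ) : P {ω | ε ≤ |X ω|} ≤ ENNReal.ofReal (2 * exp (v / 2 - ε)) := by
  have hXm : AEMeasurable X P := aemeasurable_of_map_neZero (by rw [hX]; infer_instance)
  have hint : ∀ t, Integrable (fun ω => exp (t * X ω)) P := fun t => by
    have := integrable_exp_mul_gaussianReal (μ := 0) (v := v) t
    rwa [← hX, integrable_map_measure (by fun_prop) hXm] at this
  have hupper := measure_ge_le_exp_mul_mgf ε zero_le_one (hint 1)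
  have hlower := measure_le_le_exp_mul_mgf (-ε) (neg_nonpos.2 zero_le_one) (hint (-1))
  rw [mgf_gaussianReal hX, ← exp_add] at hupper hlower
  have hsplit : {ω | ε ≤ |X ω|} ⊆ {ω | ε ≤ X ω} ∪ {ω | X ω ≤ -ε} :=
    fun ω (hω : ε ≤ |X ω|) => (le_abs'.1 hω).symm
  rw [← ofReal_measureReal]
  refine ENNReal.ofReal_le_ofReal ?_
  calc P.real {ω | ε ≤ |X ω|} ≤ P.real {ω | ε ≤ X ω} + P.real {ω | X ω ≤ -ε} :=
        (measureReal_mono hsplit).trans (measureReal_union_le _ _)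
    _ ≤ 2 * exp (v / 2 - ε) := by
        ring_nf at hupper hlower ⊢
        linarith

lemma ae_finite_setOf_norm_rpow_le_abs {ι : Type*} [Fintype ι] {α : ℝ} (hα : 1 < α)
    {g : (ι → ℤ) → Ω → ℝ} (hg : ∀ z, P.map (g z) = gaussianReal 0 v) :
    ∀ᵐ ω ∂P, {z | ‖z‖ ^ (α - 1) / 2 ≤ |g z ω|}.Finite := by
  have hsum : Summable fun z : ι → ℤ => 2 * exp (v / 2 - ‖z‖ ^ (α - 1) / 2) := by
    refine ((summable_exp_neg_mul_norm_rpow one_half_pos (sub_pos.2 hα)).mul_left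
      (2 * exp (v / 2))).congr fun z => ?_
    rw [mul_assoc, ← exp_add]
    ring_nf
  refine ae_finite_setOfPred_mem (ne_top_of_le_ne_top ?_
    (ENNReal.tsum_le_tsum fun z => measure_le_abs_le_of_map_eq_gaussianReal (hg z) _))
  rw [← ENNReal.ofReal_tsum_of_nonneg (fun _ => by positivity) hsum]
  exact ENNReal.ofReal_ne_top

end Gaussian

theorem deletion_singular_of_one_lt_alpha_general
    (d : ℕ) (σ : ℝ) (α : ℝ) (hα : 1 < α)
    {Ω : Type*} [MeasurableSpace Ω] (P : Measure Ω) [IsProbabilityMeasure P]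
    (g : (Fin d → ℤ) → Ω → ℝ) (hmeas : ∀ z, Measurable (g z))
    (hlaw : ∀ z, P.map (g z) = gaussianReal 0 ⟨σ ^ 2, sq_nonneg σ⟩)
    (S : Finset (Fin d → ℤ)) (hS : S.Nonempty) :
    ∃ A : Set (Measure ℝ),
      P.map (fun ω => latticeConfig α (fun z => g z ω) (∅ : Set (Fin d → ℤ))) Aᶜ = 0 ∧
      P.map (fun ω => latticeConfig α (fun z => g z ω) (↑S : Set (Fin d → ℤ))) A = 0 := by
  have hgood := ae_finite_setOf_norm_rpow_le_abs hα hlaw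
  refine ⟨shellCountSet d α, ?_, ?_⟩
  · rw [Measure.map_apply (measurable_latticeConfig hmeas _) measurableSet_shellCountSet.compl]
    exact measure_mono_null
      (fun ω hω hfin => hω (latticeConfig_empty_mem_shellCountSet hα.le hfin)) (ae_iff.1 hgood)
  · rw [Measure.map_apply (measurable_latticeConfig hmeas _) measurableSet_shellCountSet]
    exact measure_mono_null
      (fun ω hω hfin => latticeConfig_notMem_shellCountSet hα.le hfin hS hω) (ae_iff.1 hgood)

/-- If `α > 1` and each `g_z` is `N(0, σ²)`-distributed (with no assumption on the joint
distribution), then `Π = {‖z‖^α + g_z}_{z ∈ ℤ^d}` is deletion singular: for every finite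
nonempty `S`, the laws of `Π` and `Π_S` are mutually singular after completion. -/
theorem deletion_singular_of_one_lt_alpha
    (d : ℕ) (hd : 1 ≤ d) (σ : ℝ) (hσ : 0 < σ) (α : ℝ) (hα : 1 < α)
    {Ω : Type*} [MeasurableSpace Ω] (P : Measure Ω) [IsProbabilityMeasure P]
    (g : (Fin d → ℤ) → Ω → ℝ) (hmeas : ∀ z, Measurable (g z))
    (hlaw : ∀ z, P.map (g z) = gaussianReal 0 ⟨σ ^ 2, sq_nonneg σ⟩)
    (S : Finset (Fin d → ℤ)) (hS : S.Nonempty) :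
    ∃ A : Set (Measure ℝ),
      P.map (fun ω => latticeConfig α (fun z => g z ω) (∅ : Set (Fin d → ℤ))) Aᶜ = 0 ∧
      P.map (fun ω => latticeConfig α (fun z => g z ω) (↑S : Set (Fin d → ℤ))) A = 0 :=
  deletion_singular_of_one_lt_alpha_general d σ α hα P g hmeas hlaw S hS
end

section
/- Let G be a countably infinite set and let V : G → ℝ be bounded below and satisfy: (a) the image of V has no accumulation point in ℝ, and (b) every level set {z ∈ G : V(z) = x} is finite; enumerate the nonnegative values of V as 0 ≤ r_0 < r_1 < r_2 < ⋯ (an infinite list). Let g : G → ℝ be any function, let T ⊆ G be finite, let 0 ≤ k < |T|, let B ⊆ G be finite with |B| = k, and let φ : G∖B → G∖T be any bijection. Then limsup_{n→∞} (r_n − r_{n−1})^{-1} · max{ |V(φ(z)) + g_{φ(z)} − V(z)| : z ∈ G∖B, V(z) ∈ [0, r_n] } ≥ 1 − limsup_{n→∞} (r_n − r_{n−1})^{-1} · max{ |g_z| : z ∈ G, V(z) ∈ [0, r_n] }. -/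
open MeasureTheory Filter Set

/-- **Chain of mismatches lower bound** (bounded-below case): if `V` is bounded below, its
image has no accumulation point and has finite level sets, with nonnegative values
enumerated `0 ≤ r_0 < r_1 < ⋯`, then for any finite `T`, any `k < |T|`, any finite `B` with
`|B| = k` and any bijection `φ : G∖B → G∖T`,
`limsup_n (r_n − r_{n−1})⁻¹ · max{ |V(φ(z)) + g_{φ(z)} − V(z)| : z ∈ G∖B, V(z) ∈ [0, r_n] }`
is at least `1 − limsup_n (r_n − r_{n−1})⁻¹ · max{ |g_z| : z ∈ G, V(z) ∈ [0, r_n] }`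
(limsups in the extended reals). -/
theorem mismatch_limsup_lower_bound
    {G : Type*} [Countable G] [Infinite G]
    (V : G → ℝ) (hbdd : BddBelow (Set.range V))
    (hacc : ∀ x : ℝ, ¬ AccPt x (Filter.principal (Set.range V)))
    (hlevel : ∀ x : ℝ, {z : G | V z = x}.Finite)
    (r : ℕ → ℝ) (hr : StrictMono r)
    (hrange : Set.range r = {x : ℝ | x ∈ Set.range V ∧ 0 ≤ x})
    (g : G → ℝ) (T : Finset G) (k : ℕ) (hk : k < T.card)
    (B : Finset G) (hB : B.card = k)
    (φ : ((↑B : Set G)ᶜ : Set G) ≃ ((↑T : Set G)ᶜ : Set G)) :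
    1 - Filter.limsup (fun n : ℕ =>
        (((r n - r (n - 1))⁻¹ *
          sSup ((fun z => |g z|) '' {z : G | V z ∈ Set.Icc 0 (r n)}) : ℝ) : EReal))
        Filter.atTop ≤
      Filter.limsup (fun n : ℕ =>
        (((r n - r (n - 1))⁻¹ *
          sSup ((fun w : ((↑B : Set G)ᶜ : Set G) => |V (φ w).1 + g (φ w).1 - V w.1|) ''
            {w : ((↑B : Set G)ᶜ : Set G) | V w.1 ∈ Set.Icc 0 (r n)}) : ℝ) : EReal))
        Filter.atTop := by
  classical
  -- real-valued versions of the two sequences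
  set a : ℕ → ℝ := fun n => (r n - r (n - 1))⁻¹ *
      sSup ((fun z => |g z|) '' {z : G | V z ∈ Set.Icc 0 (r n)}) with ha
  set b : ℕ → ℝ := fun n => (r n - r (n - 1))⁻¹ *
      sSup ((fun w : ((↑B : Set G)ᶜ : Set G) => |V (φ w).1 + g (φ w).1 - V w.1|) ''
        {w : ((↑B : Set G)ᶜ : Set G) | V w.1 ∈ Set.Icc 0 (r n)}) with hb
  -- membership facts for `r`
  have hrmem : ∀ n, r n ∈ {x : ℝ | x ∈ Set.range V ∧ 0 ≤ x} := fun n =>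
    hrange ▸ Set.mem_range_self n
  have hr0 : ∀ n, (0 : ℝ) ≤ r n := fun n => (hrmem n).2
  -- sublevel sets are finite
  have hfin_le : ∀ c : ℝ, {z : G | V z ≤ c}.Finite := by
    intro c
    obtain ⟨m, hm⟩ := hbdd
    have hS : (Set.range V ∩ Set.Icc m c).Finite := by
      by_contra h
      obtain ⟨x, -, hx⟩ := Set.Infinite.exists_accPt_of_subset_isCompact
        (by exact h) isCompact_Icc Set.inter_subset_right
      exact hacc x (hx.mono (principal_mono.2 Set.inter_subset_left))
    have hsub : {z : G | V z ≤ c} ⊆ ⋃ x ∈ (Set.range V ∩ Set.Icc m c), {z : G | V z = x} := by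
      intro z hz
      exact Set.mem_biUnion ⟨⟨z, rfl⟩, hm ⟨z, rfl⟩, hz⟩ rfl
    exact ((hS.biUnion fun x _ => hlevel x).subset hsub)
  -- r eventually exceeds any bound
  have hev_ge : ∀ c : ℝ, ∀ᶠ n in atTop, c ≤ r n := by
    intro c
    have hex : ∃ n, c ≤ r n := by
      by_contra h
      push_neg at h
      have hbA : BddAbove (Set.range r) := ⟨c, by rintro x ⟨n, rfl⟩; exact (h n).le⟩
      have htend : Tendsto r atTop (nhds (⨆ n, r n)) := tendsto_atTop_ciSup hr.monotone hbA
      refine hacc (⨆ n, r n) ?_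
      rw [accPt_iff_nhds]
      intro U hU
      obtain ⟨n, hn⟩ := (htend.eventually_mem hU).exists
      exact ⟨r n, ⟨hn, (hrmem n).1⟩, (lt_of_lt_of_le (hr (Nat.lt_succ_self n))
        (le_ciSup hbA (n + 1))).ne⟩
    obtain ⟨n₀, hn₀⟩ := hex
    filter_upwards [eventually_ge_atTop n₀] with n hn
    exact hn₀.trans (hr.monotone hn)
  -- nonnegativity of a
  have ha_nonneg : ∀ n, 0 ≤ a n := by
    intro n
    refine mul_nonneg (inv_nonneg.2 (sub_nonneg.2 (hr.monotone (Nat.sub_le n 1)))) ?_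
    exact Real.sSup_nonneg fun x hx => by obtain ⟨z, -, rfl⟩ := hx; exact abs_nonneg _
  -- the crossing existence: for all large n there is z crossing level r n
  have hcross : ∀ N : ℕ, ∃ n ≥ N, ∃ z : ((↑B : Set G)ᶜ : Set G),
      (V z.1 ∈ Set.Icc 0 (r n) ∧ r n < V (φ z).1) ∨
      (r n < V z.1 ∧ V (φ z).1 ∈ Set.Icc 0 (r n)) := by
    intro N
    have hS2 : {z : ((↑B : Set G)ᶜ : Set G) | V z.1 < 0}.Finite := by
      have he : {z : ((↑B : Set G)ᶜ : Set G) | V z.1 < 0}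
          = Subtype.val ⁻¹' {x : G | V x < 0} := rfl
      rw [he]
      exact Set.Finite.preimage Subtype.val_injective.injOn
        ((hfin_le 0).subset fun x hx => show V x ≤ 0 from le_of_lt hx)
    have hS3 : {z : ((↑B : Set G)ᶜ : Set G) | V (φ z).1 < 0}.Finite := by
      have he : {z : ((↑B : Set G)ᶜ : Set G) | V (φ z).1 < 0}
          = (fun z : ((↑B : Set G)ᶜ : Set G) => (φ z).1) ⁻¹' {x : G | V x < 0} := rfl
      rw [he]
      refine Set.Finite.preimage (Function.Injective.injOn ?_)
        ((hfin_le 0).subset fun x hx => show V x ≤ 0 from le_of_lt hx)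
      exact fun z₁ z₂ h => φ.injective (Subtype.ext h)
    have hc1 : ∀ᶠ n in atTop, ∀ w ∈ B ∪ T, V w ≤ r n := by
      rw [eventually_all_finset]
      intro w _; exact hev_ge (V w)
    have hc2 : ∀ᶠ n in atTop, ∀ z ∈ {z : ((↑B : Set G)ᶜ : Set G) | V z.1 < 0},
        V (φ z).1 ≤ r n := by
      rw [eventually_all_finite hS2]
      intro z _; exact hev_ge _
    have hc3 : ∀ᶠ n in atTop, ∀ z ∈ {z : ((↑B : Set G)ᶜ : Set G) | V (φ z).1 < 0},
        V z.1 ≤ r n := by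
      rw [eventually_all_finite hS3]
      intro z _; exact hev_ge _
    obtain ⟨n, ⟨h1, h2, h3⟩, hnN⟩ :=
      ((hc1.and (hc2.and hc3)).and (eventually_ge_atTop N)).exists
    refine ⟨n, hnN, ?_⟩
    by_contra hno
    have hA : ∀ z : ((↑B : Set G)ᶜ : Set G), V z.1 ∈ Set.Icc 0 (r n) → V (φ z).1 ≤ r n := by
      intro z hz
      by_contra hgt
      exact hno ⟨z, Or.inl ⟨hz, lt_of_not_ge hgt⟩⟩
    have hB2 : ∀ z : ((↑B : Set G)ᶜ : Set G), V (φ z).1 ∈ Set.Icc 0 (r n) → V z.1 ≤ r n := by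
      intro z hz
      by_contra hgt
      exact hno ⟨z, Or.inr ⟨lt_of_not_ge hgt, hz⟩⟩
    -- build the bijection between sublevel sets minus B and minus T
    set Kfin : Finset G := (hfin_le (r n)).toFinset with hK
    have hmemK : ∀ x : G, x ∈ Kfin ↔ V x ≤ r n := fun x => Set.Finite.mem_toFinset _
    have hBsub : B ⊆ Kfin := fun w hw => (hmemK w).2 (h1 w (Finset.mem_union_left _ hw))
    have hTsub : T ⊆ Kfin := fun w hw => (hmemK w).2 (h1 w (Finset.mem_union_right _ hw))
    have hmem : ∀ z, z ∈ Kfin \ B → z ∈ ((↑B : Set G)ᶜ : Set G) := fun z hz => by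
      simpa using (Finset.mem_sdiff.1 hz).2
    have hcard : (Kfin \ B).card = (Kfin \ T).card := by
      refine Finset.card_bij (fun z hz => (φ ⟨z, hmem z hz⟩).1) ?_ ?_ ?_
      · intro z hz
        rw [Finset.mem_sdiff]
        constructor
        · rw [hmemK]
          rcases lt_or_ge (V z) 0 with hneg | hpos
          · exact h2 ⟨z, hmem z hz⟩ hneg
          · exact hA ⟨z, hmem z hz⟩ ⟨hpos, (hmemK z).1 (Finset.mem_sdiff.1 hz).1⟩
        · exact fun h => (φ ⟨z, hmem z hz⟩).2 (Finset.mem_coe.2 h)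
      · intro z₁ h₁ z₂ h₂ heq
        have := φ.injective (Subtype.ext heq)
        exact congrArg Subtype.val this
      · intro w hw
        have hwT : w ∈ ((↑T : Set G)ᶜ : Set G) := by simpa using (Finset.mem_sdiff.1 hw).2
        set z := φ.symm ⟨w, hwT⟩ with hz
        have hφz : (φ z).1 = w := by rw [hz, Equiv.apply_symm_apply]
        have hzB : z.1 ∉ B := fun h => z.2 (Finset.mem_coe.2 h)
        have hzK : z.1 ∈ Kfin := by
          rw [hmemK]
          rcases lt_or_ge (V w) 0 with hneg | hpos
          · exact h3 z (by show V (φ z).1 < 0; rw [hφz]; exact hneg)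
          · refine hB2 z ?_
            rw [hφz]
            exact ⟨hpos, (hmemK w).1 (Finset.mem_sdiff.1 hw).1⟩
        refine ⟨z.1, Finset.mem_sdiff.2 ⟨hzK, hzB⟩, ?_⟩
        have hgen : ∀ (p : z.1 ∈ ((↑B : Set G)ᶜ : Set G)), (φ ⟨z.1, p⟩).1 = w := by
          intro p
          rw [show (⟨z.1, p⟩ : ((↑B : Set G)ᶜ : Set G)) = z from Subtype.ext rfl]
          exact hφz
        exact hgen _
    have e1 := Finset.card_sdiff_of_subset hBsub
    have e2 := Finset.card_sdiff_of_subset hTsub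
    have hBle := Finset.card_le_card hBsub
    have hTle := Finset.card_le_card hTsub
    omega
  -- key computation: a crossing pair at eligible level m forces 1 - a m ≤ b m
  have key : ∀ (m : ℕ) (z : ((↑B : Set G)ᶜ : Set G)), 0 < r m - r (m - 1) →
      V z.1 ∈ Set.Icc 0 (r m) → V (φ z).1 ∈ Set.Icc 0 (r m) →
      r m - r (m - 1) - |g (φ z).1| ≤ |V (φ z).1 + g (φ z).1 - V z.1| →
      (1 : ℝ) - a m ≤ b m := by
    intro m z hΔ hzel hφel hmis
    rw [ha, hb]
    simp only
    have hfin1 : ((fun z => |g z|) '' {z : G | V z ∈ Set.Icc 0 (r m)}).Finite :=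
      ((hfin_le (r m)).subset fun x hx => hx.2).image _
    have hfin2 : ((fun w : ((↑B : Set G)ᶜ : Set G) => |V (φ w).1 + g (φ w).1 - V w.1|) ''
        {w : ((↑B : Set G)ᶜ : Set G) | V w.1 ∈ Set.Icc 0 (r m)}).Finite := by
      refine Set.Finite.image _ ?_
      have he : {w : ((↑B : Set G)ᶜ : Set G) | V w.1 ∈ Set.Icc 0 (r m)}
          = Subtype.val ⁻¹' {x : G | V x ∈ Set.Icc 0 (r m)} := rfl
      rw [he]
      exact Set.Finite.preimage Subtype.val_injective.injOn
        ((hfin_le (r m)).subset fun x hx => hx.2)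
    have hgM : |g (φ z).1| ≤ sSup ((fun z => |g z|) '' {z : G | V z ∈ Set.Icc 0 (r m)}) :=
      le_csSup hfin1.bddAbove ⟨(φ z).1, hφel, rfl⟩
    have hbig : |V (φ z).1 + g (φ z).1 - V z.1| ≤
        sSup ((fun w : ((↑B : Set G)ᶜ : Set G) => |V (φ w).1 + g (φ w).1 - V w.1|) ''
          {w : ((↑B : Set G)ᶜ : Set G) | V w.1 ∈ Set.Icc 0 (r m)}) :=
      le_csSup hfin2.bddAbove ⟨z, hzel, rfl⟩
    have h1 : r m - r (m - 1) -
        sSup ((fun z => |g z|) '' {z : G | V z ∈ Set.Icc 0 (r m)}) ≤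
        sSup ((fun w : ((↑B : Set G)ᶜ : Set G) => |V (φ w).1 + g (φ w).1 - V w.1|) ''
          {w : ((↑B : Set G)ᶜ : Set G) | V w.1 ∈ Set.Icc 0 (r m)}) := by linarith
    have h3 : (r m - r (m - 1))⁻¹ * (r m - r (m - 1)) = 1 := inv_mul_cancel₀ hΔ.ne'
    have h4 := mul_le_mul_of_nonneg_left h1 (inv_nonneg.2 hΔ.le)
    rw [mul_sub, h3] at h4
    linarith
  -- frequently 1 - a m ≤ b m
  have hfreq : ∃ᶠ m in atTop, (1 : ℝ) - a m ≤ b m := by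
    rw [frequently_atTop]
    intro N
    obtain ⟨n, hnN, z, hz⟩ := hcross N
    rcases hz with ⟨hz1, hz2⟩ | ⟨hz1, hz2⟩
    · -- upward escape: V (φ z) > r n
      have hv : V (φ z).1 ∈ Set.range r := by
        rw [hrange]
        exact ⟨⟨(φ z).1, rfl⟩, (hr0 n).trans hz2.le⟩
      obtain ⟨m, hm⟩ := hv
      have hnm : n < m := hr.lt_iff_lt.1 (by rw [hm]; exact hz2)
      have hΔ : 0 < r m - r (m - 1) := sub_pos.2 (hr (by omega))
      have hzel : V z.1 ∈ Set.Icc 0 (r m) := ⟨hz1.1, hz1.2.trans (hr hnm).le⟩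
      have hφel : V (φ z).1 ∈ Set.Icc 0 (r m) := ⟨(hr0 n).trans hz2.le, by rw [← hm]⟩
      have h5 : V z.1 ≤ r (m - 1) := hz1.2.trans (hr.monotone (by omega))
      have hmis : r m - r (m - 1) - |g (φ z).1| ≤ |V (φ z).1 + g (φ z).1 - V z.1| := by
        have h6 : r m ≤ V (φ z).1 := hm.le
        have h7 := neg_abs_le (g (φ z).1)
        calc r m - r (m - 1) - |g (φ z).1| ≤ V (φ z).1 + g (φ z).1 - V z.1 := by linarith
          _ ≤ |V (φ z).1 + g (φ z).1 - V z.1| := le_abs_self _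
      exact ⟨m, by omega, key m z hΔ hzel hφel hmis⟩
    · -- inward jump from above: V z > r n
      have hv : V z.1 ∈ Set.range r := by
        rw [hrange]
        exact ⟨⟨z.1, rfl⟩, (hr0 n).trans hz1.le⟩
      obtain ⟨m, hm⟩ := hv
      have hnm : n < m := hr.lt_iff_lt.1 (by rw [hm]; exact hz1)
      have hΔ : 0 < r m - r (m - 1) := sub_pos.2 (hr (by omega))
      have hzel : V z.1 ∈ Set.Icc 0 (r m) := ⟨(hr0 n).trans hz1.le, by rw [← hm]⟩
      have hφel : V (φ z).1 ∈ Set.Icc 0 (r m) := ⟨hz2.1, hz2.2.trans (hr hnm).le⟩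
      have h5 : V (φ z).1 ≤ r (m - 1) := hz2.2.trans (hr.monotone (by omega))
      have hmis : r m - r (m - 1) - |g (φ z).1| ≤ |V (φ z).1 + g (φ z).1 - V z.1| := by
        have h6 : r m ≤ V z.1 := hm.le
        have h7 := le_abs_self (g (φ z).1)
        calc r m - r (m - 1) - |g (φ z).1| ≤ -(V (φ z).1 + g (φ z).1 - V z.1) := by linarith
          _ ≤ |V (φ z).1 + g (φ z).1 - V z.1| := neg_le_abs _
      exact ⟨m, by omega, key m z hΔ hzel hφel hmis⟩
  -- limsup bookkeeping
  set A : ℕ → EReal := fun n : ℕ =>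
    (((r n - r (n - 1))⁻¹ *
      sSup ((fun z => |g z|) '' {z : G | V z ∈ Set.Icc 0 (r n)}) : ℝ) : EReal) with hAdef
  set Bf : ℕ → EReal := fun n : ℕ =>
    (((r n - r (n - 1))⁻¹ *
      sSup ((fun w : ((↑B : Set G)ᶜ : Set G) => |V (φ w).1 + g (φ w).1 - V w.1|) ''
        {w : ((↑B : Set G)ᶜ : Set G) | V w.1 ∈ Set.Icc 0 (r n)}) : ℝ) : EReal) with hBdef
  have hAa : ∀ n, A n = ((a n : ℝ) : EReal) := fun n => rfl
  have hBb : ∀ n, Bf n = ((b n : ℝ) : EReal) := fun n => rfl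
  by_cases htop : Filter.limsup A Filter.atTop = ⊤
  · rw [htop, EReal.sub_top]
    exact bot_le
  have hge0 : (0 : EReal) ≤ Filter.limsup A Filter.atTop := by
    apply Filter.le_limsup_of_frequently_le'
    apply Filter.Eventually.frequently
    filter_upwards with n
    rw [hAa n]
    exact EReal.coe_nonneg.2 (ha_nonneg n)
  have hbot : Filter.limsup A Filter.atTop ≠ ⊥ := by
    intro h
    rw [h] at hge0
    exact absurd hge0 (by simp)
  obtain ⟨β₀, hβ₀⟩ : ∃ x : ℝ, Filter.limsup A Filter.atTop = (x : EReal) :=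
    ⟨_, (EReal.coe_toReal htop hbot).symm⟩
  rw [hβ₀]
  by_contra hcon
  push_neg at hcon
  rw [show (1 : EReal) - (β₀ : EReal) = ((1 - β₀ : ℝ) : EReal) by
    rw [EReal.coe_sub, EReal.coe_one]] at hcon
  obtain ⟨c, hc1, hc2⟩ := EReal.lt_iff_exists_real_btwn.1 hcon
  have hβc : Filter.limsup A Filter.atTop < ((1 - c : ℝ) : EReal) := by
    rw [hβ₀]
    exact EReal.coe_lt_coe_iff.2 (by have := EReal.coe_lt_coe_iff.1 hc2; linarith)
  have hev : ∀ᶠ n in atTop, A n < ((1 - c : ℝ) : EReal) :=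
    Filter.eventually_lt_of_limsup_lt hβc
  have hfr : ∃ᶠ m in atTop, (c : EReal) ≤ Bf m := by
    refine (hfreq.and_eventually hev).mono ?_
    rintro m ⟨h1, h2⟩
    rw [hAa m] at h2
    have h2' : a m < 1 - c := EReal.coe_lt_coe_iff.1 h2
    rw [hBb m]
    exact EReal.coe_le_coe_iff.2 (by linarith)
  exact absurd (Filter.le_limsup_of_frequently_le' hfr) (not_le.2 hc1)
end

section
/- Let G be a countably infinite set and let V : G → ℝ be bounded below and satisfy: (a) the image of V has no accumulation point in ℝ, and (b) every level set {z ∈ G : V(z) = x} is finite; enumerate the nonnegative values of V as 0 ≤ r_0 < r_1 < r_2 < ⋯ (an infinite list). Let g : G → ℝ satisfy limsup_{n→∞} (r_n − r_{n−1})^{-1} · max{ |g_z| : z ∈ G, V(z) ∈ [0, r_n] } = 0. Then for all finite S, T ⊆ G with |S| < |T|, one has f_{|S|}(Π_S) = 0 and f_{|S|}(Π_T) ≥ 1. -/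
open MeasureTheory Filter Set

/-!
The identity matching of `G∖S` with itself costs at most the noise, so `f_{|S|}(Π_S) = 0`.
Conversely, if `φ` matched `G∖B` to `G∖T` with normalized cost below `c < 1`, then, once the noise
is below `1 - c` in the same normalization, no point `z` with `V z ≤ r_n` can be sent above `r_n`:
being sent to a level `r_j > r_n` costs at least the gap `r_j - r_{j-1}`, minus the noise at the
target. Since only finitely many points have `V < 0`, for large `n` the bijection `φ` maps the
finite set `{V ≤ r_n} ∖ B` injectively into `{V ≤ r_n} ∖ T`, which is impossible when `|B| < |T|`.
-/

/-- The functional `f_k(Π_U)`: the infimum, over finite `B ⊆ G` with `|B| = k` and bijections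
`φ : G∖B → G∖U` (encoding a bijective matching of `G∖B` with the labelled configuration
`Π_U = {V(w) + g_w : w ∈ G∖U}`), of
`limsup_n (r_n − r_{n−1})⁻¹ · max{ |V(φ(z)) + g_{φ(z)} − V(z)| : z ∈ G∖B, V(z) ∈ [0, r_n] }`,
computed in the extended reals. -/
noncomputable def fk {G : Type*} (V : G → ℝ) (g : G → ℝ) (r : ℕ → ℝ) (k : ℕ)
    (U : Finset G) : EReal :=
  ⨅ (B : {B : Finset G // B.card = k})
    (φ : ((↑(B : Finset G) : Set G)ᶜ : Set G) ≃ ((↑U : Set G)ᶜ : Set G)),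
    Filter.limsup (fun n : ℕ =>
      (((r n - r (n - 1))⁻¹ *
        sSup ((fun w : ((↑(B : Finset G) : Set G)ᶜ : Set G) =>
          |V (φ w).1 + g (φ w).1 - V w.1|) ''
            {w : ((↑(B : Finset G) : Set G)ᶜ : Set G) | V w.1 ∈ Set.Icc 0 (r n)}) : ℝ) : EReal))
      Filter.atTop

lemma lt_mul_of_inv_mul_sSup_image_lt {α : Type*} {f : α → ℝ} {s : Set α} (hs : s.Finite)
    {d c : ℝ} (hd : 0 < d) (h : d⁻¹ * sSup (f '' s) < c) {x : α} (hx : x ∈ s) :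
    f x < d * c :=
  calc f x ≤ sSup (f '' s) := le_csSup (hs.image f).bddAbove (mem_image_of_mem f hx)
    _ < d * c := (inv_mul_lt_iff₀ hd).1 h

lemma finite_setOf_le_of_not_accPt {G : Type*} {V : G → ℝ} (hbdd : BddBelow (range V))
    (hacc : ∀ x : ℝ, ¬ AccPt x (𝓟 (range V))) (hlevel : ∀ x : ℝ, {z : G | V z = x}.Finite)
    (R : ℝ) : {z : G | V z ≤ R}.Finite := by
  obtain ⟨m, hm⟩ := hbdd
  have hvalues : (range V ∩ Iic R).Finite := by
    rw [← not_infinite]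
    intro h
    obtain ⟨x, -, hx⟩ :=
      h.exists_accPt_of_subset_isCompact (isCompact_Icc (a := m) (b := R))
        fun x hx => ⟨hm hx.1, hx.2⟩
    exact hacc x (hx.mono (principal_mono.2 inter_subset_left))
  exact (hvalues.biUnion fun x _ => hlevel x).subset
    fun z hz => mem_biUnion ⟨mem_range_self z, hz⟩ rfl

lemma tendsto_atTop_of_range_subset {G : Type*} {V : G → ℝ}
    (hfin : ∀ R : ℝ, {z : G | V z ≤ R}.Finite) {r : ℕ → ℝ} (hr : StrictMono r)
    (hrV : range r ⊆ range V) : Tendsto r atTop atTop := by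
  refine hr.monotone.tendsto_atTop_atTop fun b => ?_
  by_contra! h
  refine infinite_range_of_injective hr.injective (((hfin b).image V).subset ?_)
  rintro _ ⟨n, rfl⟩
  obtain ⟨z, hz⟩ := hrV (mem_range_self n)
  exact ⟨z, show V z ≤ b from hz ▸ (h n).le, hz⟩

lemma card_le_card_of_equiv_compl {G : Type*} {B T L : Finset G}
    (φ : ((↑B : Set G)ᶜ : Set G) ≃ ((↑T : Set G)ᶜ : Set G)) (hB : B ⊆ L) (hT : T ⊆ L)
    (hL : ∀ z : ((↑B : Set G)ᶜ : Set G), z.1 ∈ L → (φ z).1 ∈ L) : T.card ≤ B.card := by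
  classical
  let ψ : G → G := fun z => if h : z ∈ ((↑B : Set G)ᶜ : Set G) then (φ ⟨z, h⟩).1 else z
  have hψ : ∀ z (h : z ∈ L \ B), ψ z = (φ ⟨z, (Finset.mem_sdiff.1 h).2⟩).1 :=
    fun z h => dif_pos (Finset.mem_sdiff.1 h).2
  have hcard : (L \ B).card ≤ (L \ T).card := by
    refine Finset.card_le_card_of_injOn ψ (fun z hz => ?_) (fun a ha b hb hab => ?_)
    · rw [Finset.mem_coe, hψ z hz]
      exact Finset.mem_sdiff.2 ⟨hL _ (Finset.mem_sdiff.1 hz).1, (φ _).2⟩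
    · rw [hψ a ha, hψ b hb] at hab
      exact congrArg Subtype.val (φ.injective (Subtype.ext hab))
  rw [Finset.card_sdiff_of_subset hB, Finset.card_sdiff_of_subset hT] at hcard
  have := Finset.card_le_card hT
  omega

section Matching

variable {G : Type*} {V g : G → ℝ} {r : ℕ → ℝ} {B U : Finset G}

noncomputable def matchingCost (V g : G → ℝ) (r : ℕ → ℝ)
    (φ : ((↑B : Set G)ᶜ : Set G) ≃ ((↑U : Set G)ᶜ : Set G)) (n : ℕ) : ℝ :=
  (r n - r (n - 1))⁻¹ *
    sSup ((fun w : ((↑B : Set G)ᶜ : Set G) => |V (φ w).1 + g (φ w).1 - V w.1|) ''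
      {w : ((↑B : Set G)ᶜ : Set G) | V w.1 ∈ Icc 0 (r n)})

noncomputable def noiseLevel (V g : G → ℝ) (r : ℕ → ℝ) (n : ℕ) : ℝ :=
  (r n - r (n - 1))⁻¹ * sSup ((fun z => |g z|) '' {z : G | V z ∈ Icc 0 (r n)})

lemma fk_eq_iInf_limsup_matchingCost (k : ℕ) (U : Finset G) :
    fk V g r k U = ⨅ (B : {B : Finset G // B.card = k})
      (φ : ((↑(B : Finset G) : Set G)ᶜ : Set G) ≃ ((↑U : Set G)ᶜ : Set G)),
      limsup (fun n => (matchingCost V g r φ n : EReal)) atTop :=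
  rfl

lemma matchingCost_nonneg (hr : Monotone r)
    (φ : ((↑B : Set G)ᶜ : Set G) ≃ ((↑U : Set G)ᶜ : Set G)) (n : ℕ) :
    0 ≤ matchingCost V g r φ n :=
  mul_nonneg (inv_nonneg.2 (sub_nonneg.2 (hr (Nat.sub_le n 1))))
    (Real.sSup_nonneg (by rintro _ ⟨w, -, rfl⟩; exact abs_nonneg _))

lemma matchingCost_refl_le_noiseLevel (hfin : ∀ R : ℝ, {z : G | V z ≤ R}.Finite)
    (hr : Monotone r) (n : ℕ) :
    matchingCost V g r (Equiv.refl ((↑B : Set G)ᶜ : Set G)) n ≤ noiseLevel V g r n := by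
  refine mul_le_mul_of_nonneg_left ?_ (inv_nonneg.2 (sub_nonneg.2 (hr (Nat.sub_le n 1))))
  refine Real.sSup_le ?_ (Real.sSup_nonneg (by rintro _ ⟨z, -, rfl⟩; exact abs_nonneg _))
  rintro _ ⟨w, hw, rfl⟩
  simpa using le_csSup (((hfin (r n)).subset fun z hz => hz.2).image _).bddAbove
    (mem_image_of_mem (fun z => |g z|) hw)

lemma le_of_matchingCost_lt (hfin : ∀ R : ℝ, {z : G | V z ≤ R}.Finite) (hr : StrictMono r)
    (hrange : {x : ℝ | x ∈ range V ∧ 0 ≤ x} ⊆ range r)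
    {φ : ((↑B : Set G)ᶜ : Set G) ≃ ((↑U : Set G)ᶜ : Set G)} {c ε : ℝ} (hcε : c + ε ≤ 1)
    {n₀ : ℕ} (hcost : ∀ j ≥ n₀, matchingCost V g r φ j < c)
    (hnoise : ∀ j ≥ n₀, noiseLevel V g r j < ε)
    {n : ℕ} (hn : n₀ ≤ n) (z : ((↑B : Set G)ᶜ : Set G)) (hz : V z ∈ Icc 0 (r n)) :
    V (φ z) ≤ r n := by
  by_contra! hgt
  obtain ⟨j, hj⟩ := hrange ⟨mem_range_self _, hz.1.trans (hz.2.trans hgt.le)⟩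
  have hnj : n < j := hr.lt_iff_lt.1 (hj ▸ hgt)
  have hgap : 0 < r j - r (j - 1) := sub_pos.2 (hr (by omega))
  have hzj : V z ≤ r (j - 1) := hz.2.trans (hr.monotone (by omega))
  have hdisp : |V (φ z) + g (φ z) - V z| < (r j - r (j - 1)) * c :=
    lt_mul_of_inv_mul_sSup_image_lt (((hfin (r j)).preimage Subtype.val_injective.injOn).subset
      fun w hw => hw.2) hgap (hcost j (by omega)) (⟨hz.1, hz.2.trans (hr.monotone hnj.le)⟩ :
        V z ∈ Icc 0 (r j))
  have hg : |g (φ z)| < (r j - r (j - 1)) * ε :=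
    lt_mul_of_inv_mul_sSup_image_lt ((hfin (r j)).subset fun w hw => hw.2) hgap
      (hnoise j (by omega)) (⟨hz.1.trans (hz.2.trans hgt.le), hj.ge⟩ : V (φ z) ∈ Icc 0 (r j))
  have hsum : (r j - r (j - 1)) * c + (r j - r (j - 1)) * ε ≤ r j - r (j - 1) := by
    simpa [mul_add] using mul_le_mul_of_nonneg_left hcε hgap.le
  linarith [(abs_lt.1 hdisp).2, (abs_lt.1 hg).1]

lemma one_le_limsup_matchingCost (hfin : ∀ R : ℝ, {z : G | V z ≤ R}.Finite) (hr : StrictMono r)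
    (hrange : range r = {x : ℝ | x ∈ range V ∧ 0 ≤ x})
    (hnoise : limsup (fun n => (noiseLevel V g r n : EReal)) atTop = 0)
    {T : Finset G} (hBT : B.card < T.card)
    (φ : ((↑B : Set G)ᶜ : Set G) ≃ ((↑T : Set G)ᶜ : Set G)) :
    1 ≤ limsup (fun n => (matchingCost V g r φ n : EReal)) atTop := by
  classical
  by_contra! hlt
  obtain ⟨c, hlc, hc1⟩ := EReal.lt_iff_exists_real_btwn.1 hlt
  have hε : limsup (fun n => (noiseLevel V g r n : EReal)) atTop < ((1 - c : ℝ) : EReal) := by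
    rw [hnoise]; exact_mod_cast sub_pos.2 (EReal.coe_lt_coe_iff.1 hc1)
  obtain ⟨n₀, hn₀⟩ := eventually_atTop.1
    ((eventually_lt_of_limsup_lt hlc).and (eventually_lt_of_limsup_lt hε))
  have hnojump : ∀ n ≥ n₀, ∀ z : ((↑B : Set G)ᶜ : Set G), V z ∈ Icc 0 (r n) →
      V (φ z) ≤ r n := fun n hn z hz =>
    le_of_matchingCost_lt hfin hr hrange.ge (c := c) (ε := 1 - c) (by linarith)
      (fun j hj => EReal.coe_lt_coe_iff.1 (hn₀ j hj).1)
      (fun j hj => EReal.coe_lt_coe_iff.1 (hn₀ j hj).2) hn z hz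
  have htop := tendsto_atTop_of_range_subset hfin hr (hrange.le.trans fun _ hx => hx.1)
  have hneg : {z : ((↑B : Set G)ᶜ : Set G) | V z < 0}.Finite :=
    ((hfin 0).preimage Subtype.val_injective.injOn).subset fun _ hz => (show V _ < 0 from hz).le
  obtain ⟨n, hn, hBT_le, hneg_le⟩ := ((eventually_ge_atTop n₀).and <|
    (((B ∪ T).eventually_all).2 fun b _ => htop.eventually_ge_atTop (V b)).and <|
    (eventually_all_finite hneg).2 fun z _ => htop.eventually_ge_atTop (V (φ z))).exists
  refine hBT.not_ge (card_le_card_of_equiv_compl φ (L := (hfin (r n)).toFinset)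
    (fun b hb => ?_) (fun b hb => ?_) fun z hz => ?_)
  · simpa using hBT_le b (Finset.mem_union_left T hb)
  · simpa using hBT_le b (Finset.mem_union_right B hb)
  · rw [Finite.mem_toFinset] at hz ⊢
    rcases lt_or_ge (V z) 0 with hz0 | hz0
    · exact hneg_le z hz0
    · exact hnojump n hn z ⟨hz0, hz⟩

end Matching

theorem fk_distinguishes_deletions_general
    {G : Type*}
    (V : G → ℝ) (hbdd : BddBelow (Set.range V))
    (hacc : ∀ x : ℝ, ¬ AccPt x (Filter.principal (Set.range V)))
    (hlevel : ∀ x : ℝ, {z : G | V z = x}.Finite)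
    (r : ℕ → ℝ) (hr : StrictMono r)
    (hrange : Set.range r = {x : ℝ | x ∈ Set.range V ∧ 0 ≤ x})
    (g : G → ℝ)
    (hnoise : Filter.limsup (fun n : ℕ =>
        (((r n - r (n - 1))⁻¹ *
          sSup ((fun z => |g z|) '' {z : G | V z ∈ Set.Icc 0 (r n)}) : ℝ) : EReal))
        Filter.atTop = 0) :
    ∀ S T : Finset G, S.card < T.card →
      fk V g r S.card S = 0 ∧ 1 ≤ fk V g r S.card T := by
  have hfin := finite_setOf_le_of_not_accPt hbdd hacc hlevel
  intro S T hST
  simp only [fk_eq_iInf_limsup_matchingCost]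
  refine ⟨le_antisymm ?_ ?_, ?_⟩
  · refine iInf₂_le_of_le ⟨S, rfl⟩ (Equiv.refl _) (hnoise ▸ limsup_le_limsup ?_)
    exact Eventually.of_forall fun n =>
      EReal.coe_le_coe_iff.2 (matchingCost_refl_le_noiseLevel hfin hr.monotone n)
  · refine le_iInf₂ fun B φ => le_trans (limsup_const 0).ge (limsup_le_limsup ?_)
    exact Eventually.of_forall fun n => EReal.coe_nonneg.2 (matchingCost_nonneg hr.monotone φ n)
  · exact le_iInf₂ fun B φ =>
      one_le_limsup_matchingCost hfin hr hrange hnoise (by rw [B.2]; exact hST) φ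

/-- If `V` is bounded below with no accumulation point in its image and finite level sets,
nonnegative values enumerated `0 ≤ r_0 < r_1 < ⋯`, and the noise satisfies
`limsup_n (r_n − r_{n−1})⁻¹ · max{|g_z| : V(z) ∈ [0, r_n]} = 0`, then for all finite `S`, `T`
with `|S| < |T|` one has `f_{|S|}(Π_S) = 0` and `f_{|S|}(Π_T) ≥ 1`. -/
theorem fk_distinguishes_deletions
    {G : Type*} [Countable G] [Infinite G]
    (V : G → ℝ) (hbdd : BddBelow (Set.range V))
    (hacc : ∀ x : ℝ, ¬ AccPt x (Filter.principal (Set.range V)))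
    (hlevel : ∀ x : ℝ, {z : G | V z = x}.Finite)
    (r : ℕ → ℝ) (hr : StrictMono r)
    (hrange : Set.range r = {x : ℝ | x ∈ Set.range V ∧ 0 ≤ x})
    (g : G → ℝ)
    (hnoise : Filter.limsup (fun n : ℕ =>
        (((r n - r (n - 1))⁻¹ *
          sSup ((fun z => |g z|) '' {z : G | V z ∈ Set.Icc 0 (r n)}) : ℝ) : EReal))
        Filter.atTop = 0) :
    ∀ S T : Finset G, S.card < T.card →
      fk V g r S.card S = 0 ∧ 1 ≤ fk V g r S.card T :=
  fk_distinguishes_deletions_general V hbdd hacc hlevel r hr hrange g hnoise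
end

section
/- Let G be a set, let B, T ⊆ G be finite subsets with |B| < |T|, and let φ : G∖B → G∖T be a bijection. Then there exists an injective sequence u : ℕ → G such that u(0) ∈ T∖B, u(n) ∉ B for every n ≥ 0, u(n) ∉ T for every n ≥ 1, and u(n+1) = φ(u(n)) for every n ≥ 0. -/
open Set

/-- **Infinite chain of mismatches**: if `B`, `T` are finite subsets of `G` with `|B| < |T|`
and `φ : G∖B → G∖T` is a bijection, then there is an injective sequence `u : ℕ → G` with
`u 0 ∈ T∖B`, `u n ∉ B` for all `n`, `u n ∉ T` for all `n ≥ 1`, and `u (n+1) = φ (u n)`. -/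
theorem exists_infinite_mismatch_chain
    {G : Type*} (B T : Finset G) (hBT : B.card < T.card)
    (φ : ((↑B : Set G)ᶜ : Set G) ≃ ((↑T : Set G)ᶜ : Set G)) :
    ∃ u : ℕ → G, Function.Injective u ∧
      u 0 ∈ (↑T : Set G) \ (↑B : Set G) ∧
      (∀ n : ℕ, u n ∉ (↑B : Set G)) ∧
      (∀ n : ℕ, 1 ≤ n → u n ∉ (↑T : Set G)) ∧
      (∀ n : ℕ, ∀ h : u n ∈ ((↑B : Set G)ᶜ : Set G), u (n + 1) = (φ ⟨u n, h⟩ : G)) := by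
  classical
  set F : G → G := fun x => if h : x ∈ ((↑B : Set G)ᶜ : Set G) then (φ ⟨x, h⟩ : G) else x
    with hFdef
  have hFeq : ∀ x (h : x ∈ ((↑B : Set G)ᶜ : Set G)), F x = (φ ⟨x, h⟩ : G) := by
    intro x h; simp only [hFdef, dif_pos h]
  have hF1 : ∀ x, x ∉ (↑B : Set G) → F x ∉ (↑T : Set G) := by
    intro x h
    rw [hFeq x h]
    exact (φ ⟨x, h⟩).2
  have hFinj : ∀ x y, x ∉ (↑B : Set G) → y ∉ (↑B : Set G) → F x = F y → x = y := by
    intro x y hx hy hxy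
    rw [hFeq x hx, hFeq y hy] at hxy
    exact congrArg Subtype.val (φ.injective (Subtype.ext hxy))
  have cancel : ∀ n m x y, n ≤ m → (∀ i < n, F^[i] x ∉ (↑B : Set G)) →
      (∀ i < m, F^[i] y ∉ (↑B : Set G)) → F^[n] x = F^[m] y → x = F^[m - n] y := by
    intro n
    induction n with
    | zero => intro m x y _ _ _ h; simpa using h
    | succ n ih =>
      intro m x y hnm hx hy h
      obtain ⟨m, rfl⟩ : ∃ m', m = m' + 1 := ⟨m - 1, by omega⟩
      rw [Function.iterate_succ_apply', Function.iterate_succ_apply'] at h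
      have h1 := hFinj _ _ (hx n (Nat.lt_succ_self n)) (hy m (Nat.lt_succ_self m)) h
      have := ih m x y (by omega) (fun i hi => hx i (by omega)) (fun i hi => hy i (by omega)) h1
      simpa [Nat.succ_sub_succ] using this
  have key : ∃ x₀ ∈ (↑T : Set G) \ (↑B : Set G), ∀ n, F^[n] x₀ ∉ (↑B : Set G) := by
    by_contra hcon
    push_neg at hcon
    set N : G → ℕ := fun x => if h : ∃ n, F^[n] x ∈ (↑B : Set G) then Nat.find h else 0
      with hNdef
    have hNspec : ∀ x, x ∈ (↑T : Set G) \ (↑B : Set G) →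
        F^[N x] x ∈ (↑B : Set G) ∧ (∀ i < N x, F^[i] x ∉ (↑B : Set G)) ∧ 1 ≤ N x := by
      intro x hx
      obtain ⟨n, hn⟩ := hcon x hx
      have hex : ∃ n, F^[n] x ∈ (↑B : Set G) := ⟨n, hn⟩
      have hN : N x = Nat.find hex := dif_pos hex
      refine ⟨?_, ?_, ?_⟩
      · rw [hN]; exact Nat.find_spec hex
      · intro i hi; rw [hN] at hi; exact Nat.find_min hex hi
      rw [hN]
      rcases Nat.eq_zero_or_pos (Nat.find hex) with h0 | h0
      · exfalso
        have := Nat.find_spec hex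
        rw [h0] at this
        exact hx.2 this
      · exact h0
    have hmemTB : ∀ x ∈ T \ B, x ∈ (↑T : Set G) \ (↑B : Set G) := by
      intro x hx
      rcases Finset.mem_sdiff.mp hx with ⟨h1, h2⟩
      exact ⟨h1, h2⟩
    have hmaps : ∀ x ∈ T \ B, F^[N x] x ∈ B \ T := by
      intro x hx
      obtain ⟨hB, hmin, hN1⟩ := hNspec x (hmemTB x hx)
      refine Finset.mem_sdiff.mpr ⟨hB, ?_⟩
      obtain ⟨k, hk⟩ : ∃ k, N x = k + 1 := ⟨N x - 1, by omega⟩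
      rw [hk, Function.iterate_succ_apply']
      exact fun hT => hF1 _ (hmin k (by omega)) hT
    have hinj : Set.InjOn (fun x => F^[N x] x) (T \ B : Finset G) := by
      intro x hx y hy hxy
      obtain ⟨hBx, hminx, hN1x⟩ := hNspec x (hmemTB x hx)
      obtain ⟨hBy, hminy, hN1y⟩ := hNspec y (hmemTB y hy)
      have main : ∀ a b : G, a ∈ (↑T : Set G) \ (↑B : Set G) →
          b ∈ (↑T : Set G) \ (↑B : Set G) → N a ≤ N b →
          (∀ i < N a, F^[i] a ∉ (↑B : Set G)) → (∀ i < N b, F^[i] b ∉ (↑B : Set G)) →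
          F^[N a] a = F^[N b] b → 1 ≤ N b → a = b := by
        intro a b ha hb hab hma hmb heq hN1b
        have hc := cancel (N a) (N b) a b hab hma hmb heq
        rcases Nat.eq_zero_or_pos (N b - N a) with h0 | h0
        · have : N a = N b := by omega
          rw [h0] at hc
          simpa using hc
        · exfalso
          obtain ⟨k, hk⟩ : ∃ k, N b - N a = k + 1 := ⟨N b - N a - 1, by omega⟩
          rw [hk, Function.iterate_succ_apply'] at hc
          have hkB : F^[k] b ∉ (↑B : Set G) := hmb k (by omega)
          exact hF1 _ hkB (hc ▸ ha.1)
      rcases le_total (N x) (N y) with hle | hle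
      · exact main x y (hmemTB x hx) (hmemTB y hy) hle hminx hminy hxy hN1y
      · exact (main y x (hmemTB y hy) (hmemTB x hx) hle hminy hminx hxy.symm hN1x).symm
    have hcard : (T \ B).card ≤ (B \ T).card :=
      Finset.card_le_card_of_injOn _ (fun x hx => hmaps x hx) hinj
    have h1 : (T \ B).card + (T ∩ B).card = T.card := Finset.card_sdiff_add_card_inter T B
    have h2 : (B \ T).card + (B ∩ T).card = B.card := Finset.card_sdiff_add_card_inter B T
    rw [Finset.inter_comm] at h2
    omega
  obtain ⟨x₀, hx₀, hgood⟩ := key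
  refine ⟨fun n => F^[n] x₀, ?_, by simpa using hx₀, hgood, ?_, ?_⟩
  · intro a b hab
    have main : ∀ a b : ℕ, a ≤ b → F^[a] x₀ = F^[b] x₀ → a = b := by
      intro a b hle heq
      have hc := cancel a b x₀ x₀ hle (fun i _ => hgood i) (fun i _ => hgood i) heq
      rcases Nat.eq_zero_or_pos (b - a) with h0 | h0
      · omega
      · exfalso
        obtain ⟨k, hk⟩ : ∃ k, b - a = k + 1 := ⟨b - a - 1, by omega⟩
        rw [hk, Function.iterate_succ_apply'] at hc
        exact hF1 _ (hgood k) (hc ▸ hx₀.1)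
    rcases le_total a b with h | h
    · exact main a b h hab
    · exact (main b a h hab.symm).symm
  · intro n hn
    obtain ⟨k, rfl⟩ : ∃ k, n = k + 1 := ⟨n - 1, by omega⟩
    show F^[k + 1] x₀ ∉ (↑T : Set G)
    rw [Function.iterate_succ_apply']
    exact hF1 _ (hgood k)
  · intro n h
    show F^[n + 1] x₀ = _
    rw [Function.iterate_succ_apply']
    exact hFeq _ h
end

section
/- Let d ≥ 1, σ > 0 and α > 1, let (Ω, P) be a probability space, and let (g_z)_{z∈ℤ^d} be measurable real random variables such that each g_z has the Gaussian distribution N(0, σ²) (no assumption is made on their joint distribution). Then almost surely, (n^α − (n−1)^α)^{-1} · max{ |g_z| : z ∈ ℤ^d, ‖z‖ ≤ n } → 0 as n → ∞, where ‖·‖ is the ℓ∞ norm. -/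
/-!
By the Chernoff bound with the Gaussian moment generating function, `P(|g_z| ≥ t) ≤ C e^{-t}`
for every `z`. Since `n^α − (n−1)^α ≥ n^{α−1}`, a union bound over the `(2n+1)^d` points of the
box shows that `max_{‖z‖ ≤ n} |g_z| > ε n^{α−1}` has probability at most
`(2n+1)^d C e^{-ε n^{α−1}}`, which is summable; Borel–Cantelli, applied to `ε = 1/(k+1)` for all
`k`, concludes. No independence is needed because only the union bound is used.
-/

open MeasureTheory ProbabilityTheory Filter Set Real Asymptotics Finset Topology

lemma measureReal_abs_ge_le_of_map_eq_gaussianReal {Ω : Type*} [MeasurableSpace Ω]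
    {P : Measure Ω} [IsProbabilityMeasure P] {X : Ω → ℝ} {m : ℝ} {v : NNReal}
    (hX : P.map X = gaussianReal m v) (t : ℝ) :
    P.real {ω | t ≤ |X ω|} ≤ 2 * cosh m * exp (v / 2) * exp (-t) := by
  have hint : ∀ s, Integrable (fun ω ↦ exp (s * X ω)) P := fun s ↦ by
    rw [← mgf_pos_iff, mgf_gaussianReal hX]
    exact exp_pos _
  have hright := measure_ge_le_exp_mul_mgf t zero_le_one (hint 1)
  have hleft := measure_le_le_exp_mul_mgf (-t) (by norm_num : (-1 : ℝ) ≤ 0) (hint (-1))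
  rw [mgf_gaussianReal hX] at hright hleft
  have hsub : {ω | t ≤ |X ω|} ⊆ {ω | t ≤ X ω} ∪ {ω | X ω ≤ -t} := fun ω hω ↦ by
    rcases le_abs'.mp (show t ≤ |X ω| from hω) with h | h
    · exact Or.inr (by simpa [le_neg] using h)
    · exact Or.inl h
  calc P.real {ω | t ≤ |X ω|} ≤ P.real {ω | t ≤ X ω} + P.real {ω | X ω ≤ -t} :=
        (measureReal_mono hsub).trans (measureReal_union_le _ _)
    _ ≤ exp (-1 * t) * exp (m * 1 + v * 1 ^ 2 / 2)
          + exp (- -1 * -t) * exp (m * -1 + v * (-1) ^ 2 / 2) := add_le_add hright hleft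
    _ = 2 * cosh m * exp (v / 2) * exp (-t) := by
        rw [cosh_eq]
        ring_nf
        simp only [exp_add]
        ring

lemma summable_mul_exp_neg_mul_rpow {a : ℕ → ℝ} {s ε β : ℝ}
    (ha : a =O[atTop] fun n ↦ (n : ℝ) ^ s) (hε : 0 < ε) (hβ : 0 < β) :
    Summable fun n : ℕ ↦ a n * exp (-ε * (n : ℝ) ^ β) := by
  refine summable_of_isBigO_nat (summable_nat_rpow.2 (by norm_num : (-2 : ℝ) < -1)) ?_
  have he := ((isLittleO_exp_neg_mul_rpow_atTop hε ((-s - 2) / β)).comp_tendsto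
    ((tendsto_rpow_atTop hβ).comp tendsto_natCast_atTop_atTop)).isBigO
  refine (ha.mul he).congr' EventuallyEq.rfl ?_
  filter_upwards [eventually_gt_atTop 0] with n hn
  have hn : (0 : ℝ) < n := Nat.cast_pos.2 hn
  rw [Function.comp_apply, Function.comp_apply, ← rpow_mul hn.le, mul_div_cancel₀ _ hβ.ne',
    ← rpow_add hn]
  ring_nf

section BorelCantelli

variable {Ω : Type*} [MeasurableSpace Ω] {P : Measure Ω} [IsFiniteMeasure P]

lemma ae_eventually_notMem_of_summable_measureReal {E : ℕ → Set Ω}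
    (hE : Summable fun n ↦ P.real (E n)) : ∀ᵐ ω ∂P, ∀ᶠ n in atTop, ω ∉ E n := by
  refine ae_eventually_notMem ?_
  have hofReal : ∀ n, P (E n) = ENNReal.ofReal (P.real (E n)) := fun _ ↦ (ofReal_measureReal).symm
  simp_rw [hofReal, ← ENNReal.ofReal_tsum_of_nonneg (fun _ ↦ measureReal_nonneg) hE]
  exact ENNReal.ofReal_ne_top

variable {ι : Type*} {X : ι → Ω → ℝ} {S : ℕ → Finset ι} {s β C : ℝ}

lemma ae_eventually_forall_mem_abs_lt_mul_rpow
    (hS : (fun n ↦ (#(S n) : ℝ)) =O[atTop] fun n ↦ (n : ℝ) ^ s)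
    (htail : ∀ i t, P.real {ω | t ≤ |X i ω|} ≤ C * exp (-t)) (hβ : 0 < β) {ε : ℝ} (hε : 0 < ε) :
    ∀ᵐ ω ∂P, ∀ᶠ n in atTop, ∀ i ∈ S n, |X i ω| < ε * (n : ℝ) ^ β := by
  set E : ℕ → Set Ω := fun n ↦ ⋃ i ∈ S n, {ω | ε * (n : ℝ) ^ β ≤ |X i ω|}
  have hE : ∀ n, P.real (E n) ≤ C * #(S n) * exp (-ε * (n : ℝ) ^ β) := fun n ↦ calc
    P.real (E n) ≤ ∑ i ∈ S n, P.real {ω | ε * (n : ℝ) ^ β ≤ |X i ω|} :=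
      measureReal_biUnion_finset_le _ _
    _ ≤ ∑ i ∈ S n, C * exp (-ε * (n : ℝ) ^ β) :=
      sum_le_sum fun i _ ↦ (htail i _).trans_eq (by rw [neg_mul])
    _ = C * #(S n) * exp (-ε * (n : ℝ) ^ β) := by rw [sum_const, nsmul_eq_mul]; ring
  have hsum : Summable fun n ↦ P.real (E n) :=
    (summable_mul_exp_neg_mul_rpow (hS.const_mul_left C) hε hβ).of_nonneg_of_le
      (fun _ ↦ measureReal_nonneg) hE
  filter_upwards [ae_eventually_notMem_of_summable_measureReal hsum] with ω hω
  filter_upwards [hω] with n hn i hi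
  exact lt_of_not_ge fun h ↦ hn (mem_biUnion hi h)

lemma ae_forall_pos_eventually_forall_mem_abs_lt_mul_rpow
    (hS : (fun n ↦ (#(S n) : ℝ)) =O[atTop] fun n ↦ (n : ℝ) ^ s)
    (htail : ∀ i t, P.real {ω | t ≤ |X i ω|} ≤ C * exp (-t)) (hβ : 0 < β) :
    ∀ᵐ ω ∂P, ∀ ε > 0, ∀ᶠ n in atTop, ∀ i ∈ S n, |X i ω| < ε * (n : ℝ) ^ β := by
  have h := ae_all_iff.2 fun k : ℕ ↦
    ae_eventually_forall_mem_abs_lt_mul_rpow hS htail hβ (Nat.one_div_pos_of_nat (n := k))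
  filter_upwards [h] with ω hω ε hε
  obtain ⟨k, hk⟩ := exists_nat_one_div_lt hε
  filter_upwards [hω k] with n hn i hi
  exact (hn i hi).trans_le (by gcongr)

end BorelCantelli

section Box

variable {ι : Type*} [Fintype ι] [DecidableEq ι] {n : ℕ}

lemma mem_piFinset_Icc_neg_iff_norm_le {z : ι → ℤ} :
    z ∈ Fintype.piFinset (fun _ ↦ Icc (-(n : ℤ)) n) ↔ ‖z‖ ≤ n := by
  rw [pi_norm_le_iff_of_nonneg n.cast_nonneg, Fintype.mem_piFinset]
  refine forall_congr' fun i ↦ ?_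
  rw [Int.norm_eq_abs, Finset.mem_Icc, ← abs_le, ← Int.cast_abs]
  exact_mod_cast Iff.rfl

lemma card_piFinset_Icc_neg :
    #(Fintype.piFinset fun _ : ι ↦ Icc (-(n : ℤ)) n) = (2 * n + 1) ^ Fintype.card ι := by
  rw [Fintype.card_piFinset, prod_const, card_univ, Int.card_Icc]
  congr 1
  omega

lemma isBigO_card_piFinset_Icc_neg :
    (fun n : ℕ ↦ (#(Fintype.piFinset fun _ : ι ↦ Icc (-(n : ℤ)) n) : ℝ))
      =O[atTop] fun n ↦ (n : ℝ) ^ (Fintype.card ι : ℝ) := by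
  refine IsBigO.of_bound (3 ^ Fintype.card ι) ?_
  filter_upwards [eventually_ge_atTop 1] with n hn
  have hn : (1 : ℝ) ≤ n := by exact_mod_cast hn
  rw [card_piFinset_Icc_neg, rpow_natCast, norm_of_nonneg (by positivity),
    norm_of_nonneg (by positivity), ← mul_pow]
  push_cast
  gcongr
  linarith

end Box

lemma rpow_sub_one_le_rpow_sub_rpow_sub_one {α x : ℝ} (hα : 1 ≤ α) (hx : 1 ≤ x) :
    x ^ (α - 1) ≤ x ^ α - (x - 1) ^ α := by
  have hsplit : ∀ y : ℝ, 0 ≤ y → y ^ α = y ^ (α - 1) * y := fun y hy ↦ by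
    conv_lhs => rw [← sub_add_cancel α 1, rpow_add' hy (by linarith), rpow_one]
  have hmono : (x - 1) ^ (α - 1) ≤ x ^ (α - 1) := by gcongr; linarith
  rw [hsplit x (by linarith), hsplit (x - 1) (by linarith)]
  nlinarith

lemma tendsto_inv_mul_nhds_zero_of_forall_eventually_le {γ : Type*} {l : Filter γ} {f r : γ → ℝ}
    (hf : ∀ᶠ x in l, 0 ≤ f x) (hr : ∀ᶠ x in l, 0 < r x)
    (h : ∀ ε > 0, ∀ᶠ x in l, f x ≤ ε * r x) : Tendsto (fun x ↦ (r x)⁻¹ * f x) l (𝓝 0) := by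
  refine tendsto_order.2 ⟨fun a ha ↦ ?_, fun a ha ↦ ?_⟩
  · filter_upwards [hf, hr] with x hfx hrx
    exact ha.trans_le (by positivity)
  · filter_upwards [h (a / 2) (half_pos ha), hr] with x hfx hrx
    rw [inv_mul_lt_iff₀ hrx]
    exact hfx.trans_lt (by nlinarith)

theorem gaussian_max_over_gap_tendsto_zero_general
    (d : ℕ) (σ : ℝ) (α : ℝ) (hα : 1 < α)
    {Ω : Type*} [MeasurableSpace Ω] (P : Measure Ω) [IsProbabilityMeasure P]
    (g : (Fin d → ℤ) → Ω → ℝ)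
    (hlaw : ∀ z, P.map (g z) = gaussianReal 0 ⟨σ ^ 2, sq_nonneg σ⟩) :
    ∀ᵐ ω ∂P,
      Filter.Tendsto (fun n : ℕ =>
        ((n : ℝ) ^ α - ((n : ℝ) - 1) ^ α)⁻¹ *
          sSup ((fun z => |g z ω|) '' {z : Fin d → ℤ | ‖z‖ ≤ (n : ℝ)}))
        Filter.atTop (nhds 0) := by
  have hgap : ∀ᶠ n : ℕ in atTop, (n : ℝ) ^ (α - 1) ≤ (n : ℝ) ^ α - ((n : ℝ) - 1) ^ α := by
    filter_upwards [eventually_ge_atTop 1] with n hn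
    exact rpow_sub_one_le_rpow_sub_rpow_sub_one hα.le (by exact_mod_cast hn)
  filter_upwards [ae_forall_pos_eventually_forall_mem_abs_lt_mul_rpow isBigO_card_piFinset_Icc_neg
    (fun z ↦ measureReal_abs_ge_le_of_map_eq_gaussianReal (hlaw z)) (sub_pos.2 hα)] with ω hω
  refine tendsto_inv_mul_nhds_zero_of_forall_eventually_le
    (Eventually.of_forall fun n ↦ sSup_nonneg ?_) ?_ fun ε hε ↦ ?_
  · rintro _ ⟨z, -, rfl⟩
    exact abs_nonneg _
  · filter_upwards [hgap, eventually_gt_atTop 0] with n hn hn0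
    exact (rpow_pos_of_pos (Nat.cast_pos.2 hn0) _).trans_le hn
  · filter_upwards [hω ε hε, hgap] with n hn hgap_n
    refine Real.sSup_le ?_ (mul_nonneg hε.le ((rpow_nonneg n.cast_nonneg _).trans hgap_n))
    rintro _ ⟨z, hz, rfl⟩
    exact (hn z (mem_piFinset_Icc_neg_iff_norm_le.2 hz)).le.trans (by gcongr)

/-- If `α > 1` and each `g_z`, `z ∈ ℤ^d`, is `N(0, σ²)`-distributed (with no assumption on
the joint distribution), then almost surely
`(n^α − (n−1)^α)⁻¹ · max{ |g_z| : ‖z‖ ≤ n } → 0` as `n → ∞`,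
where `‖·‖` is the `ℓ∞` norm on `ℤ^d = (Fin d → ℤ)`. -/
theorem gaussian_max_over_gap_tendsto_zero
    (d : ℕ) (hd : 1 ≤ d) (σ : ℝ) (hσ : 0 < σ) (α : ℝ) (hα : 1 < α)
    {Ω : Type*} [MeasurableSpace Ω] (P : Measure Ω) [IsProbabilityMeasure P]
    (g : (Fin d → ℤ) → Ω → ℝ) (hmeas : ∀ z, Measurable (g z))
    (hlaw : ∀ z, P.map (g z) = gaussianReal 0 ⟨σ ^ 2, sq_nonneg σ⟩) :
    ∀ᵐ ω ∂P,
      Filter.Tendsto (fun n : ℕ =>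
        ((n : ℝ) ^ α - ((n : ℝ) - 1) ^ α)⁻¹ *
          sSup ((fun z => |g z ω|) '' {z : Fin d → ℤ | ‖z‖ ≤ (n : ℝ)}))
        Filter.atTop (nhds 0) :=
  gaussian_max_over_gap_tendsto_zero_general d σ α hα P g hlaw
end

section
/- Let α > 0 be a real number and let n ≥ 1 be an integer. The series Σ_{i=0}^∞ ((i+n)^α − i^α)² converges if and only if α < 1/2. -/
open Real

/-- Upper tangent-line bound for concave rpow: `(x+m)^α ≤ x^α + α m x^(α-1)`. -/
lemma rpow_add_le_aux {α x m : ℝ} (hα0 : 0 ≤ α) (hα1 : α ≤ 1) (hx : 0 < x) (hm : 0 ≤ m) :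
    (x + m) ^ α ≤ x ^ α + α * m * x ^ (α - 1) := by
  have hxm : x + m = x * (1 + m / x) := by field_simp
  have hb : (1 + m / x) ^ α ≤ 1 + α * (m / x) :=
    rpow_one_add_le_one_add_mul_self (le_trans (by norm_num) (div_nonneg hm hx.le)) hα0 hα1
  have hs : x ^ (α - 1) = x ^ α / x := by
    rw [Real.rpow_sub hx, Real.rpow_one]
  calc (x + m) ^ α = x ^ α * (1 + m / x) ^ α := by
        rw [hxm, Real.mul_rpow hx.le (by positivity)]
    _ ≤ x ^ α * (1 + α * (m / x)) := by
        exact mul_le_mul_of_nonneg_left hb (Real.rpow_nonneg hx.le α)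
    _ = x ^ α + α * m * x ^ (α - 1) := by rw [hs]; field_simp

/-- Lower bound for `α ≤ 1`: `α (y - x) y^(α-1) ≤ y^α - x^α`. -/
lemma rpow_sub_ge_aux {α x y : ℝ} (hα0 : 0 ≤ α) (hα1 : α ≤ 1) (hx : 0 ≤ x) (hxy : x ≤ y)
    (hy : 0 < y) : α * (y - x) * y ^ (α - 1) ≤ y ^ α - x ^ α := by
  have hs : x / y - 1 ≥ -1 := by
    have : 0 ≤ x / y := div_nonneg hx hy.le
    linarith
  have hb : (1 + (x / y - 1)) ^ α ≤ 1 + α * (x / y - 1) :=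
    rpow_one_add_le_one_add_mul_self hs hα0 hα1
  rw [show (1 : ℝ) + (x / y - 1) = x / y by ring] at hb
  have hxa : x ^ α = y ^ α * (x / y) ^ α := by
    rw [← Real.mul_rpow hy.le (div_nonneg hx hy.le), mul_div_cancel₀ _ hy.ne']
  have hys : y ^ (α - 1) = y ^ α / y := by
    rw [Real.rpow_sub hy, Real.rpow_one]
  have h2 : y ^ α * (x / y) ^ α ≤ y ^ α * (1 + α * (x / y - 1)) :=
    mul_le_mul_of_nonneg_left hb (Real.rpow_nonneg hy.le α)
  rw [← hxa] at h2
  have : y ^ α * (1 + α * (x / y - 1)) = y ^ α - α * (y - x) * (y ^ α / y) := by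
    field_simp; ring
  rw [this] at h2
  rw [hys]
  linarith

/-- Lower bound for `α ≥ 1`: `x^α + α m x^(α-1) ≤ (x+m)^α`. -/
lemma rpow_add_ge_aux {α x m : ℝ} (hα : 1 ≤ α) (hx : 0 < x) (hm : 0 ≤ m) :
    x ^ α + α * m * x ^ (α - 1) ≤ (x + m) ^ α := by
  have hxm : x + m = x * (1 + m / x) := by field_simp
  have hb : 1 + α * (m / x) ≤ (1 + m / x) ^ α :=
    one_add_mul_self_le_rpow_one_add (le_trans (by norm_num) (div_nonneg hm hx.le)) hα
  have hs : x ^ (α - 1) = x ^ α / x := by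
    rw [Real.rpow_sub hx, Real.rpow_one]
  calc x ^ α + α * m * x ^ (α - 1) = x ^ α * (1 + α * (m / x)) := by
        rw [hs]; field_simp
    _ ≤ x ^ α * (1 + m / x) ^ α :=
        mul_le_mul_of_nonneg_left hb (Real.rpow_nonneg hx.le α)
    _ = (x + m) ^ α := by rw [hxm, Real.mul_rpow hx.le (by positivity)]

/-- For `α > 0` and an integer `n ≥ 1`, the series `Σ_{i=0}^∞ ((i+n)^α − i^α)²` converges
if and only if `α < 1/2`. -/
theorem summable_rpow_gap_sq_iff
    (α : ℝ) (hα : 0 < α) (n : ℕ) (hn : 1 ≤ n) :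
    Summable (fun i : ℕ => (((i + n : ℕ) : ℝ) ^ α - (i : ℝ) ^ α) ^ 2) ↔ α < 1 / 2 := by
  have hn1 : (1 : ℝ) ≤ n := by exact_mod_cast hn
  constructor
  · intro h
    by_contra hlt
    push_neg at hlt
    rcases le_or_gt 1 α with hα1 | hα1
    · -- α ≥ 1 : terms are bounded below by 1, not summable
      have h0 := h.tendsto_atTop_zero
      have h1 : ∀ᶠ i in Filter.atTop,
          (((i + n : ℕ) : ℝ) ^ α - (i : ℝ) ^ α) ^ 2 < 1 :=
        h0.eventually (gt_mem_nhds (by norm_num))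
      obtain ⟨i, hlt1, hi1⟩ := (h1.and (Filter.eventually_ge_atTop 1)).exists
      have hi : (1 : ℝ) ≤ (i : ℝ) := by exact_mod_cast hi1
      have hipos : (0 : ℝ) < i := by linarith
      have hlow : (i : ℝ) ^ α + α * n * (i : ℝ) ^ (α - 1) ≤ ((i : ℝ) + n) ^ α :=
        rpow_add_ge_aux hα1 hipos (by positivity)
      have hpow1 : (1 : ℝ) ≤ (i : ℝ) ^ (α - 1) := by
        calc (1 : ℝ) = 1 ^ (α - 1) := (Real.one_rpow _).symm
          _ ≤ (i : ℝ) ^ (α - 1) := Real.rpow_le_rpow zero_le_one hi (by linarith)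
      have hαn : (1 : ℝ) ≤ α * n := by nlinarith
      have hdiff : (1 : ℝ) ≤ ((i : ℝ) + n) ^ α - (i : ℝ) ^ α := by nlinarith
      have hcast : ((i + n : ℕ) : ℝ) = (i : ℝ) + n := by push_cast; ring
      rw [hcast] at hlt1
      nlinarith
    · -- 1/2 ≤ α < 1 : compare from below with i ^ (2α - 2)
      set c : ℝ := (α * n * ((1 + n : ℝ)) ^ (α - 1)) ^ 2 with hc
      have hcpos : 0 < c := by positivity
      have hle : ∀ i : ℕ, c * (i : ℝ) ^ (2 * α - 2) ≤
          (((i + n : ℕ) : ℝ) ^ α - (i : ℝ) ^ α) ^ 2 := by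
        intro i
        rcases Nat.eq_zero_or_pos i with rfl | hi1
        · rw [Nat.cast_zero, Real.zero_rpow (by linarith : 2 * α - 2 ≠ 0)]
          simpa using sq_nonneg (((0 + n : ℕ) : ℝ) ^ α - (0 : ℝ) ^ α)
        · have hi : (1 : ℝ) ≤ (i : ℝ) := by exact_mod_cast hi1
          have hipos : (0 : ℝ) < i := by linarith
          have hcast : ((i + n : ℕ) : ℝ) = (i : ℝ) + n := by push_cast; ring
          have hlow : α * (((i : ℝ) + n) - i) * ((i : ℝ) + n) ^ (α - 1) ≤
              ((i : ℝ) + n) ^ α - (i : ℝ) ^ α :=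
            rpow_sub_ge_aux hα.le hα1.le hipos.le (by linarith) (by positivity)
          rw [add_sub_cancel_left] at hlow
          -- (i+n)^(α-1) ≥ ((1+n) * i)^(α-1) = (1+n)^(α-1) * i^(α-1)
          have hmono : ((1 + (n : ℝ)) * i) ^ (α - 1) ≤ ((i : ℝ) + n) ^ (α - 1) := by
            apply Real.rpow_le_rpow_of_nonpos (by positivity) _ (by linarith)
            nlinarith
          rw [Real.mul_rpow (by positivity) hipos.le] at hmono
          have hiα : 0 ≤ (i : ℝ) ^ (α - 1) := Real.rpow_nonneg hipos.le _
          have h1 : α * n * ((1 + (n : ℝ)) ^ (α - 1) * (i : ℝ) ^ (α - 1)) ≤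
              ((i : ℝ) + n) ^ α - (i : ℝ) ^ α := by
            refine le_trans ?_ hlow
            have : (0 : ℝ) ≤ α * n := by positivity
            nlinarith
          have hsq : (i : ℝ) ^ (α - 1) * (i : ℝ) ^ (α - 1) = (i : ℝ) ^ (2 * α - 2) := by
            rw [← Real.rpow_add hipos]; ring_nf
          have h2 : 0 ≤ α * n * ((1 + (n : ℝ)) ^ (α - 1) * (i : ℝ) ^ (α - 1)) := by positivity
          rw [hcast]
          calc c * (i : ℝ) ^ (2 * α - 2)
              = (α * n * ((1 + (n : ℝ)) ^ (α - 1) * (i : ℝ) ^ (α - 1))) ^ 2 := by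
                rw [hc]; rw [← hsq]; ring
            _ ≤ (((i : ℝ) + n) ^ α - (i : ℝ) ^ α) ^ 2 := by nlinarith
      have hsum : Summable (fun i : ℕ => c * (i : ℝ) ^ (2 * α - 2)) :=
        Summable.of_nonneg_of_le (fun i => by positivity) hle h
      have hsum2 : Summable (fun i : ℕ => (i : ℝ) ^ (2 * α - 2)) := by
        have := hsum.mul_left c⁻¹
        simpa [← mul_assoc, inv_mul_cancel₀ hcpos.ne'] using this
      rw [Real.summable_nat_rpow] at hsum2
      linarith
  · intro hhalf
    have hα1 : α ≤ 1 := by linarith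
    rw [← summable_nat_add_iff 1]
    have hsum : Summable (fun i : ℕ => (α * n * ((i + 1 : ℕ) : ℝ) ^ (α - 1)) ^ 2) := by
      have hbase : Summable (fun i : ℕ => (i : ℝ) ^ (2 * α - 2)) :=
        Real.summable_nat_rpow.2 (by linarith)
      have hshift : Summable (fun i : ℕ => ((i + 1 : ℕ) : ℝ) ^ (2 * α - 2)) := by
        exact_mod_cast (summable_nat_add_iff 1).2 hbase
      have := hshift.mul_left ((α * n) ^ 2)
      refine this.congr fun i => ?_
      have hipos : (0 : ℝ) < ((i + 1 : ℕ) : ℝ) := by positivity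
      have hsq : ((i + 1 : ℕ) : ℝ) ^ (α - 1) * ((i + 1 : ℕ) : ℝ) ^ (α - 1)
          = ((i + 1 : ℕ) : ℝ) ^ (2 * α - 2) := by
        rw [← Real.rpow_add hipos]; ring_nf
      rw [← hsq]; ring
    refine Summable.of_nonneg_of_le (fun i => sq_nonneg _) (fun i => ?_) hsum
    have hipos : (0 : ℝ) < ((i + 1 : ℕ) : ℝ) := by positivity
    have hup : (((i + 1 : ℕ) : ℝ) + n) ^ α ≤
        ((i + 1 : ℕ) : ℝ) ^ α + α * n * ((i + 1 : ℕ) : ℝ) ^ (α - 1) :=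
      rpow_add_le_aux hα.le hα1 hipos (by positivity)
    have hcast : ((i + 1 + n : ℕ) : ℝ) = ((i + 1 : ℕ) : ℝ) + n := by push_cast; ring
    rw [hcast]
    have hd0 : (0 : ℝ) ≤ (((i + 1 : ℕ) : ℝ) + n) ^ α - ((i + 1 : ℕ) : ℝ) ^ α := by
      have := Real.rpow_le_rpow hipos.le (by linarith : ((i + 1 : ℕ) : ℝ) ≤ ((i + 1 : ℕ) : ℝ) + n) hα.le
      linarith
    have hd1 : (((i + 1 : ℕ) : ℝ) + n) ^ α - ((i + 1 : ℕ) : ℝ) ^ α ≤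
        α * n * ((i + 1 : ℕ) : ℝ) ^ (α - 1) := by linarith
    nlinarith
end

section
/- Let d ≥ 1, σ > 0 and α > d/2. Then lim_{n→∞} e^{σ²/n²} (e^{σ²/n²} − 1) · Σ_{m∈ℤ^d} e^{−2‖m‖^α/n} = 0, where ‖·‖ is the ℓ∞ norm, the sum over ℤ^d converges for every n ≥ 1, and the limit is over positive integers n → ∞. -/
open Filter



private lemma aux_base_summable {t : ℝ} (ht : 1 < t) :
    Summable (fun j : ℤ => (max 1 ‖j‖ : ℝ) ^ (-t)) := by
  have hnat : Summable (fun n : ℕ => (max 1 (n : ℝ)) ^ (-t)) := by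
    rw [← summable_nat_add_iff 1]
    have h := Real.summable_nat_rpow.mpr (by linarith : -t < -1)
    have h1 := (summable_nat_add_iff (f := fun n : ℕ => (n : ℝ) ^ (-t)) 1).mpr h
    refine h1.congr fun n => ?_
    have : (max 1 ((n + 1 : ℕ) : ℝ)) = ((n + 1 : ℕ) : ℝ) := by
      apply max_eq_right; push_cast; linarith
    rw [this]
  apply Summable.of_nat_of_neg
  · refine hnat.congr fun n => ?_
    simp [Int.norm_eq_abs]
  · refine hnat.congr fun n => ?_
    simp [Int.norm_eq_abs]

private lemma aux_pi_summable (f : ℤ → ℝ) (hf0 : ∀ x, 0 ≤ f x) (hf : Summable f)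
    (d : ℕ) : Summable (fun m : Fin d → ℤ => ∏ i, f (m i)) := by
  induction d with
  | zero =>
      simp only [Finset.univ_eq_empty, Finset.prod_empty]
      exact summable_of_finite_support (Set.toFinite _)
  | succ d ih =>
      have hs := hf.mul_of_nonneg ih (fun _ => hf0 _)
        (fun m => Finset.prod_nonneg fun i _ => hf0 _)
      rw [← (Fin.consEquiv (fun _ : Fin (d + 1) => ℤ)).summable_iff]
      refine hs.congr fun p => ?_
      simp [Fin.prod_univ_succ]

private lemma aux_term_bound (d : ℕ) (hd : 1 ≤ d) (α k : ℝ) (hα0 : 0 < α) (hk1 : 1 < k)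
    (n : ℕ) (hn : 1 ≤ n) (m : Fin d → ℤ) :
    Real.exp (-2 * ‖m‖ ^ α / (n : ℝ)) ≤
      (max 1 ((k * n / 2) ^ k)) * ∏ i, (max 1 ‖m i‖ : ℝ) ^ (-(α * k / d)) := by
  have hd0 : (0:ℝ) < d := by exact_mod_cast hd
  have hk0 : (0:ℝ) < k := by linarith
  set t : ℝ := α * k / d with ht
  have ht0 : 0 ≤ t := by positivity
  have hdt : (d : ℝ) * t = α * k := by rw [ht]; field_simp
  have hC1 : (1:ℝ) ≤ max 1 ((k * n / 2) ^ k) := le_max_left _ _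
  by_cases hm : m = 0
  · subst hm
    have h0 : ‖(0 : Fin d → ℤ)‖ = 0 := norm_zero
    rw [h0, Real.zero_rpow hα0.ne']
    simp only [mul_zero, zero_div, Real.exp_zero, Pi.zero_apply, norm_zero]
    have : ∀ i : Fin d, (max 1 (0:ℝ)) ^ (-t) = 1 := by
      intro i; rw [max_eq_left zero_le_one, Real.one_rpow]
    rw [Finset.prod_congr rfl (fun i _ => this i), Finset.prod_const_one, mul_one]
    exact hC1
  · obtain ⟨i0, hi0⟩ := Function.ne_iff.mp hm
    have h1m : (1:ℝ) ≤ ‖m‖ := by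
      calc (1:ℝ) ≤ ‖m i0‖ := by
            rw [Int.norm_eq_abs]; exact_mod_cast Int.one_le_abs hi0
        _ ≤ ‖m‖ := norm_le_pi_norm m i0
    have hm0 : (0:ℝ) < ‖m‖ := lt_of_lt_of_le one_pos h1m
    have hra : (0:ℝ) < ‖m‖ ^ α := Real.rpow_pos_of_pos hm0 α
    have hn0 : (0:ℝ) < n := by exact_mod_cast hn
    set x : ℝ := 2 * ‖m‖ ^ α / n with hx
    have hx0 : 0 < x := by positivity
    have hy0 : 0 < x / k := by positivity
    -- step 1 : exp (-x) ≤ (k/x)^k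
    have e1 : Real.exp (-x) = (Real.exp (-(x / k))) ^ k := by
      rw [← Real.exp_mul]
      congr 1
      field_simp
    have e2 : Real.exp (-(x / k)) ≤ k / x := by
      rw [Real.exp_neg, ← inv_div x k]
      exact inv_anti₀ hy0 ((Real.add_one_le_exp _).trans' (by linarith))
    have step1 : Real.exp (-x) ≤ (k / x) ^ k := by
      rw [e1]; exact Real.rpow_le_rpow (Real.exp_nonneg _) e2 hk0.le
    -- step 2 : (k/x)^k = (k*n/2)^k * (‖m‖^(α*k))⁻¹
    have hkx : k / x = (k * n / 2) * (‖m‖ ^ α)⁻¹ := by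
      rw [hx]; field_simp
    have step2 : (k / x) ^ k = (k * n / 2) ^ k * (‖m‖ ^ (α * k))⁻¹ := by
      rw [hkx, Real.mul_rpow (by positivity) (by positivity),
        Real.inv_rpow hra.le, ← Real.rpow_mul (norm_nonneg m)]
    -- step 3 : (‖m‖^(α*k))⁻¹ ≤ ∏ i, (max 1 ‖m i‖)^(-t)
    have hprodpos : (0:ℝ) < ∏ i, max 1 ‖m i‖ :=
      Finset.prod_pos fun i _ => lt_of_lt_of_le one_pos (le_max_left _ _)
    have hle : ∏ i, (max 1 ‖m i‖ : ℝ) ≤ ‖m‖ ^ (d : ℕ) := by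
      calc ∏ i, (max 1 ‖m i‖ : ℝ) ≤ ∏ _i : Fin d, ‖m‖ :=
            Finset.prod_le_prod (fun i _ => by positivity)
              (fun i _ => max_le h1m (norm_le_pi_norm m i))
        _ = ‖m‖ ^ (d : ℕ) := by simp
    have h2 : ((‖m‖ ^ (d : ℕ) : ℝ)) ^ (-t) ≤ (∏ i, (max 1 ‖m i‖ : ℝ)) ^ (-t) :=
      Real.rpow_le_rpow_of_nonpos hprodpos hle (neg_nonpos.mpr ht0)
    have h3 : (∏ i, (max 1 ‖m i‖ : ℝ)) ^ (-t) = ∏ i, (max 1 ‖m i‖ : ℝ) ^ (-t) :=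
      (Real.finset_prod_rpow _ _ (fun i _ => by positivity) _).symm
    have h4 : ((‖m‖ ^ (d : ℕ) : ℝ)) ^ (-t) = (‖m‖ ^ (α * k))⁻¹ := by
      rw [← Real.rpow_natCast ‖m‖ d, ← Real.rpow_mul (norm_nonneg m),
        mul_neg, hdt, Real.rpow_neg (norm_nonneg m)]
    have step3 : (‖m‖ ^ (α * k))⁻¹ ≤ ∏ i, (max 1 ‖m i‖ : ℝ) ^ (-t) := by
      rw [← h3, ← h4]; exact h2
    -- combine
    have hxeq : -2 * ‖m‖ ^ α / (n : ℝ) = -x := by rw [hx]; ring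
    rw [hxeq]
    calc Real.exp (-x) ≤ (k / x) ^ k := step1
      _ = (k * n / 2) ^ k * (‖m‖ ^ (α * k))⁻¹ := step2
      _ ≤ (max 1 ((k * n / 2) ^ k)) * ∏ i, (max 1 ‖m i‖ : ℝ) ^ (-t) := by
          apply mul_le_mul (le_max_right _ _) step3 (by positivity)
          exact le_trans zero_le_one hC1


private lemma aux_exp_sub_one (X : ℝ) : Real.exp X - 1 ≤ X * Real.exp X := by
  have h := Real.add_one_le_exp (-X)
  rw [Real.exp_neg] at h
  have hp := Real.exp_pos X
  have h2 : (-X + 1) * Real.exp X ≤ 1 := by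
    calc (-X + 1) * Real.exp X ≤ (Real.exp X)⁻¹ * Real.exp X :=
          mul_le_mul_of_nonneg_right h hp.le
      _ = 1 := inv_mul_cancel₀ hp.ne'
  nlinarith [h2]

/-- For `d ≥ 1`, `σ > 0` and `α > d/2`, the sum `Σ_{m ∈ ℤ^d} e^{−2‖m‖^α/n}` converges for
every `n ≥ 1` (with `‖·‖` the `ℓ∞` norm on `ℤ^d = (Fin d → ℤ)`), and
`e^{σ²/n²}(e^{σ²/n²} − 1) · Σ_{m ∈ ℤ^d} e^{−2‖m‖^α/n} → 0` as the integer `n → ∞`. -/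
theorem variance_of_exponential_linear_statistic_tendsto_zero
    (d : ℕ) (hd : 1 ≤ d) (σ : ℝ) (hσ : 0 < σ) (α : ℝ) (hα : (d : ℝ) / 2 < α) :
    (∀ n : ℕ, 1 ≤ n →
      Summable (fun m : Fin d → ℤ => Real.exp (-2 * ‖m‖ ^ α / (n : ℝ)))) ∧
    Filter.Tendsto (fun n : ℕ =>
      Real.exp (σ ^ 2 / (n : ℝ) ^ 2) * (Real.exp (σ ^ 2 / (n : ℝ) ^ 2) - 1) *
        ∑' m : Fin d → ℤ, Real.exp (-2 * ‖m‖ ^ α / (n : ℝ)))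
      Filter.atTop (nhds 0) := by
  have hd0 : (0:ℝ) < d := by exact_mod_cast hd
  have hα0 : 0 < α := lt_of_le_of_lt (by positivity) hα
  set k : ℝ := 1 + d / (2 * α) with hkdef
  have hk1 : 1 < k := by
    have : (0:ℝ) < d / (2 * α) := by positivity
    rw [hkdef]; linarith
  have hk2 : k < 2 := by
    have : (d:ℝ) / (2 * α) < 1 := (div_lt_one (by positivity)).mpr (by linarith)
    rw [hkdef]; linarith
  have hk0 : (0:ℝ) < k := by linarith
  set t : ℝ := α * k / d with htdef
  have hak : α * k = α + d / 2 := by rw [hkdef]; field_simp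
  have ht1 : 1 < t := by
    rw [htdef, hak]
    rw [lt_div_iff₀ hd0, one_mul]
    linarith
  have hf0 : ∀ j : ℤ, 0 ≤ (max 1 ‖j‖ : ℝ) ^ (-t) := fun j => by positivity
  have hpi := aux_pi_summable _ hf0 (aux_base_summable ht1) d
  have hsumm : ∀ n : ℕ, 1 ≤ n →
      Summable (fun m : Fin d → ℤ => Real.exp (-2 * ‖m‖ ^ α / (n : ℝ))) := by
    intro n hn
    exact Summable.of_nonneg_of_le (fun m => (Real.exp_pos _).le)
      (aux_term_bound d hd α k hα0 hk1 n hn) (hpi.mul_left _)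
  refine ⟨hsumm, ?_⟩
  set T : ℝ := ∑' m : Fin d → ℤ, ∏ i, (max 1 ‖m i‖ : ℝ) ^ (-t) with hTdef
  have hT0 : 0 ≤ T :=
    tsum_nonneg fun m => Finset.prod_nonneg fun i _ => hf0 _
  set A : ℝ := max 1 ((k / 2) ^ k) with hAdef
  have hA1 : (1:ℝ) ≤ A := le_max_left _ _
  set B : ℝ := Real.exp (σ ^ 2) * σ ^ 2 * Real.exp (σ ^ 2) * A * T with hBdef
  have hB0 : 0 ≤ B := by positivity
  -- the limit of the dominating sequence
  have hlim : Tendsto (fun n : ℕ => B * (n : ℝ) ^ (k - 2)) atTop (nhds 0) := by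
    have h1 : Tendsto (fun x : ℝ => x ^ (k - 2)) atTop (nhds 0) := by
      have := tendsto_rpow_neg_atTop (by linarith : 0 < 2 - k)
      simpa using this
    have h2 : Tendsto (fun n : ℕ => ((n : ℝ)) ^ (k - 2)) atTop (nhds 0) :=
      h1.comp tendsto_natCast_atTop_atTop
    simpa using h2.const_mul B
  apply squeeze_zero' _ _ hlim
  · filter_upwards [eventually_ge_atTop 1] with n hn
    have hX0 : 0 ≤ σ ^ 2 / (n : ℝ) ^ 2 := by positivity
    have hE1 : (1:ℝ) ≤ Real.exp (σ ^ 2 / (n : ℝ) ^ 2) := Real.one_le_exp hX0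
    have hS0 : 0 ≤ ∑' m : Fin d → ℤ, Real.exp (-2 * ‖m‖ ^ α / (n : ℝ)) :=
      tsum_nonneg fun m => (Real.exp_pos _).le
    exact mul_nonneg (mul_nonneg (Real.exp_nonneg _) (by linarith)) hS0
  · filter_upwards [eventually_ge_atTop 1] with n hn
    have hn0 : (0:ℝ) < n := by exact_mod_cast hn
    have hn1 : (1:ℝ) ≤ n := by exact_mod_cast hn
    set X : ℝ := σ ^ 2 / (n : ℝ) ^ 2 with hXdef
    have hX0 : 0 ≤ X := by positivity
    have hXle : X ≤ σ ^ 2 := by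
      rw [hXdef]
      exact div_le_self (sq_nonneg σ) (by nlinarith)
    have pre1 : Real.exp X ≤ Real.exp (σ ^ 2) := Real.exp_le_exp.mpr hXle
    have pre2 : Real.exp X - 1 ≤ X * Real.exp (σ ^ 2) :=
      (aux_exp_sub_one X).trans (mul_le_mul_of_nonneg_left pre1 hX0)
    have hE10 : 0 ≤ Real.exp X - 1 := by
      have := Real.one_le_exp hX0; linarith
    have hS0 : 0 ≤ ∑' m : Fin d → ℤ, Real.exp (-2 * ‖m‖ ^ α / (n : ℝ)) :=
      tsum_nonneg fun m => (Real.exp_pos _).le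
    have hnk1 : (1:ℝ) ≤ (n : ℝ) ^ k := Real.one_le_rpow hn1 hk0.le
    have hCn : (max 1 ((k * n / 2) ^ k) : ℝ) ≤ A * (n : ℝ) ^ k := by
      apply max_le
      · calc (1:ℝ) = 1 * 1 := (one_mul 1).symm
          _ ≤ A * (n : ℝ) ^ k :=
            mul_le_mul hA1 hnk1 zero_le_one (zero_le_one.trans hA1)
      · have he : k * (n : ℝ) / 2 = (k / 2) * n := by ring
        rw [he, Real.mul_rpow (by positivity) (by positivity)]
        exact mul_le_mul_of_nonneg_right (le_max_right _ _) (Real.rpow_nonneg hn0.le k)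
    have hSle : (∑' m : Fin d → ℤ, Real.exp (-2 * ‖m‖ ^ α / (n : ℝ))) ≤
        (max 1 ((k * n / 2) ^ k)) * T := by
      calc (∑' m : Fin d → ℤ, Real.exp (-2 * ‖m‖ ^ α / (n : ℝ)))
          ≤ ∑' m : Fin d → ℤ, (max 1 ((k * n / 2) ^ k)) * ∏ i, (max 1 ‖m i‖ : ℝ) ^ (-t) :=
            Summable.tsum_le_tsum (aux_term_bound d hd α k hα0 hk1 n hn) (hsumm n hn) (hpi.mul_left _)
        _ = (max 1 ((k * n / 2) ^ k)) * T := tsum_mul_left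
    have hSle2 : (∑' m : Fin d → ℤ, Real.exp (-2 * ‖m‖ ^ α / (n : ℝ))) ≤
        A * (n : ℝ) ^ k * T := hSle.trans (mul_le_mul_of_nonneg_right hCn hT0)
    have hmain : Real.exp X * (Real.exp X - 1) *
        (∑' m : Fin d → ℤ, Real.exp (-2 * ‖m‖ ^ α / (n : ℝ))) ≤
        Real.exp (σ ^ 2) * (X * Real.exp (σ ^ 2)) * (A * (n : ℝ) ^ k * T) := by
      apply mul_le_mul (mul_le_mul pre1 pre2 hE10 (Real.exp_nonneg _)) hSle2 hS0
        (by positivity)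
    have hpow : (n : ℝ) ^ (k - 2) = (n : ℝ) ^ k / (n : ℝ) ^ (2:ℕ) := by
      rw [Real.rpow_sub hn0, ← Real.rpow_natCast (n:ℝ) 2]
      norm_num
    have heq : Real.exp (σ ^ 2) * (X * Real.exp (σ ^ 2)) * (A * (n : ℝ) ^ k * T) =
        B * (n : ℝ) ^ (k - 2) := by
      rw [hpow, hXdef, hBdef]
      field_simp
    calc Real.exp X * (Real.exp X - 1) *
        (∑' m : Fin d → ℤ, Real.exp (-2 * ‖m‖ ^ α / (n : ℝ)))
        ≤ Real.exp (σ ^ 2) * (X * Real.exp (σ ^ 2)) * (A * (n : ℝ) ^ k * T) := hmain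
      _ = B * (n : ℝ) ^ (k - 2) := heq
end

section
/- Let α > 0 and let g be a real random variable such that the laws of g and g + k are mutually absolutely continuous for every fixed k ∈ ℤ. Consider the point process Π = Σ_{z∈ℕ, z≥1} δ_{z^α + g} (all points share the same random shift g), and for U ⊆ {1, 2, 3, …} let Π_U = Σ_{z≥1, z∉U} δ_{z^α + g}. Then: (1) if α = 1, the laws of Π_{{1,…,m}} and Π_{{1,…,n}} are mutually absolutely continuous for all integers m, n ≥ 1 (in particular Π is not deletion singular); (2) if α ∈ (0,1) ∪ (1,∞), then Π is deletion singular: for every finite nonempty S ⊆ {1, 2, 3, …}, the laws of Π and Π_S are mutually singular. -/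
open MeasureTheory ProbabilityTheory Filter Set
open scoped ENNReal

/-- The configuration `Π_U = Σ_{z ≥ 1, z ∉ U} δ_{z^α + g}` (all points sharing the same
random shift `g`) as a Borel measure on `ℝ`. -/
noncomputable def shiftedConfig (α : ℝ) (g : ℝ) (U : Set ℕ) : Measure ℝ :=
  Measure.sum (fun z : {z : ℕ // 1 ≤ z ∧ z ∉ U} => Measure.dirac ((z.1 : ℝ) ^ α + g))

lemma shiftedConfig_apply (α x : ℝ) (U : Set ℕ) {s : Set ℝ} (hs : MeasurableSet s) :
    shiftedConfig α x U s
      = ∑' z : {z : ℕ // 1 ≤ z ∧ z ∉ U}, s.indicator 1 ((z.1 : ℝ) ^ α + x) := by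
  rw [shiftedConfig, Measure.sum_apply _ hs]
  simp_rw [Measure.dirac_apply' _ hs]

lemma measurable_shiftedConfig (α : ℝ) (U : Set ℕ) :
    Measurable fun x : ℝ => shiftedConfig α x U := by
  apply Measure.measurable_of_measurable_coe
  intro s hs
  simp_rw [shiftedConfig_apply α _ U hs]
  exact Measurable.ennreal_tsum fun z =>
    (measurable_one.indicator hs).comp (measurable_id.const_add _)

lemma shiftedConfig_shift (x : ℝ) (m : ℕ) :
    shiftedConfig 1 x (Set.Icc 1 m) = shiftedConfig 1 (x + m) (∅ : Set ℕ) := by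
  ext s hs
  rw [shiftedConfig_apply _ _ _ hs, shiftedConfig_apply _ _ _ hs]
  let e : {z : ℕ // 1 ≤ z ∧ z ∉ (∅ : Set ℕ)} ≃ {z : ℕ // 1 ≤ z ∧ z ∉ Set.Icc 1 m} :=
    { toFun := fun w => ⟨w.1 + m, by
        have := w.2.1
        constructor
        · omega
        · simp only [Set.mem_Icc]; omega⟩
      invFun := fun z => ⟨z.1 - m, by
        have h1 := z.2.1
        have h2 := z.2.2
        simp only [Set.mem_Icc, not_and, not_le] at h2
        constructor
        · omega
        · simp⟩
      left_inv := fun w => by ext; simp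
      right_inv := fun z => by
        ext
        have h1 := z.2.1
        have h2 := z.2.2
        simp only [Set.mem_Icc, not_and, not_le] at h2
        simp; omega }
  rw [← Equiv.tsum_eq e (fun z => s.indicator 1 ((z.1 : ℝ) ^ (1:ℝ) + x))]
  apply tsum_congr
  intro w
  have harg : ((e w).1 : ℝ) ^ (1:ℝ) + x = (w.1 : ℝ) ^ (1:ℝ) + (x + m) := by
    have : ((e w).1 : ℕ) = w.1 + m := rfl
    rw [this]
    rw [Real.rpow_one, Real.rpow_one]
    push_cast
    ring
  rw [harg]

lemma shiftedConfig_Iic {α : ℝ} (hα : 0 < α) (x : ℝ) (U : Finset ℕ) {t : ℝ} {m : ℕ}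
    (hUm : U ⊆ Finset.Icc 1 m) (h1 : (m : ℝ) ^ α ≤ t - x) (h2 : t - x < ((m : ℝ) + 1) ^ α) :
    shiftedConfig α x (↑U) (Iic t) = ((m - U.card : ℕ) : ℝ≥0∞) := by
  rw [shiftedConfig_apply _ _ _ measurableSet_Iic]
  have key : ∀ z : {z : ℕ // 1 ≤ z ∧ z ∉ (↑U : Set ℕ)},
      (Iic t).indicator (1 : ℝ → ℝ≥0∞) ((z.1 : ℝ) ^ α + x)
        = (fun w : ℕ => if w ≤ m then (1 : ℝ≥0∞) else 0) z.1 := by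
    intro z
    by_cases h : z.1 ≤ m
    · have hle : (z.1 : ℝ) ^ α + x ≤ t := by
        have : (z.1 : ℝ) ^ α ≤ (m : ℝ) ^ α :=
          Real.rpow_le_rpow (by positivity) (by exact_mod_cast h) hα.le
        linarith
      simp [Set.indicator_of_mem, Set.mem_Iic.mpr hle, h]
    · have hz : (m : ℝ) + 1 ≤ (z.1 : ℝ) := by exact_mod_cast not_le.mp h
      have hgt : t < (z.1 : ℝ) ^ α + x := by
        have : ((m : ℝ) + 1) ^ α ≤ (z.1 : ℝ) ^ α :=
          Real.rpow_le_rpow (by positivity) hz hα.le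
        linarith
      rw [Set.indicator_of_notMem (by simpa using not_le.mpr hgt)]
      simp [h]
  rw [tsum_congr key]
  have h3 : (∑' b : {z : ℕ // 1 ≤ z ∧ z ∉ (↑U : Set ℕ)},
        (fun w : ℕ => if w ≤ m then (1 : ℝ≥0∞) else 0) b.1)
      = ∑' w : ℕ, ({z : ℕ | 1 ≤ z ∧ z ∉ (↑U : Set ℕ)}).indicator
          (fun w : ℕ => if w ≤ m then (1 : ℝ≥0∞) else 0) w :=
    tsum_subtype {z : ℕ | 1 ≤ z ∧ z ∉ (↑U : Set ℕ)} (fun w : ℕ => if w ≤ m then (1 : ℝ≥0∞) else 0)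
  rw [h3]
  have key2 : ∀ w : ℕ, ({z : ℕ | 1 ≤ z ∧ z ∉ (↑U : Set ℕ)}).indicator
      (fun w : ℕ => if w ≤ m then (1 : ℝ≥0∞) else 0) w
        = if w ∈ Finset.Icc 1 m \ U then (1 : ℝ≥0∞) else 0 := by
    intro w
    by_cases hw : w ∈ Finset.Icc 1 m \ U
    · rw [if_pos hw]
      simp only [Finset.mem_sdiff, Finset.mem_Icc] at hw
      rw [Set.indicator_of_mem (by simp [hw.1.1, hw.2]), if_pos hw.1.2]
    · simp only [Finset.mem_sdiff, Finset.mem_Icc] at hw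
      rw [if_neg (by simp only [Finset.mem_sdiff, Finset.mem_Icc]; tauto)]
      by_cases hmem : w ∈ {z : ℕ | 1 ≤ z ∧ z ∉ (↑U : Set ℕ)}
      · simp only [Set.mem_setOf_eq, Finset.mem_coe] at hmem
        rw [Set.indicator_of_mem (by simpa using hmem), if_neg (by tauto)]
      · rw [Set.indicator_of_notMem hmem]
  rw [tsum_congr key2]
  rw [tsum_eq_sum (s := Finset.Icc 1 m \ U) (fun b hb => if_neg hb)]
  rw [Finset.sum_ite_mem]
  simp only [Finset.inter_self, Finset.sum_const, nsmul_eq_mul, mul_one]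
  rw [Finset.card_sdiff_of_subset hUm, Nat.card_Icc]
  norm_num

lemma bern_ge {α a : ℝ} (hα : 1 ≤ α) (ha : 1 ≤ a) :
    a ^ α + α * a ^ (α - 1) ≤ (a + 1) ^ α := by
  have ha0 : (0 : ℝ) < a := lt_of_lt_of_le one_pos ha
  have h := one_add_mul_self_le_rpow_one_add (s := 1 / a)
    (le_trans (by norm_num : (-1:ℝ) ≤ 0) (by positivity)) hα
  have hmul := mul_le_mul_of_nonneg_left h (Real.rpow_nonneg ha0.le α)
  rw [← Real.mul_rpow ha0.le (by positivity)] at hmul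
  have he : a * (1 + 1 / a) = a + 1 := by field_simp
  rw [he] at hmul
  have he2 : a ^ α * (1 + α * (1 / a)) = a ^ α + α * a ^ (α - 1) := by
    rw [Real.rpow_sub ha0, Real.rpow_one]
    field_simp
  linarith [he2 ▸ hmul]

lemma bern_le {α : ℝ} (hα0 : 0 < α) (hα1 : α ≤ 1) {a c : ℝ} (ha : 1 ≤ a) (hc : 0 ≤ c) :
    (a + c) ^ α ≤ a ^ α + α * c * a ^ (α - 1) := by
  have ha0 : (0 : ℝ) < a := lt_of_lt_of_le one_pos ha
  have h := rpow_one_add_le_one_add_mul_self (s := c / a)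
    (le_trans (by norm_num : (-1:ℝ) ≤ 0) (by positivity)) hα0.le hα1
  have hmul := mul_le_mul_of_nonneg_left h (Real.rpow_nonneg ha0.le α)
  rw [← Real.mul_rpow ha0.le (by positivity)] at hmul
  have he : a * (1 + c / a) = a + c := by field_simp
  rw [he] at hmul
  have he2 : a ^ α * (1 + α * (c / a)) = a ^ α + α * c * a ^ (α - 1) := by
    rw [Real.rpow_sub ha0, Real.rpow_one]
    field_simp
  linarith [he2 ▸ hmul]

lemma exists_form {α : ℝ} (hα : 0 < α) (x : ℝ) (U : Finset ℕ) (hU : ∀ u ∈ U, 1 ≤ u) (K : ℕ) :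
    ∃ N : ℕ, ∀ n : ℕ, N ≤ n → ∃ m : ℕ, K ≤ m ∧ U ⊆ Finset.Icc 1 m ∧
      (m : ℝ) ^ α ≤ (n : ℝ) - x ∧ (n : ℝ) - x < ((m : ℝ) + 1) ^ α ∧
      shiftedConfig α x (↑U) (Iic (n : ℝ)) = ((m - U.card : ℕ) : ℝ≥0∞) := by
  set B : ℕ := max K (U.sup id) with hB
  refine ⟨⌈x + (B : ℝ) ^ α + 1⌉₊, fun n hn => ?_⟩
  have hnx : (B : ℝ) ^ α + 1 ≤ (n : ℝ) - x := by
    have := Nat.ceil_le.mp hn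
    linarith
  have hB0 : (0 : ℝ) ≤ (B : ℝ) ^ α := Real.rpow_nonneg (by positivity) _
  have hpos : (0 : ℝ) < (n : ℝ) - x := by linarith
  set m : ℕ := ⌊((n : ℝ) - x) ^ α⁻¹⌋₊ with hm
  have hfl : (m : ℝ) ≤ ((n : ℝ) - x) ^ α⁻¹ := Nat.floor_le (Real.rpow_nonneg hpos.le _)
  have hfl2 : ((n : ℝ) - x) ^ α⁻¹ < (m : ℝ) + 1 := Nat.lt_floor_add_one _
  have hid : (((n : ℝ) - x) ^ α⁻¹) ^ α = (n : ℝ) - x := by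
    rw [← Real.rpow_mul hpos.le, inv_mul_cancel₀ hα.ne', Real.rpow_one]
  have h1 : (m : ℝ) ^ α ≤ (n : ℝ) - x := by
    calc (m : ℝ) ^ α ≤ (((n : ℝ) - x) ^ α⁻¹) ^ α :=
          Real.rpow_le_rpow (by positivity) hfl hα.le
      _ = (n : ℝ) - x := hid
  have h2 : (n : ℝ) - x < ((m : ℝ) + 1) ^ α := by
    rw [← hid]
    exact Real.rpow_lt_rpow (Real.rpow_nonneg hpos.le _) hfl2 hα
  have hBid : ((B : ℝ) ^ α) ^ α⁻¹ = (B : ℝ) := by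
    rw [← Real.rpow_mul (by positivity), mul_inv_cancel₀ hα.ne', Real.rpow_one]
  have hKm : (B : ℝ) ≤ ((n : ℝ) - x) ^ α⁻¹ := by
    rw [← hBid]
    exact Real.rpow_le_rpow hB0 (by linarith) (by positivity)
  have hBm : B ≤ m := Nat.le_floor hKm
  have hsub : U ⊆ Finset.Icc 1 m := by
    intro u hu
    rw [Finset.mem_Icc]
    exact ⟨hU u hu, le_trans (le_trans (Finset.le_sup (f := id) hu)
      (le_trans (le_max_right K _) hBm)) le_rfl⟩
  exact ⟨m, le_trans (le_max_left _ _) hBm, hsub, h1, h2,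
    shiftedConfig_Iic hα x U hsub h1 h2⟩

lemma toReal_val {α x : ℝ} {U : Finset ℕ} {t : ℝ} {m : ℕ}
    (hval : shiftedConfig α x (↑U) (Iic t) = ((m - U.card : ℕ) : ℝ≥0∞))
    (hcard : U.card ≤ m) :
    (shiftedConfig α x (↑U) (Iic t)).toReal = (m : ℝ) - U.card := by
  rw [hval, ENNReal.toReal_natCast, Nat.cast_sub hcard]

lemma card_le_of_sub {U : Finset ℕ} {m : ℕ} (h : U ⊆ Finset.Icc 1 m) : U.card ≤ m := by
  have := Finset.card_le_card h
  simpa [Nat.card_Icc] using this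

/-- The separating set for `α > 1`. -/
noncomputable def bigSet (α : ℝ) : Set (Measure ℝ) :=
  ⋂ (M : ℕ), ⋃ (N : ℕ), ⋂ (n : ℕ), ⋂ (_ : N ≤ n),
    {μ : Measure ℝ | ((μ (Iic (n : ℝ))).toReal) ^ α ≤ (n : ℝ) - (M : ℝ)}

lemma bigSet_measurable (α : ℝ) (hα : 0 < α) : MeasurableSet (bigSet α) := by
  refine MeasurableSet.iInter fun M => MeasurableSet.iUnion fun N =>
    MeasurableSet.iInter fun n => MeasurableSet.iInter fun _ => ?_
  exact measurableSet_le
    ((Real.continuous_rpow_const hα.le).measurable.comp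
      ((Measure.measurable_coe measurableSet_Iic).ennreal_toReal))
    measurable_const

lemma mem_bigSet {α : ℝ} (hα1 : 1 < α) (x : ℝ) (S : Finset ℕ)
    (hS : S.Nonempty) (hSmem : ∀ u ∈ S, 1 ≤ u) :
    shiftedConfig α x (↑S) ∈ bigSet α := by
  have hα0 : (0 : ℝ) < α := lt_trans one_pos hα1
  have hs : 1 ≤ S.card := Finset.card_pos.mpr hS
  simp only [bigSet, Set.mem_iInter, Set.mem_iUnion, Set.mem_setOf_eq]
  intro M
  set R : ℝ := (((M : ℝ) + |x|) / α) ^ (α - 1)⁻¹ with hR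
  obtain ⟨N, hN⟩ := exists_form hα0 x S hSmem (S.card + 2 + ⌈R⌉₊)
  refine ⟨N, fun n hn => ?_⟩
  obtain ⟨m, hKm, hsub, h1, h2, hval⟩ := hN n hn
  have hcard : S.card ≤ m := card_le_of_sub hsub
  rw [toReal_val hval hcard]
  have hm2 : (2 : ℝ) ≤ (m : ℝ) := by
    have : 2 ≤ m := by omega
    exact_mod_cast this
  have hmR : R + 1 ≤ (m : ℝ) := by
    have h1' : (⌈R⌉₊ : ℝ) + 1 ≤ (m : ℝ) := by
      have : ⌈R⌉₊ + 1 ≤ m := by omega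
      exact_mod_cast this
    have := Nat.le_ceil R
    linarith
  have hsm : ((S.card : ℝ)) ≤ (m : ℝ) - 1 := by
    have : S.card ≤ m - 1 := by omega
    have h' : ((S.card : ℝ)) ≤ ((m - 1 : ℕ) : ℝ) := by exact_mod_cast this
    rwa [Nat.cast_sub (by omega), Nat.cast_one] at h'
  have hRnn : (0 : ℝ) ≤ R := Real.rpow_nonneg (by positivity) _
  have hs1 : (1 : ℝ) ≤ (S.card : ℝ) := by exact_mod_cast hs
  have step1 : ((m : ℝ) - S.card) ^ α ≤ ((m : ℝ) - 1) ^ α := by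
    apply Real.rpow_le_rpow (by linarith) (by linarith) hα0.le
  have step2 : ((m : ℝ) - 1) ^ α + α * ((m : ℝ) - 1) ^ (α - 1) ≤ (m : ℝ) ^ α := by
    have := bern_ge hα1.le (a := (m : ℝ) - 1) (by linarith)
    simpa using this
  have step3 : (M : ℝ) + |x| ≤ α * ((m : ℝ) - 1) ^ (α - 1) := by
    have hRid : R ^ (α - 1) = ((M : ℝ) + |x|) / α := by
      rw [hR, ← Real.rpow_mul (by positivity), inv_mul_cancel₀ (by linarith), Real.rpow_one]
    have hmono : R ^ (α - 1) ≤ ((m : ℝ) - 1) ^ (α - 1) :=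
      Real.rpow_le_rpow hRnn (by linarith) (by linarith)
    rw [hRid] at hmono
    calc (M : ℝ) + |x| = α * (((M : ℝ) + |x|) / α) := by field_simp
      _ ≤ α * ((m : ℝ) - 1) ^ (α - 1) := by
          apply mul_le_mul_of_nonneg_left hmono hα0.le
  have habs : -x ≤ |x| := neg_le_abs x
  linarith

lemma notMem_bigSet {α : ℝ} (hα1 : 1 < α) (x : ℝ) :
    shiftedConfig α x (∅ : Set ℕ) ∉ bigSet α := by
  have hα0 : (0 : ℝ) < α := lt_trans one_pos hα1
  intro hmem
  simp only [bigSet, Set.mem_iInter, Set.mem_iUnion, Set.mem_setOf_eq] at hmem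
  obtain ⟨N, hN⟩ := hmem (⌈|x|⌉₊ + 2)
  set m : ℕ := N + ⌈|x|⌉₊ + 1 with hmdef
  have hm1 : (1 : ℝ) ≤ (m : ℝ) := by
    have : 1 ≤ m := by omega
    exact_mod_cast this
  have hmx : |x| + 1 ≤ (m : ℝ) := by
    have h1' : (⌈|x|⌉₊ : ℝ) + 1 ≤ (m : ℝ) := by
      have : ⌈|x|⌉₊ + 1 ≤ m := by omega
      exact_mod_cast this
    have := Nat.le_ceil |x|
    linarith
  have hmpow : (m : ℝ) ≤ (m : ℝ) ^ α := by
    have := Real.rpow_le_rpow_of_exponent_le hm1 hα1.le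
    rwa [Real.rpow_one] at this
  set y : ℝ := (m : ℝ) ^ α + x with hy
  have habs : -x ≤ |x| ∧ x ≤ |x| := ⟨neg_le_abs x, le_abs_self x⟩
  have hy1 : (1 : ℝ) ≤ y := by
    have : (m : ℝ) - |x| ≤ y := by
      simp only [hy]; linarith [hmpow, habs.1]
    linarith
  set n : ℕ := ⌈y⌉₊ with hn
  have hny : y ≤ (n : ℝ) := Nat.le_ceil y
  have hny2 : (n : ℝ) < y + 1 := by
    exact Nat.ceil_lt_add_one (by linarith)
  have h1 : (m : ℝ) ^ α ≤ (n : ℝ) - x := by simp only [hy] at hny; linarith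
  have h2 : (n : ℝ) - x < ((m : ℝ) + 1) ^ α := by
    have hb := bern_ge hα1.le hm1
    have hone : (1 : ℝ) ≤ α * (m : ℝ) ^ (α - 1) := by
      have h1m : (1 : ℝ) ≤ (m : ℝ) ^ (α - 1) := by
        have := Real.rpow_le_rpow_of_exponent_le hm1 (by linarith : (0:ℝ) ≤ α - 1)
        rwa [Real.rpow_zero] at this
      nlinarith [hα1.le]
    simp only [hy] at hny2
    linarith
  have hvalm : shiftedConfig α x (∅ : Set ℕ) (Iic (n : ℝ)) = ((m : ℕ) : ℝ≥0∞) := by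
    have := shiftedConfig_Iic hα0 x ∅ (t := (n : ℝ)) (m := m)
      (by simp) h1 h2
    simpa using this
  have hNn : N ≤ n := by
    have hr : (N : ℝ) + 1 ≤ (n : ℝ) := by
      have : (N : ℝ) + |x| + 1 ≤ (m : ℝ) := by
        have hc : ((N + ⌈|x|⌉₊ + 1 : ℕ) : ℝ) = (N : ℝ) + (⌈|x|⌉₊ : ℝ) + 1 := by push_cast; ring
        rw [hmdef, hc]
        have := Nat.le_ceil |x|
        linarith
      have hmy : (m : ℝ) - |x| ≤ y := by simp only [hy]; linarith [hmpow, habs.1]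
      linarith
    have : (N : ℝ) < (n : ℝ) := by linarith
    exact_mod_cast le_of_lt this
  have hfin := hN n hNn
  rw [hvalm, ENNReal.toReal_natCast] at hfin
  have hM : |x| + 2 ≤ ((⌈|x|⌉₊ + 2 : ℕ) : ℝ) := by
    push_cast
    have := Nat.le_ceil |x|
    linarith
  have : (n : ℝ) - ((⌈|x|⌉₊ + 2 : ℕ) : ℝ) < (m : ℝ) ^ α := by
    simp only [hy] at hny2
    have := habs.2
    linarith
  linarith

/-- The separating set for `α < 1`. -/
noncomputable def smallSet (α : ℝ) : Set (Measure ℝ) :=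
  ⋃ (N : ℕ), ⋂ (n : ℕ), ⋂ (_ : N ≤ n), ⋂ (k : ℕ), ⋃ (M : ℕ), ⋂ (m : ℕ), ⋂ (_ : M ≤ m),
    {μ : Measure ℝ | (m : ℝ) - ((μ (Iic (m : ℝ))).toReal) ^ α
      ≤ (n : ℝ) - (((μ (Iic (n : ℝ))).toReal) + 1) ^ α + 1 / ((k : ℝ) + 1)}

lemma smallSet_measurable (α : ℝ) (hα : 0 < α) : MeasurableSet (smallSet α) := by
  refine MeasurableSet.iUnion fun N => MeasurableSet.iInter fun n =>
    MeasurableSet.iInter fun _ => MeasurableSet.iInter fun k =>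
    MeasurableSet.iUnion fun M => MeasurableSet.iInter fun m =>
    MeasurableSet.iInter fun _ => ?_
  apply measurableSet_le
  · exact measurable_const.sub
      ((Real.continuous_rpow_const hα.le).measurable.comp
        ((Measure.measurable_coe measurableSet_Iic).ennreal_toReal))
  · exact (measurable_const.sub
      ((Real.continuous_rpow_const hα.le).measurable.comp
        (((Measure.measurable_coe measurableSet_Iic).ennreal_toReal).add
          measurable_const))).add measurable_const

lemma mem_smallSet {α : ℝ} (hα0 : 0 < α) (hα1 : α < 1) (x : ℝ) (S : Finset ℕ)
    (hS : S.Nonempty) (hSmem : ∀ u ∈ S, 1 ≤ u) :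
    shiftedConfig α x (↑S) ∈ smallSet α := by
  have hs : 1 ≤ S.card := Finset.card_pos.mpr hS
  have hs1 : (1 : ℝ) ≤ (S.card : ℝ) := by exact_mod_cast hs
  simp only [smallSet, Set.mem_iUnion, Set.mem_iInter, Set.mem_setOf_eq]
  obtain ⟨N₀, hN₀⟩ := exists_form hα0 x S hSmem (S.card + 1)
  refine ⟨N₀, fun n hn k => ?_⟩
  obtain ⟨mn, hKmn, hsubn, h1n, h2n, hvaln⟩ := hN₀ n hn
  have hcardn : S.card ≤ mn := card_le_of_sub hsubn
  rw [toReal_val hvaln hcardn]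
  have hmn1 : (S.card : ℝ) + 1 ≤ (mn : ℝ) := by exact_mod_cast hKmn
  have hcn : x ≤ (n : ℝ) - ((mn : ℝ) - S.card + 1) ^ α := by
    have hb : ((mn : ℝ) - S.card + 1) ^ α ≤ (mn : ℝ) ^ α :=
      Real.rpow_le_rpow (by linarith) (by linarith) hα0.le
    linarith
  set c : ℝ := α * ((S.card : ℝ) + 1) with hc
  have hcpos : (0 : ℝ) < c := by positivity
  set Ak : ℝ := (c * ((k : ℝ) + 1)) ^ (1 - α)⁻¹ with hAk
  have hAknn : (0 : ℝ) ≤ Ak := Real.rpow_nonneg (by positivity) _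
  obtain ⟨M, hM⟩ := exists_form hα0 x S hSmem (S.card + 1 + ⌈Ak⌉₊)
  refine ⟨M, fun m' hm' => ?_⟩
  obtain ⟨m, hKm, hsub, h1, h2, hval⟩ := hM m' hm'
  have hcard : S.card ≤ m := card_le_of_sub hsub
  rw [toReal_val hval hcard]
  set a : ℝ := (m : ℝ) - S.card with ha
  have haA : Ak + 1 ≤ a := by
    have h1' : ((S.card + 1 + ⌈Ak⌉₊ : ℕ) : ℝ) ≤ (m : ℝ) := by exact_mod_cast hKm
    have h2' := Nat.le_ceil Ak
    push_cast at h1'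
    simp only [ha]
    linarith
  have ha1 : (1 : ℝ) ≤ a := by linarith
  have hsplit : ((m : ℝ) + 1) = a + ((S.card : ℝ) + 1) := by simp only [ha]; ring
  have hbern : ((m : ℝ) + 1) ^ α ≤ a ^ α + α * ((S.card : ℝ) + 1) * a ^ (α - 1) := by
    rw [hsplit]
    exact bern_le hα0 hα1.le ha1 (by positivity)
  have hbound : c * a ^ (α - 1) ≤ 1 / ((k : ℝ) + 1) := by
    have hAid : Ak ^ (1 - α) = c * ((k : ℝ) + 1) := by
      rw [hAk, ← Real.rpow_mul (by positivity), inv_mul_cancel₀ (by linarith), Real.rpow_one]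
    have hmono : c * ((k : ℝ) + 1) ≤ a ^ (1 - α) := by
      rw [← hAid]
      exact Real.rpow_le_rpow hAknn (by linarith) (by linarith)
    have hapos : (0 : ℝ) < a := by linarith
    have hianeg : a ^ (α - 1) = (a ^ (1 - α))⁻¹ := by
      rw [show α - 1 = -(1 - α) by ring, Real.rpow_neg hapos.le]
    rw [hianeg]
    have hpos1 : (0 : ℝ) < c * ((k : ℝ) + 1) := by positivity
    have hinv : (a ^ (1 - α))⁻¹ ≤ (c * ((k : ℝ) + 1))⁻¹ := by
      apply inv_anti₀ hpos1 hmono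
    calc c * (a ^ (1 - α))⁻¹ ≤ c * (c * ((k : ℝ) + 1))⁻¹ :=
          mul_le_mul_of_nonneg_left hinv hcpos.le
      _ = 1 / ((k : ℝ) + 1) := by field_simp
  have hfinal : (m' : ℝ) - a ^ α ≤ x + 1 / ((k : ℝ) + 1) := by
    have hlt : (m' : ℝ) - x < ((m : ℝ) + 1) ^ α := h2
    have hca : c * a ^ (α - 1) = α * ((S.card : ℝ) + 1) * a ^ (α - 1) := by rw [hc]
    linarith [hbern, hca ▸ hbound]
  simp only [ha] at hfinal ⊢
  linarith

lemma notMem_smallSet {α : ℝ} (hα0 : 0 < α) (x : ℝ) :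
    shiftedConfig α x (∅ : Set ℕ) ∉ smallSet α := by
  intro hmem
  simp only [smallSet, Set.mem_iUnion, Set.mem_iInter, Set.mem_setOf_eq] at hmem
  obtain ⟨N₀, hN₀⟩ := exists_form hα0 x ∅ (by simp) 1
  obtain ⟨N, hN⟩ := hmem
  set n : ℕ := max N N₀ with hn
  obtain ⟨mn, hKmn, _, h1n, h2n, hvaln⟩ := hN₀ n (le_max_right _ _)
  have hvaln' : shiftedConfig α x (∅ : Set ℕ) (Iic (n : ℝ)) = ((mn : ℕ) : ℝ≥0∞) := by
    have := hvaln; simpa using this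
  have hδ : 0 < x - ((n : ℝ) - ((mn : ℝ) + 1) ^ α) := by linarith
  obtain ⟨k, hk⟩ := exists_nat_one_div_lt hδ
  obtain ⟨M, hM⟩ := hN n (le_max_left _ _) k
  set m' : ℕ := max M N₀ with hm'
  have hineq := hM m' (le_max_left _ _)
  obtain ⟨mm, hKmm, _, h1m, h2m, hvalm⟩ := hN₀ m' (le_max_right _ _)
  have hvalm' : shiftedConfig α x (∅ : Set ℕ) (Iic (m' : ℝ)) = ((mm : ℕ) : ℝ≥0∞) := by
    have := hvalm; simpa using this
  rw [hvaln', hvalm', ENNReal.toReal_natCast, ENNReal.toReal_natCast] at hineq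
  have hlow : x ≤ (m' : ℝ) - (mm : ℝ) ^ α := by linarith
  have hklt : (1 : ℝ) / ((k : ℝ) + 1) < x - ((n : ℝ) - ((mn : ℝ) + 1) ^ α) := hk
  linarith

/-- For `Π = {z^α + g}_{z ≥ 1}` with a single random shift `g` whose law is equivalent to
its integer translates: (1) if `α = 1` the laws of `Π_{{1,…,m}}` and `Π_{{1,…,n}}` are
mutually absolutely continuous for all `m, n ≥ 1`, and in particular `Π` is not deletion
singular; (2) if `α ≠ 1` then `Π` is deletion singular: for every finite nonempty
`S ⊆ {1, 2, …}`, the laws of `Π` and `Π_S` are mutually singular. -/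
theorem shifted_lattice_dichotomy
    (α : ℝ) (hα : 0 < α)
    {Ω : Type*} [MeasurableSpace Ω] (P : Measure Ω) [IsProbabilityMeasure P]
    (g : Ω → ℝ) (hmeas : Measurable g)
    (hshift : ∀ k : ℤ, P.map g ≪ P.map (fun ω => g ω + (k : ℝ)) ∧
      P.map (fun ω => g ω + (k : ℝ)) ≪ P.map g) :
    (α = 1 →
      (∀ m n : ℕ, 1 ≤ m → 1 ≤ n →
        P.map (fun ω => shiftedConfig α (g ω) (Set.Icc 1 m)) ≪
          P.map (fun ω => shiftedConfig α (g ω) (Set.Icc 1 n)) ∧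
        P.map (fun ω => shiftedConfig α (g ω) (Set.Icc 1 n)) ≪
          P.map (fun ω => shiftedConfig α (g ω) (Set.Icc 1 m))) ∧
      ∃ S : Finset ℕ, S.Nonempty ∧ (∀ s ∈ S, 1 ≤ s) ∧
        ¬ (P.map (fun ω => shiftedConfig α (g ω) (∅ : Set ℕ)) ⟂ₘ
            P.map (fun ω => shiftedConfig α (g ω) (↑S : Set ℕ)))) ∧
    (α ≠ 1 → ∀ S : Finset ℕ, S.Nonempty → (∀ s ∈ S, 1 ≤ s) →
      P.map (fun ω => shiftedConfig α (g ω) (∅ : Set ℕ)) ⟂ₘ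
        P.map (fun ω => shiftedConfig α (g ω) (↑S : Set ℕ))) := by
  constructor
  · -- α = 1
    rintro rfl
    set F : ℝ → Measure ℝ := fun x => shiftedConfig 1 x (∅ : Set ℕ) with hFdef
    have hF : Measurable F := measurable_shiftedConfig 1 ∅
    have key : ∀ m : ℕ, P.map (fun ω => shiftedConfig 1 (g ω) (Set.Icc 1 m))
        = (P.map (fun ω => g ω + ((m : ℤ) : ℝ))).map F := by
      intro m
      have hfe : (fun ω => shiftedConfig 1 (g ω) (Set.Icc 1 m))
          = F ∘ (fun ω => g ω + ((m : ℤ) : ℝ)) := by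
        funext ω
        simp only [Function.comp, hFdef, Int.cast_natCast]
        exact shiftedConfig_shift (g ω) m
      rw [hfe, ← Measure.map_map hF (hmeas.add_const _)]
    have hAC : ∀ m n : ℕ, P.map (fun ω => shiftedConfig 1 (g ω) (Set.Icc 1 m)) ≪
        P.map (fun ω => shiftedConfig 1 (g ω) (Set.Icc 1 n)) := by
      intro m n
      rw [key m, key n]
      exact ((hshift m).2.trans (hshift n).1).map hF
    refine ⟨fun m n _ _ => ⟨hAC m n, hAC n m⟩, {1}, ⟨1, by simp⟩, by simp, ?_⟩
    intro hsing
    have hempty : (∅ : Set ℕ) = Set.Icc 1 0 := by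
      rw [Set.Icc_eq_empty (by norm_num)]
    have hS : (↑({1} : Finset ℕ) : Set ℕ) = Set.Icc 1 1 := by
      simp [Set.Icc_self]
    rw [hempty, hS] at hsing
    obtain ⟨t, htm, h1, h2⟩ := hsing
    have h3 := (hAC 0 1) h2
    have hprob : IsProbabilityMeasure (P.map (fun ω => shiftedConfig 1 (g ω) (Set.Icc 1 0))) :=
      Measure.isProbabilityMeasure_map ((measurable_shiftedConfig 1 _).comp hmeas).aemeasurable
    have huniv : (P.map (fun ω => shiftedConfig 1 (g ω) (Set.Icc 1 0))) univ = 1 := measure_univ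
    have hle : (P.map (fun ω => shiftedConfig 1 (g ω) (Set.Icc 1 0))) univ
        ≤ (P.map (fun ω => shiftedConfig 1 (g ω) (Set.Icc 1 0))) t
          + (P.map (fun ω => shiftedConfig 1 (g ω) (Set.Icc 1 0))) tᶜ := by
      rw [← Set.union_compl_self t]
      exact measure_union_le t tᶜ
    rw [huniv, h1, h3] at hle
    simp at hle
  · -- α ≠ 1
    intro hne S hS hSmem
    have hsep : ∃ A : Set (Measure ℝ), MeasurableSet A ∧
        (∀ x : ℝ, shiftedConfig α x (↑S) ∈ A) ∧
        (∀ x : ℝ, shiftedConfig α x (∅ : Set ℕ) ∉ A) := by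
      rcases lt_or_gt_of_ne hne with hlt | hgt
      · exact ⟨smallSet α, smallSet_measurable α hα,
          fun x => mem_smallSet hα hlt x S hS hSmem,
          fun x => notMem_smallSet hα x⟩
      · exact ⟨bigSet α, bigSet_measurable α hα,
          fun x => mem_bigSet hgt x S hS hSmem,
          fun x => notMem_bigSet hgt x⟩
    obtain ⟨A, hA, hin, hout⟩ := hsep
    refine ⟨A, hA, ?_, ?_⟩
    · have hm1 : Measurable fun ω => shiftedConfig α (g ω) (∅ : Set ℕ) :=
        (measurable_shiftedConfig α ∅).comp hmeas
      rw [Measure.map_apply hm1 hA]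
      have hpre : (fun ω => shiftedConfig α (g ω) (∅ : Set ℕ)) ⁻¹' A = ∅ := by
        ext ω
        simp only [Set.mem_preimage, Set.mem_empty_iff_false, iff_false]
        exact hout (g ω)
      rw [hpre, measure_empty]
    · have hm2 : Measurable fun ω => shiftedConfig α (g ω) (↑S : Set ℕ) :=
        (measurable_shiftedConfig α (↑S)).comp hmeas
      rw [Measure.map_apply hm2 hA.compl]
      have hpre : (fun ω => shiftedConfig α (g ω) (↑S : Set ℕ)) ⁻¹' Aᶜ = ∅ := by
        ext ω
        simp only [Set.mem_preimage, Set.mem_compl_iff, Set.mem_empty_iff_false, iff_false,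
          not_not]
        exact hin (g ω)
      rw [hpre, measure_empty]
end

section
/- Let α > 0 with α ≠ 1, and let S ⊆ {1, 2, 3, …} be a finite nonempty set. Let x_1 < x_2 < x_3 < ⋯ be the increasing enumeration of the set {k^α : k ∈ {1, 2, 3, …} ∖ S}. Then there exists an index n ≥ 1 such that x_{n+1} − x_n ≠ (n+1)^α − n^α. -/
/-- For `α > 0`, `α ≠ 1`, and a finite nonempty `S ⊆ {1, 2, …}`, the increasing enumeration
`x_1 < x_2 < ⋯` of `{k^α : k ∈ {1, 2, …} ∖ S}` has, at some index `n ≥ 1`, a gap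
`x_{n+1} − x_n` different from the undeleted gap `(n+1)^α − n^α`. -/
theorem gap_sequence_changes_after_deletion
    (α : ℝ) (hα : 0 < α) (hα1 : α ≠ 1)
    (S : Finset ℕ) (hS : S.Nonempty) (hS1 : ∀ s ∈ S, 1 ≤ s)
    (x : ℕ → ℝ)
    (hmono : ∀ m n : ℕ, 1 ≤ m → m < n → x m < x n)
    (hrange : {y : ℝ | ∃ k : ℕ, 1 ≤ k ∧ k ∉ S ∧ y = (k : ℝ) ^ α} =
      {y : ℝ | ∃ n : ℕ, 1 ≤ n ∧ y = x n}) :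
    ∃ n : ℕ, 1 ≤ n ∧ x (n + 1) - x n ≠ ((n : ℝ) + 1) ^ α - (n : ℝ) ^ α := by
  by_contra hcon
  push_neg at hcon
  set c : ℝ := x 1 - 1 with hc
  -- Step 1: x n = n^α + c for all n ≥ 1
  have hx : ∀ n : ℕ, 1 ≤ n → x n = (n : ℝ) ^ α + c := by
    intro n hn
    induction n with
    | zero => omega
    | succ m ih =>
      rcases Nat.lt_or_ge m 1 with h1 | h1
      · have hm0 : m = 0 := by omega
        subst hm0
        have h1pow : ((1 : ℕ) : ℝ) ^ α = 1 := by
          norm_num [Real.one_rpow]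
        rw [h1pow]
        simp [hc]
      · have hgap := hcon m h1
        have hxm := ih h1
        push_cast
        push_cast at hgap
        linarith
  -- Step 2: choose the enumeration g of the complement
  have hex : ∀ n : ℕ, ∃ k : ℕ, 1 ≤ k ∧ k ∉ S ∧ x (n + 1) = (k : ℝ) ^ α := by
    intro n
    have hmem : x (n + 1) ∈ {y : ℝ | ∃ m : ℕ, 1 ≤ m ∧ y = x m} := ⟨n + 1, by omega, rfl⟩
    rw [← hrange] at hmem
    obtain ⟨k, hk1, hk2, hk3⟩ := hmem
    exact ⟨k, hk1, hk2, hk3⟩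
  choose g hg1 hg2 hg3 using hex
  have key : ∀ m n : ℕ, ((m : ℝ)) ^ α < (n : ℝ) ^ α → m < n := by
    intro m n h
    by_contra hle
    push_neg at hle
    have : (n : ℝ) ^ α ≤ (m : ℝ) ^ α :=
      Real.rpow_le_rpow (by positivity) (by exact_mod_cast hle) hα.le
    linarith
  have hgmono : StrictMono g := by
    intro m n hmn
    apply key
    rw [← hg3 m, ← hg3 n]
    exact hmono (m + 1) (n + 1) (by omega) (by omega)
  have hglb : ∀ n, n + 1 ≤ g n := by
    intro n
    induction n with
    | zero => exact hg1 0
    | succ m ih =>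
      have h := hgmono (Nat.lt_succ_self m)
      simp only [Nat.succ_eq_add_one] at *
      omega
  have hsurj : ∀ k : ℕ, 1 ≤ k → k ∉ S → ∃ n, g n = k := by
    intro k hk1 hk2
    have hmem : ((k : ℝ) ^ α) ∈ {y : ℝ | ∃ k : ℕ, 1 ≤ k ∧ k ∉ S ∧ y = (k : ℝ) ^ α} :=
      ⟨k, hk1, hk2, rfl⟩
    rw [hrange] at hmem
    obtain ⟨n, hn1, hn2⟩ := hmem
    refine ⟨n - 1, ?_⟩
    have hidx : n - 1 + 1 = n := by omega
    have hgn : ((g (n - 1) : ℝ)) ^ α = (k : ℝ) ^ α := by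
      rw [← hg3 (n - 1), hidx, ← hn2]
    rcases Nat.lt_trichotomy (g (n - 1)) k with h | h | h
    · have := Real.rpow_lt_rpow (by positivity) (by exact_mod_cast h : ((g (n-1):ℝ)) < (k:ℝ)) hα
      rw [hgn] at this; exact absurd this (lt_irrefl _)
    · exact h
    · have := Real.rpow_lt_rpow (by positivity) (by exact_mod_cast h : ((k:ℝ)) < (g (n-1):ℝ)) hα
      rw [hgn] at this; exact absurd this (lt_irrefl _)
  -- Step 3: structure of g beyond max S
  set M : ℕ := S.max' hS with hMdef
  have hM : ∀ s ∈ S, s ≤ M := fun s hs => S.le_max' s hs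
  have hstep : ∀ n, M ≤ n → g (n + 1) = g n + 1 := by
    intro n hn
    have hnot : g n + 1 ∉ S := by
      intro hmem
      have h1 := hM _ hmem
      have h2 := hglb n
      omega
    obtain ⟨m, hm⟩ := hsurj (g n + 1) (by have := hglb n; omega) hnot
    have hmn : n < m := hgmono.lt_iff_lt.mp (by omega)
    have h1 : g (n + 1) ≤ g m := hgmono.le_iff_le.mpr (by omega)
    have h2 : g n < g (n + 1) := hgmono (Nat.lt_succ_self n)
    omega
  have hgM : M + 2 ≤ g M := by
    by_contra h
    push_neg at h
    have hgMeq : g M = M + 1 := by have := hglb M; omega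
    have hdown : ∀ j, j ≤ M → g (M - j) = M - j + 1 := by
      intro j
      induction j with
      | zero => intro _; simpa using hgMeq
      | succ i ih =>
        intro hj
        have hi := ih (by omega)
        have h1 : g (M - (i + 1)) < g (M - i) := hgmono (by omega)
        have h2 := hglb (M - (i + 1))
        omega
    obtain ⟨s, hs⟩ := hS
    have hs1 : 1 ≤ s := hS1 s hs
    have hsM : s ≤ M := hM s hs
    have hd := hdown (M - (s - 1)) (by omega)
    have hms : M - (M - (s - 1)) = s - 1 := by omega
    rw [hms] at hd
    have hgs : g (s - 1) = s := by omega
    exact hg2 (s - 1) (by rw [hgs]; exact hs)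
  have hiter : ∀ j, g (M + j) = g M + j := by
    intro j
    induction j with
    | zero => simp
    | succ i ih =>
      have := hstep (M + i) (by omega)
      show g (M + i + 1) = g M + (i + 1)
      omega
  -- Step 4: the constant-gap relation
  have hrel : ∀ n : ℕ, ((g n : ℝ)) ^ α = ((n : ℝ) + 1) ^ α + c := by
    intro n
    have h1 := hx (n + 1) (by omega)
    rw [hg3 n] at h1
    push_cast at h1
    exact h1
  set D : ℕ := g M - (M + 1) with hDdef
  have hD : 1 ≤ D := by omega
  have hga : g M = M + 1 + D := by omega
  have hunif : ∀ N : ℕ, M + 1 ≤ N → ((N : ℝ) + (D : ℝ)) ^ α = (N : ℝ) ^ α + c := by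
    intro N hN
    have h1 := hrel (N - 1)
    have h2 := hiter (N - 1 - M)
    have h3 : M + (N - 1 - M) = N - 1 := by omega
    rw [h3] at h2
    have h4 : g (N - 1) = N + D := by omega
    rw [h4] at h1
    have h5 : ((N - 1 : ℕ) : ℝ) = (N : ℝ) - 1 := by
      push_cast [Nat.cast_sub (by omega : 1 ≤ N)]; ring
    rw [h5] at h1
    have h6 : ((N : ℝ) - 1) + 1 = (N : ℝ) := by ring
    rw [h6] at h1
    push_cast at h1
    exact h1
  have hc0 : 0 < c := by
    have h1 := hrel M
    have hlt : ((M : ℝ) + 1) ^ α < ((g M : ℝ)) ^ α := by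
      apply Real.rpow_lt_rpow (by positivity) ?_ hα
      have : (M : ℕ) + 1 < g M := by omega
      exact_mod_cast this
    linarith
  -- Step 5: contradiction via Bernoulli's inequality
  rcases lt_or_gt_of_ne hα1 with hlt1 | hgt1
  · -- α < 1 : gaps tend to 0, contradicting c > 0
    set T : ℝ := (α * (D : ℝ) / c) ^ ((1 - α)⁻¹) with hT
    set N : ℕ := max (M + 1) (⌈T⌉₊ + 1) with hN
    have hNM : M + 1 ≤ N := le_max_left _ _
    have hTnn : 0 ≤ T := Real.rpow_nonneg (by positivity) _
    have hNT : T < (N : ℝ) := by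
      have h1 : T ≤ (⌈T⌉₊ : ℝ) := Nat.le_ceil T
      have h2 : (⌈T⌉₊ + 1 : ℕ) ≤ N := le_max_right _ _
      have h3 : ((⌈T⌉₊ + 1 : ℕ) : ℝ) ≤ (N : ℝ) := by exact_mod_cast h2
      push_cast at h3
      linarith
    have hNpos : (0 : ℝ) < (N : ℝ) := lt_of_le_of_lt hTnn hNT
    have hpow : α * (D : ℝ) / c < (N : ℝ) ^ (1 - α) := by
      have h1 : T ^ (1 - α) < (N : ℝ) ^ (1 - α) :=
        Real.rpow_lt_rpow hTnn hNT (by linarith)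
      have h2 : T ^ (1 - α) = α * (D : ℝ) / c := by
        rw [hT, Real.rpow_inv_rpow (by positivity) (by linarith : (1 : ℝ) - α ≠ 0)]
      linarith [h2 ▸ h1]
    have heq := hunif N hNM
    -- Bernoulli: (N + D)^α ≤ N^α + α D N^(α-1)
    have hdn : (0 : ℝ) ≤ (D : ℝ) / (N : ℝ) := by positivity
    have hbern : (1 + (D : ℝ) / (N : ℝ)) ^ α ≤ 1 + α * ((D : ℝ) / (N : ℝ)) :=
      rpow_one_add_le_one_add_mul_self (by linarith) hα.le hlt1.le
    have hmul : ((N : ℝ) + (D : ℝ)) ^ α = (N : ℝ) ^ α * (1 + (D : ℝ) / (N : ℝ)) ^ α := by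
      rw [← Real.mul_rpow (by positivity) (by positivity)]
      congr 1
      field_simp
    have hub : ((N : ℝ) + (D : ℝ)) ^ α ≤ (N : ℝ) ^ α + α * (D : ℝ) * ((N : ℝ) ^ α / (N : ℝ)) := by
      rw [hmul]
      have := mul_le_mul_of_nonneg_left hbern (Real.rpow_nonneg hNpos.le α)
      calc (N : ℝ) ^ α * (1 + (D : ℝ) / (N : ℝ)) ^ α
          ≤ (N : ℝ) ^ α * (1 + α * ((D : ℝ) / (N : ℝ))) := this
        _ = (N : ℝ) ^ α + α * (D : ℝ) * ((N : ℝ) ^ α / (N : ℝ)) := by field_simp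
    have hsub : (N : ℝ) ^ α / (N : ℝ) = (N : ℝ) ^ (α - 1) := by
      rw [Real.rpow_sub hNpos, Real.rpow_one]
    have hinv : (N : ℝ) ^ (α - 1) = ((N : ℝ) ^ (1 - α))⁻¹ := by
      rw [← Real.rpow_neg hNpos.le]
      congr 1
      ring
    have hsmall : α * (D : ℝ) * ((N : ℝ) ^ (α - 1)) < c := by
      rw [hinv]
      have hp : (0 : ℝ) < (N : ℝ) ^ (1 - α) := Real.rpow_pos_of_pos hNpos _
      rw [mul_inv_lt_iff₀ hp]
      have : α * (D : ℝ) / c < (N : ℝ) ^ (1 - α) := hpow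
      calc α * (D : ℝ) = (α * (D : ℝ) / c) * c := by field_simp
        _ < (N : ℝ) ^ (1 - α) * c := by
            apply mul_lt_mul_of_pos_right hpow hc0
        _ = c * (N : ℝ) ^ (1 - α) := by ring
    rw [hsub] at hub
    linarith [heq ▸ hub]
  · -- α > 1 : gaps tend to ∞, contradicting c constant
    set T : ℝ := (c / α) ^ ((α - 1)⁻¹) with hT
    set N : ℕ := max (M + 1) (⌈T⌉₊ + 1) with hN
    have hNM : M + 1 ≤ N := le_max_left _ _
    have hTnn : 0 ≤ T := Real.rpow_nonneg (by positivity) _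
    have hNT : T < (N : ℝ) := by
      have h1 : T ≤ (⌈T⌉₊ : ℝ) := Nat.le_ceil T
      have h2 : (⌈T⌉₊ + 1 : ℕ) ≤ N := le_max_right _ _
      have h3 : ((⌈T⌉₊ + 1 : ℕ) : ℝ) ≤ (N : ℝ) := by exact_mod_cast h2
      push_cast at h3
      linarith
    have hNpos : (0 : ℝ) < (N : ℝ) := lt_of_le_of_lt hTnn hNT
    have hpow : c / α < (N : ℝ) ^ (α - 1) := by
      have h1 : T ^ (α - 1) < (N : ℝ) ^ (α - 1) :=
        Real.rpow_lt_rpow hTnn hNT (by linarith)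
      have h2 : T ^ (α - 1) = c / α := by
        rw [hT, Real.rpow_inv_rpow (by positivity) (by linarith : α - 1 ≠ 0)]
      linarith [h2 ▸ h1]
    have heq := hunif N hNM
    have hdn : (0 : ℝ) ≤ (D : ℝ) / (N : ℝ) := by positivity
    have hbern : 1 + α * ((D : ℝ) / (N : ℝ)) ≤ (1 + (D : ℝ) / (N : ℝ)) ^ α :=
      one_add_mul_self_le_rpow_one_add (by linarith) hgt1.le
    have hmul : ((N : ℝ) + (D : ℝ)) ^ α = (N : ℝ) ^ α * (1 + (D : ℝ) / (N : ℝ)) ^ α := by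
      rw [← Real.mul_rpow (by positivity) (by positivity)]
      congr 1
      field_simp
    have hlb : (N : ℝ) ^ α + α * (D : ℝ) * ((N : ℝ) ^ α / (N : ℝ)) ≤ ((N : ℝ) + (D : ℝ)) ^ α := by
      rw [hmul]
      have := mul_le_mul_of_nonneg_left hbern (Real.rpow_nonneg hNpos.le α)
      calc (N : ℝ) ^ α + α * (D : ℝ) * ((N : ℝ) ^ α / (N : ℝ))
          = (N : ℝ) ^ α * (1 + α * ((D : ℝ) / (N : ℝ))) := by field_simp
        _ ≤ (N : ℝ) ^ α * (1 + (D : ℝ) / (N : ℝ)) ^ α := this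
    have hsub : (N : ℝ) ^ α / (N : ℝ) = (N : ℝ) ^ (α - 1) := by
      rw [Real.rpow_sub hNpos, Real.rpow_one]
    rw [hsub] at hlb
    have hD1 : (1 : ℝ) ≤ (D : ℝ) := by exact_mod_cast hD
    have hppos : (0 : ℝ) < (N : ℝ) ^ (α - 1) := Real.rpow_pos_of_pos hNpos _
    have hbig : c < α * (N : ℝ) ^ (α - 1) := by
      have := (div_lt_iff₀ hα).mp hpow
      linarith [mul_comm ((N : ℝ) ^ (α - 1)) α]
    have hDbig : α * (N : ℝ) ^ (α - 1) ≤ α * (D : ℝ) * (N : ℝ) ^ (α - 1) := by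
      nlinarith
    linarith [heq ▸ hlb]
end

section
/- Let G be a countably infinite set and let V : G → ℝ be bounded above and satisfy: (a) the image of V has no accumulation point in ℝ, and (b) every level set {z ∈ G : V(z) = x} is finite; enumerate the negative values of V as 0 > t_0 > t_1 > t_2 > ⋯ (an infinite list). Let g : G → ℝ be any function, let T ⊆ G be finite, let 0 ≤ k < |T|, let B ⊆ G be finite with |B| = k, and let φ : G∖B → G∖T be any bijection. Then limsup_{n→∞} |t_n − t_{n−1}|^{-1} · max{ |V(φ(z)) + g_{φ(z)} − V(z)| : z ∈ G∖B, V(z) ∈ [t_n, 0] } ≥ 1 − limsup_{n→∞} |t_n − t_{n−1}|^{-1} · max{ |g_z| : z ∈ G, V(z) ∈ [t_n, 0] }. -/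
/-!
Only finitely many points lie in any slab `{t_n ≤ V ≤ M}`. Since `|B| < |T|`, counting shows
that `φ` cannot map `{V ≥ t_n} ∖ B` into `{V ≥ t_n} ∖ T`, so some `z` with `t_n ≤ V z` is sent
below `t_n`; for `n` large, `V z ≤ 0` as well. If `V (φ z) = t_m` with `m > n`, then
`V z - V (φ z) ≥ t_{m-1} - t_m`, so at level `m` the mismatch of `z` plus `|g (φ z)|` is at least
the gap. Dividing by the gap gives `1 - a_m ≤ b_m` for infinitely many `m`, where `a_m`, `b_m` are
the two normalized maxima, and this passes to the limsups.
-/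

open Filter Set Function

section Topology

variable {X : Type*} [TopologicalSpace X]

lemma Set.finite_inter_of_forall_not_accPt {s K : Set X} (hs : ∀ x, ¬AccPt x (𝓟 s))
    (hK : IsCompact K) : (s ∩ K).Finite := by
  by_contra h
  obtain ⟨x, -, hx⟩ := Set.Infinite.exists_accPt_of_subset_isCompact h hK inter_subset_right
  exact hs x (hx.mono (principal_mono.2 inter_subset_left))

lemma finite_preimage_of_forall_not_accPt {G : Type*} {V : G → X}
    (hacc : ∀ x, ¬AccPt x (𝓟 (range V))) (hlevel : ∀ x, {z | V z = x}.Finite)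
    {K : Set X} (hK : IsCompact K) : (V ⁻¹' K).Finite := by
  rw [← preimage_range_inter]
  exact (Set.finite_inter_of_forall_not_accPt hacc hK).preimage' fun x _ => hlevel x

end Topology

lemma StrictAnti.tendsto_atBot_of_forall_not_accPt {t : ℕ → ℝ} (ht : StrictAnti t)
    (hacc : ∀ x, ¬AccPt x (𝓟 (range t))) : Tendsto t atTop atBot := by
  refine tendsto_atTop_atBot_of_antitone ht.antitone fun b => ?_
  by_contra! hb
  have hsub : range t ⊆ range t ∩ Icc b (t 0) := by
    rintro _ ⟨n, rfl⟩
    exact ⟨⟨n, rfl⟩, (hb n).le, ht.antitone n.zero_le⟩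
  exact Set.infinite_range_of_injective ht.injective
    ((Set.finite_inter_of_forall_not_accPt hacc isCompact_Icc).subset hsub)

lemma EReal.const_sub_limsup_le_limsup {α : Type*} {f : Filter α} [NeBot f] {u v : α → EReal}
    {c : EReal} (h : ∃ᶠ x in f, c - u x ≤ v x) : c - limsup u f ≤ limsup v f :=
  calc c - limsup u f = liminf (fun _ => c) f + liminf (-u) f := by
        rw [liminf_const, EReal.liminf_neg, sub_eq_add_neg]
    _ ≤ liminf (fun x => c - u x) f := EReal.le_liminf_add
    _ ≤ limsup v f := liminf_le_limsup_of_frequently_le h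

section Mismatch

variable {G : Type*} {B T : Finset G}

lemma exists_mem_apply_notMem_of_card_lt (hBT : B.card < T.card) {A : Finset G} (hTA : T ⊆ A)
    {φ : ((↑B : Set G)ᶜ : Set G) → ((↑T : Set G)ᶜ : Set G)} (hφ : Injective φ) :
    ∃ z : ((↑B : Set G)ᶜ : Set G), (z : G) ∈ A ∧ (φ z : G) ∉ A := by
  classical
  by_contra! hA
  have hcard := Finset.card_le_card_of_injOn φ
    (s := A.subtype (· ∈ ((↑B : Set G)ᶜ : Set G))) (t := A.subtype (· ∈ ((↑T : Set G)ᶜ : Set G)))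
    (fun z hz => Finset.mem_subtype.2 (hA z (Finset.mem_subtype.1 hz))) hφ.injOn
  simp only [Finset.card_subtype, mem_compl_iff, Finset.mem_coe, ← Finset.sdiff_eq_filter]
    at hcard
  have hAB := Finset.le_card_sdiff B A
  have hAT := Finset.card_sdiff_of_subset hTA
  have hTA_card := Finset.card_le_card hTA
  omega

lemma eventually_atBot_exists_jump (hBT : B.card < T.card) {V : G → ℝ}
    (hsup : ∀ c, {z | c ≤ V z}.Finite)
    {φ : ((↑B : Set G)ᶜ : Set G) → ((↑T : Set G)ᶜ : Set G)} (hφ : Injective φ) :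
    ∀ᶠ c in atBot, ∃ z : ((↑B : Set G)ᶜ : Set G), c ≤ V z ∧ V z ≤ 0 ∧ V (φ z) < c := by
  obtain ⟨L₁, hL₁⟩ := (T.finite_toSet.image V).bddBelow
  have hpos : {z : ((↑B : Set G)ᶜ : Set G) | 0 < V z}.Finite :=
    Finite.preimage (f := Subtype.val) Subtype.val_injective.injOn
      ((hsup 0).subset fun z (hz : 0 < V z) => hz.le)
  obtain ⟨L₂, hL₂⟩ := (hpos.image fun z => V (φ z)).bddBelow
  filter_upwards [eventually_le_atBot (min L₁ L₂)] with c hc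
  have hTA : T ⊆ (hsup c).toFinset := fun w hw =>
    (hsup c).mem_toFinset.2 ((hc.trans (min_le_left _ _)).trans (hL₁ (mem_image_of_mem V hw)))
  obtain ⟨z, hz, hφz⟩ := exists_mem_apply_notMem_of_card_lt hBT hTA hφ
  rw [Finite.mem_toFinset] at hz hφz
  refine ⟨z, hz, ?_, not_le.1 hφz⟩
  by_contra! hz0
  exact hφz ((hc.trans (min_le_right _ _)).trans (hL₂ ⟨z, hz0, rfl⟩))

variable {V g : G → ℝ} {t : ℕ → ℝ} {φ : ((↑B : Set G)ᶜ : Set G) → ((↑T : Set G)ᶜ : Set G)}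

lemma one_sub_le_of_jump (ht : StrictAnti t) (hslab : ∀ a, {z | V z ∈ Icc a 0}.Finite)
    {m : ℕ} (hm : 0 < m) {z : ((↑B : Set G)ᶜ : Set G)} (hz : t (m - 1) ≤ V z) (hz0 : V z ≤ 0)
    (hφz : V (φ z) = t m) :
    1 - |t m - t (m - 1)|⁻¹ * sSup ((fun z => |g z|) '' {z | V z ∈ Icc (t m) 0}) ≤
      |t m - t (m - 1)|⁻¹ * sSup ((fun w : ((↑B : Set G)ᶜ : Set G) =>
        |V (φ w).1 + g (φ w).1 - V w.1|) '' {w | V w.1 ∈ Icc (t m) 0}) := by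
  have hgap : 0 < t (m - 1) - t m := sub_pos.2 (ht (Nat.sub_lt hm one_pos))
  have hzm : V z ∈ Icc (t m) 0 := ⟨(ht (Nat.sub_lt hm one_pos)).le.trans hz, hz0⟩
  have hφzm : V (φ z) ∈ Icc (t m) 0 := ⟨hφz.ge, hφz.le.trans (hφz ▸ hzm.1.trans hz0)⟩
  have hg : |g (φ z)| ≤ sSup ((fun z => |g z|) '' {z | V z ∈ Icc (t m) 0}) :=
    le_csSup ((hslab _).image _).bddAbove (mem_image_of_mem _ hφzm)
  have hmis : |V (φ z) + g (φ z) - V z| ≤ sSup ((fun w : ((↑B : Set G)ᶜ : Set G) =>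
      |V (φ w).1 + g (φ w).1 - V w.1|) '' {w | V w.1 ∈ Icc (t m) 0}) :=
    le_csSup (((hslab _).preimage Subtype.val_injective.injOn).image _).bddAbove
      (mem_image_of_mem _ hzm)
  have hcover : t (m - 1) - t m ≤ |g (φ z)| + |V (φ z) + g (φ z) - V z| := by
    linarith [neg_abs_le (V (φ z) + g (φ z) - V z), le_abs_self (g (φ z))]
  rw [abs_sub_comm, abs_of_pos hgap, sub_le_iff_le_add, ← mul_add, le_inv_mul_iff₀ hgap, mul_one]
  linarith

end Mismatch

theorem mismatch_limsup_lower_bound_bounded_above_general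
    {G : Type*}
    (V : G → ℝ) (hbdd : BddAbove (Set.range V))
    (hacc : ∀ x : ℝ, ¬ AccPt x (Filter.principal (Set.range V)))
    (hlevel : ∀ x : ℝ, {z : G | V z = x}.Finite)
    (t : ℕ → ℝ) (ht : StrictAnti t)
    (hrange : Set.range t = {x : ℝ | x ∈ Set.range V ∧ x < 0})
    (g : G → ℝ) (T : Finset G) (k : ℕ) (hk : k < T.card)
    (B : Finset G) (hB : B.card = k)
    (φ : ((↑B : Set G)ᶜ : Set G) ≃ ((↑T : Set G)ᶜ : Set G)) :
    1 - Filter.limsup (fun n : ℕ =>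
        ((|t n - t (n - 1)|⁻¹ *
          sSup ((fun z => |g z|) '' {z : G | V z ∈ Set.Icc (t n) 0}) : ℝ) : EReal))
        Filter.atTop ≤
      Filter.limsup (fun n : ℕ =>
        ((|t n - t (n - 1)|⁻¹ *
          sSup ((fun w : ((↑B : Set G)ᶜ : Set G) => |V (φ w).1 + g (φ w).1 - V w.1|) ''
            {w : ((↑B : Set G)ᶜ : Set G) | V w.1 ∈ Set.Icc (t n) 0}) : ℝ) : EReal))
        Filter.atTop := by
  obtain ⟨M, hM⟩ := hbdd
  have hslab (a : ℝ) : {z | V z ∈ Icc a 0}.Finite :=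
    finite_preimage_of_forall_not_accPt hacc hlevel isCompact_Icc
  have hsup (c : ℝ) : {z | c ≤ V z}.Finite :=
    (finite_preimage_of_forall_not_accPt hacc hlevel (isCompact_Icc (a := c) (b := M))).subset
      fun z hz => ⟨hz, hM (mem_range_self z)⟩
  have ht_tendsto : Tendsto t atTop atBot := ht.tendsto_atBot_of_forall_not_accPt fun x hx =>
    hacc x (hx.mono (principal_mono.2 (hrange.trans_subset fun _ hx => hx.1)))
  have hjump := ht_tendsto.eventually
    (eventually_atBot_exists_jump (hB ▸ hk) hsup φ.injective)
  refine EReal.const_sub_limsup_le_limsup (frequently_atTop.2 fun a => ?_)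
  obtain ⟨n, ⟨z, hzn, hz0, hφz⟩, hn⟩ := (hjump.and (eventually_ge_atTop a)).exists
  obtain ⟨m, hm⟩ : V (φ z) ∈ range t := hrange ▸ ⟨mem_range_self _, hφz.trans_le (hzn.trans hz0)⟩
  have hnm : n < m := ht.lt_iff_gt.1 (hm ▸ hφz)
  refine ⟨m, hn.trans hnm.le, ?_⟩
  rw [← EReal.coe_one, ← EReal.coe_sub, EReal.coe_le_coe_iff]
  exact one_sub_le_of_jump ht hslab (n.zero_le.trans_lt hnm)
    ((ht.antitone (Nat.le_sub_one_of_lt hnm)).trans hzn) hz0 hm.symm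

/-- **Chain of mismatches lower bound** (bounded-above case): if `V` is bounded above, its
image has no accumulation point and has finite level sets, with negative values enumerated
`0 > t_0 > t_1 > ⋯`, then for any finite `T`, any `k < |T|`, any finite `B` with `|B| = k`
and any bijection `φ : G∖B → G∖T`,
`limsup_n |t_n − t_{n−1}|⁻¹ · max{ |V(φ(z)) + g_{φ(z)} − V(z)| : z ∈ G∖B, V(z) ∈ [t_n, 0] }`
is at least `1 − limsup_n |t_n − t_{n−1}|⁻¹ · max{ |g_z| : z ∈ G, V(z) ∈ [t_n, 0] }`
(limsups in the extended reals). -/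
theorem mismatch_limsup_lower_bound_bounded_above
    {G : Type*} [Countable G] [Infinite G]
    (V : G → ℝ) (hbdd : BddAbove (Set.range V))
    (hacc : ∀ x : ℝ, ¬ AccPt x (Filter.principal (Set.range V)))
    (hlevel : ∀ x : ℝ, {z : G | V z = x}.Finite)
    (t : ℕ → ℝ) (ht : StrictAnti t) (ht0 : t 0 < 0)
    (hrange : Set.range t = {x : ℝ | x ∈ Set.range V ∧ x < 0})
    (g : G → ℝ) (T : Finset G) (k : ℕ) (hk : k < T.card)
    (B : Finset G) (hB : B.card = k)
    (φ : ((↑B : Set G)ᶜ : Set G) ≃ ((↑T : Set G)ᶜ : Set G)) :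
    1 - Filter.limsup (fun n : ℕ =>
        ((|t n - t (n - 1)|⁻¹ *
          sSup ((fun z => |g z|) '' {z : G | V z ∈ Set.Icc (t n) 0}) : ℝ) : EReal))
        Filter.atTop ≤
      Filter.limsup (fun n : ℕ =>
        ((|t n - t (n - 1)|⁻¹ *
          sSup ((fun w : ((↑B : Set G)ᶜ : Set G) => |V (φ w).1 + g (φ w).1 - V w.1|) ''
            {w : ((↑B : Set G)ᶜ : Set G) | V w.1 ∈ Set.Icc (t n) 0}) : ℝ) : EReal))
        Filter.atTop :=
  mismatch_limsup_lower_bound_bounded_above_general V hbdd hacc hlevel t ht hrange g T k hk B hB φ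
end
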